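/- arXiv:1207.7153 — 12 statements merged into one kernel-verified Lean document; each statement's English description precedes it below -/
import Mathlib

section
/- For every i ≥ 0, the monomial x^i lies in the K-span of the elements H_0 y^i, H_1 y^{i-1}, ..., H_{i-1} y, H_i, where for i = an + e with 0 ≤ e < n we set H_i = x^e F^a. -/
/-!
Let `V_i` be the span of `H_k y^(i-k)`, `k ≤ i`; multiplying by `y` maps `V_j` into `V_(j+1)`,
and multiplying by `F` maps `V_j` into `V_(j+n)` because `H_(k+n) = H_k F`. Induct on `i`: for
`i < n`, `x^i = H_i`. For `i ≥ n`, write `x^i = x^(i-n) F - x^(i-n) (F - x^n)`. The first term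
lies in `F V_(i-n) ⊆ V_i`. Since `F` is monic in `x`, `F - x^n` is a combination of `x^(n-b) y^b` with
`b ≥ 1`, so the second term is a combination of `y^b x^(i-b) ∈ y^b V_(i-b) ⊆ V_i`.
-/

open MvPolynomial

namespace MvPolynomial

variable {R : Type*} [CommSemiring R]

lemma monomial_one_eq_X_zero_pow_mul_X_one_pow (v : Fin 2 →₀ ℕ) :
    (monomial v 1 : MvPolynomial (Fin 2) R) = X 0 ^ v 0 * X 1 ^ v 1 := by
  rw [monomial_eq, C_1, one_mul, Finsupp.prod_fintype _ _ (fun _ => pow_zero _),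
    Fin.prod_univ_two]

lemma IsHomogeneous.mem_span_X_zero_pow_mul_X_one_pow {n : ℕ} {G : MvPolynomial (Fin 2) R}
    (hG : G.IsHomogeneous n) (hx : coeff (Finsupp.single 0 n) G = 0) :
    G ∈ Submodule.span R {p | ∃ b, 0 < b ∧ b ≤ n ∧ p = X 0 ^ (n - b) * X 1 ^ b} := by
  rw [G.as_sum]
  refine Submodule.sum_mem _ fun v hv => ?_
  have hdeg : v 0 + v 1 = n := by
    rw [degree_eq_sum_deg_support hG hv, ← Finsupp.degree_apply, Finsupp.degree_eq_sum,
      Fin.sum_univ_two]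
  have hv1 : 0 < v 1 := by
    refine Nat.pos_of_ne_zero fun hv1 => mem_support_iff.mp hv ?_
    convert hx
    ext a
    fin_cases a <;> simp [hv1, ← hdeg]
  rw [← mul_one (coeff v G), ← smul_eq_mul, ← smul_monomial,
    monomial_one_eq_X_zero_pow_mul_X_one_pow]
  exact Submodule.smul_mem _ _
    (Submodule.subset_span ⟨v 1, hv1, by omega, by rw [← hdeg, Nat.add_sub_cancel]⟩)

end MvPolynomial

namespace MonicBinaryForm

variable {R : Type*} [CommSemiring R] (n : ℕ) (F : MvPolynomial (Fin 2) R)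

/-- The paper's `H_k = x^e F^a` for `k = a n + e`, `0 ≤ e < n`. -/
noncomputable def H (k : ℕ) : MvPolynomial (Fin 2) R := X 0 ^ (k % n) * F ^ (k / n)

noncomputable def spanH (i : ℕ) : Submodule R (MvPolynomial (Fin 2) R) :=
  Submodule.span R {p | ∃ k ≤ i, p = H n F k * X 1 ^ (i - k)}

variable {n F}

lemma H_add_self (hn : 0 < n) (k : ℕ) : H n F (k + n) = H n F k * F := by
  rw [H, H, Nat.add_mod_right, Nat.add_div_right _ hn, pow_succ, mul_assoc]

lemma H_of_lt {k : ℕ} (hk : k < n) : H n F k = X 0 ^ k := by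
  rw [H, Nat.mod_eq_of_lt hk, Nat.div_eq_of_lt hk, pow_zero, mul_one]

lemma mul_mem_spanH {i j : ℕ} {q p : MvPolynomial (Fin 2) R}
    (hq : ∀ k ≤ j, H n F k * X 1 ^ (j - k) * q ∈ spanH n F i) (hp : p ∈ spanH n F j) :
    p * q ∈ spanH n F i := by
  have : spanH n F j ≤ (spanH n F i).comap (LinearMap.mulRight R q) :=
    Submodule.span_le.mpr (by rintro _ ⟨k, hk, rfl⟩; simpa using hq k hk)
  simpa using this hp

lemma mul_X_one_pow_mem_spanH {j : ℕ} {p : MvPolynomial (Fin 2) R} (hp : p ∈ spanH n F j)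
    (m : ℕ) : p * X 1 ^ m ∈ spanH n F (j + m) := by
  refine mul_mem_spanH (fun k hk => Submodule.subset_span ⟨k, by omega, ?_⟩) hp
  rw [mul_assoc, ← pow_add, Nat.sub_add_comm hk]

lemma mul_mem_spanH_add (hn : 0 < n) {j : ℕ} {p : MvPolynomial (Fin 2) R}
    (hp : p ∈ spanH n F j) : p * F ∈ spanH n F (j + n) := by
  refine mul_mem_spanH (fun k hk => Submodule.subset_span ⟨k + n, by omega, ?_⟩) hp
  rw [H_add_self hn, Nat.add_sub_add_right, mul_right_comm]

lemma X_zero_pow_mul_mem_spanH {i : ℕ} (hn : n ≤ i) (hlow : ∀ j < i, X 0 ^ j ∈ spanH n F j)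
    {G : MvPolynomial (Fin 2) R} (hG : G.IsHomogeneous n)
    (hx : coeff (Finsupp.single 0 n) G = 0) : X 0 ^ (i - n) * G ∈ spanH n F i := by
  have : Submodule.span R {p | ∃ b, 0 < b ∧ b ≤ n ∧ p = X 0 ^ (n - b) * X 1 ^ b} ≤
      (spanH n F i).comap (LinearMap.mulLeft R (X 0 ^ (i - n))) := by
    refine Submodule.span_le.mpr ?_
    rintro _ ⟨b, hb, hbn, rfl⟩
    have h := mul_X_one_pow_mem_spanH (hlow (i - b) (by omega)) b
    rw [Nat.sub_add_cancel (by omega)] at h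
    simpa [← mul_assoc, ← pow_add, show i - n + (n - b) = i - b by omega] using h
  exact this (hG.mem_span_X_zero_pow_mul_X_one_pow hx)

end MonicBinaryForm

open MonicBinaryForm

theorem stmt_1 {K : Type*} [Field K] (n : ℕ) (hn : 1 ≤ n)
    (F : MvPolynomial (Fin 2) K) (hF : F.IsHomogeneous n)
    (hFx : MvPolynomial.coeff (Finsupp.single 0 n) F = 1) :
    ∀ i : ℕ,
      (X 0 : MvPolynomial (Fin 2) K) ^ i ∈
        Submodule.span K
          {p : MvPolynomial (Fin 2) K | ∃ k ≤ i,
            p = X 0 ^ (k % n) * F ^ (k / n) * X 1 ^ (i - k)} := by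
  intro i
  change X 0 ^ i ∈ spanH n F i
  induction i using Nat.strong_induction_on with
  | _ i ih =>
  rcases lt_or_ge i n with hin | hin
  · exact Submodule.subset_span
      ⟨i, le_rfl, by rw [H_of_lt hin, Nat.sub_self, pow_zero, mul_one]⟩
  have hG : (F - X 0 ^ n).IsHomogeneous n := hF.sub (isHomogeneous_X_pow 0 n)
  have hGx : coeff (Finsupp.single 0 n) (F - X 0 ^ n) = 0 := by
    rw [coeff_sub, hFx, coeff_X_pow, if_pos rfl, sub_self]
  have hF_term := mul_mem_spanH_add hn (ih (i - n) (by omega))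
  rw [Nat.sub_add_cancel hin] at hF_term
  have hsplit : X 0 ^ i = X 0 ^ (i - n) * F - X 0 ^ (i - n) * (F - X 0 ^ n) := by
    rw [mul_sub, ← pow_add, Nat.sub_add_cancel hin, sub_sub_cancel]
  rw [hsplit]
  exact Submodule.sub_mem _ hF_term (X_zero_pow_mul_mem_spanH hin ih hG hGx)
end

section
/- The set {H_i y^j z^l : i, j, l ≥ 0} is a K-vector space basis of the polynomial ring K[x,y,z], where H_i = x^e F^a for i = an + e, 0 ≤ e < n. -/
/-!
Order the monomials lexicographically with `x > y > z`. Since `F` is homogeneous of degree `n`,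
every monomial of `F` other than `x ^ n` has a smaller power of `x`, so `F` is monic with leading
monomial `x ^ n`. Hence `H_i y ^ j z ^ l` is monic with leading monomial `x ^ i y ^ j z ^ l`, and
these leading monomials run bijectively over all monomials. A family of monic polynomials with
this property is unitriangular with respect to the monomial basis, hence a basis.
-/

open MonomialOrder MvPolynomial

namespace MonomialOrder

variable {σ ι R : Type*} [CommRing R] (m : MonomialOrder σ) {b : ι → MvPolynomial σ R}

theorem linearIndependent_of_monic_of_injective_degree (hb : ∀ i, m.Monic (b i))
    (hinj : Function.Injective (m.degree ∘ b)) : LinearIndependent R b := by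
  rw [linearIndependent_iff]
  intro c hc
  by_contra hne
  obtain ⟨i, hi, hmax⟩ := c.support.exists_max_image (fun j ↦ m.toSyn (m.degree (b j)))
    (Finsupp.support_nonempty_iff.mpr hne)
  have hlt : ∀ j ∈ c.support, j ≠ i → m.degree (b j) ≺[m] m.degree (b i) :=
    fun j hj hji ↦ (hmax j hj).lt_of_ne fun h ↦ hji (hinj (m.toSyn.injective h))
  have hcoeff : coeff (m.degree (b i)) (Finsupp.linearCombination R b c) = c i := by
    rw [Finsupp.linearCombination_apply, Finsupp.sum, coeff_sum,
      Finset.sum_eq_single_of_mem i hi fun j hj hji ↦ by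
        rw [coeff_smul, m.coeff_eq_zero_of_lt (hlt j hj hji), smul_zero],
      coeff_smul, (hb i).coeff_degree, smul_eq_mul, mul_one]
  rw [hc, coeff_zero] at hcoeff
  exact Finsupp.mem_support_iff.mp hi hcoeff.symm

theorem monomial_one_mem_span_of_monic (hb : ∀ i, m.Monic (b i))
    (hsurj : Function.Surjective (m.degree ∘ b)) (d : σ →₀ ℕ) :
    monomial d (1 : R) ∈ Submodule.span R (Set.range b) := by
  classical
  induction d using (InvImage.wf m.toSyn wellFounded_lt).induction with
  | _ d ih =>
  obtain ⟨i, rfl⟩ := hsurj d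
  set d := m.degree (b i) with hd
  have hlower : ∀ e ∈ (b i - monomial d 1).support, e ≺[m] d := by
    intro e he
    have hed : e ≠ d := by
      rintro rfl
      rw [mem_support_iff, coeff_sub, coeff_monomial, if_pos rfl, hd, (hb i).coeff_degree,
        sub_self] at he
      exact he rfl
    have heb : e ∈ (b i).support := by
      simpa [coeff_sub, coeff_monomial, Ne.symm hed] using he
    exact (m.le_degree heb).lt_of_ne (m.toSyn.injective.ne hed)
  have hrest : b i - monomial d 1 ∈ Submodule.span R (Set.range b) := by
    rw [as_sum (b i - monomial d 1)]
    refine Submodule.sum_mem _ fun e he ↦ ?_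
    rw [← mul_one (coeff e _), ← smul_eq_mul, ← smul_monomial]
    exact Submodule.smul_mem _ _ (ih e (hlower e he))
  simpa using Submodule.sub_mem _ (Submodule.subset_span (Set.mem_range_self i)) hrest

theorem span_range_eq_top_of_monic_of_surjective_degree (hb : ∀ i, m.Monic (b i))
    (hsurj : Function.Surjective (m.degree ∘ b)) : Submodule.span R (Set.range b) = ⊤ := by
  rw [eq_top_iff, ← (basisMonomials σ R).span_eq, Submodule.span_le]
  rintro _ ⟨d, rfl⟩
  rw [coe_basisMonomials]
  exact m.monomial_one_mem_span_of_monic hb hsurj d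

variable [Nontrivial R] {m} {f g : MvPolynomial σ R}

theorem Monic.degree_mul (hf : m.Monic f) (hg : m.Monic g) :
    m.degree (f * g) = m.degree f + m.degree g :=
  m.degree_mul_of_mul_leadingCoeff_ne_zero <| by
    rw [hf.leadingCoeff_eq_one, hg.leadingCoeff_eq_one, one_mul]; exact one_ne_zero

theorem Monic.degree_pow (hf : m.Monic f) (k : ℕ) : m.degree (f ^ k) = k • m.degree f :=
  m.degree_pow_of_pow_leadingCoeff_ne_zero <| by
    rw [hf.leadingCoeff_eq_one, one_pow]; exact one_ne_zero

theorem degree_X_pow (s : σ) (k : ℕ) :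
    m.degree (X s ^ k : MvPolynomial σ R) = Finsupp.single s k := by
  rw [monic_X.degree_pow, degree_X, Finsupp.smul_single, smul_eq_mul, mul_one]

end MonomialOrder

theorem Finsupp.eq_single_of_le_of_degree_eq {σ : Type*} {c : σ →₀ ℕ} {s : σ} {n : ℕ}
    (hle : single s n ≤ c) (hdeg : c.degree = n) : c = single s n := by
  have hrest : (c - single s n).degree = 0 := by
    have := congrArg degree (add_tsub_cancel_of_le hle)
    rw [map_add, degree_single, hdeg] at this
    omega
  exact le_antisymm (tsub_eq_zero_iff_le.mp ((degree_eq_zero_iff _).mp hrest)) hle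

theorem bijective_single_add_single_add_single :
    Function.Bijective fun p : ℕ × ℕ × ℕ ↦
      Finsupp.single (0 : Fin 3) p.1 + Finsupp.single 1 p.2.1 + Finsupp.single 2 p.2.2 := by
  refine ⟨fun ⟨i, j, l⟩ ⟨i', j', l'⟩ h ↦ ?_, fun d ↦ ⟨(d 0, d 1, d 2), ?_⟩⟩
  · have h0 := DFunLike.congr_fun h 0
    have h1 := DFunLike.congr_fun h 1
    have h2 := DFunLike.congr_fun h 2
    simp only [Finsupp.add_apply, Finsupp.single_apply] at h0 h1 h2
    simp_all
  · ext k; fin_cases k <;> simp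

section Lex

variable {σ R : Type*} [LinearOrder σ] [WellFoundedGT σ] {s : σ}

theorem MonomialOrder.lex_lt_of_isBot_of_apply_lt (hs : IsBot s) {c d : σ →₀ ℕ}
    (h : c s < d s) : c ≺[lex] d :=
  ⟨s, fun _ hj ↦ absurd hj (hs _).not_gt, h⟩

namespace MvPolynomial.IsHomogeneous

variable [CommRing R] {F : MvPolynomial σ R} {n : ℕ}

theorem lex_degree_eq_single (hs : IsBot s) (hF : F.IsHomogeneous n)
    (hcoeff : coeff (Finsupp.single s n) F ≠ 0) :
    lex.degree F = Finsupp.single s n := by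
  refine lex.toSyn.injective (le_antisymm ?_ (lex.le_degree (mem_support_iff.mpr hcoeff)))
  refine lex.degree_le_iff.mpr fun c hc ↦ ?_
  have hdeg : c.degree = n := by
    rw [Finsupp.degree_eq_weight_one]; exact hF (mem_support_iff.mp hc)
  rcases lt_or_ge (c s) n with hlt | hge
  · exact (lex_lt_of_isBot_of_apply_lt hs (by simpa using hlt)).le
  · rw [Finsupp.eq_single_of_le_of_degree_eq (Finsupp.single_le_iff.mpr hge) hdeg]

variable [Nontrivial R]

theorem lex_monic (hs : IsBot s) (hF : F.IsHomogeneous n)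
    (hcoeff : coeff (Finsupp.single s n) F = 1) : lex.Monic F := by
  rw [Monic, leadingCoeff, hF.lex_degree_eq_single hs (hcoeff ▸ one_ne_zero), hcoeff]

theorem lex_degree_X_pow_mod_mul_pow_div (hs : IsBot s) (hF : F.IsHomogeneous n)
    (hcoeff : coeff (Finsupp.single s n) F = 1) (i : ℕ) :
    lex.degree (X s ^ (i % n) * F ^ (i / n)) = Finsupp.single s i := by
  have hFm := hF.lex_monic hs hcoeff
  rw [monic_X.pow.degree_mul hFm.pow, degree_X_pow, hFm.degree_pow,
    hF.lex_degree_eq_single hs (hcoeff ▸ one_ne_zero), Finsupp.smul_single, smul_eq_mul,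
    ← Finsupp.single_add, mul_comm, Nat.mod_add_div]

end MvPolynomial.IsHomogeneous

end Lex

theorem stmt_2_general {K : Type*} [Field K] (n : ℕ)
    (F : MvPolynomial (Fin 3) K) (hF : F.IsHomogeneous n)
    (hFx : MvPolynomial.coeff (Finsupp.single 0 n) F = 1)
    (B : ℕ × ℕ × ℕ → MvPolynomial (Fin 3) K)
    (hB : ∀ i j l : ℕ,
      B (i, j, l) = X 0 ^ (i % n) * F ^ (i / n) * X 1 ^ j * X 2 ^ l) :
    LinearIndependent K B ∧ Submodule.span K (Set.range B) = ⊤ := by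
  have hH : ∀ i, lex.Monic (X 0 ^ (i % n) * F ^ (i / n)) := fun i ↦
    monic_X.pow.mul (hF.lex_monic isBot_zero hFx).pow
  have hmonic : ∀ p, lex.Monic (B p) := fun ⟨i, j, l⟩ ↦
    hB i j l ▸ ((hH i).mul monic_X.pow).mul monic_X.pow
  have hdeg : lex.degree ∘ B = fun p : ℕ × ℕ × ℕ ↦
      Finsupp.single (0 : Fin 3) p.1 + Finsupp.single 1 p.2.1 + Finsupp.single 2 p.2.2 := by
    funext ⟨i, j, l⟩
    rw [Function.comp_apply, hB, ((hH i).mul monic_X.pow).degree_mul monic_X.pow,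
      (hH i).degree_mul monic_X.pow, hF.lex_degree_X_pow_mod_mul_pow_div isBot_zero hFx,
      degree_X_pow, degree_X_pow]
  exact ⟨lex.linearIndependent_of_monic_of_injective_degree hmonic
      (hdeg ▸ bijective_single_add_single_add_single.1),
    lex.span_range_eq_top_of_monic_of_surjective_degree hmonic
      (hdeg ▸ bijective_single_add_single_add_single.2)⟩

theorem stmt_2 {K : Type*} [Field K] (n : ℕ) (hn : 1 ≤ n)
    (F : MvPolynomial (Fin 3) K) (hF : F.IsHomogeneous n)
    (hFz : ∀ m ∈ F.support, m 2 = 0)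
    (hFx : MvPolynomial.coeff (Finsupp.single 0 n) F = 1)
    (B : ℕ × ℕ × ℕ → MvPolynomial (Fin 3) K)
    (hB : ∀ i j l : ℕ,
      B (i, j, l) = X 0 ^ (i % n) * F ^ (i / n) * X 1 ^ j * X 2 ^ l) :
    LinearIndependent K B ∧ Submodule.span K (Set.range B) = ⊤ :=
  stmt_2_general n F hF hFx B hB
end

section
/- Let I = (x,y)^m ∩ (z,F)^m inside K[x,y,z]. Then H_i y^j z^l ∈ (x,y)^m ∩ (z,F)^m if and only if i, j, l ≥ 0, i + ln ≥ mn, and i + j ≥ m. -/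
/-!
Write `i = e + n * a` with `e < n`, so that the element is `u = x ^ e * F ^ a * y ^ j * z ^ t`.
It visibly lies in `(x, y) ^ (i + j)` and in `(z, F) ^ (a + t)`, and
`m ≤ a + t ↔ m * n ≤ i + t * n`.
Conversely, the substitution `(x, y, z) ↦ (z x, z y, 1)` maps `(x, y)` into `(z)` and `u` to
`z ^ (i + j)` times a polynomial not divisible by `z`, while `(x, y, z) ↦ (x, y, F)` maps `(z, F)`
into `(F)` and `u` to `F ^ (a + t) * x ^ e * y ^ j`; here `F ∤ x ^ e * y ^ j` because `F` vanishes
at some `(c l, 1)` with `c l ^ e ≠ 0`. In both cases membership in the `m`-th power forces the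
exponent to be at least `m`.
-/

open MvPolynomial

theorem Ideal.prod_mem_pow_card {R ι : Type*} [CommSemiring R] {I : Ideal R} {s : Finset ι}
    {f : ι → R} (h : ∀ k ∈ s, f k ∈ I) : ∏ k ∈ s, f k ∈ I ^ s.card :=
  Finset.prod_const I ▸ Ideal.prod_mem_prod h

theorem le_of_pow_dvd_pow_mul {M : Type*} [CommMonoidWithZero M] [IsCancelMulZero M] {p w : M}
    (hp : p ≠ 0) (hw : ¬p ∣ w) {m k : ℕ} (h : p ^ m ∣ p ^ k * w) : m ≤ k := by
  by_contra! hlt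
  rw [← Nat.add_sub_cancel' hlt.le, pow_add, mul_dvd_mul_iff_left (pow_ne_zero k hp)] at h
  exact hw ((dvd_pow_self p (by omega)).trans h)

theorem not_dvd_of_map_eq_zero {R S G : Type*} [CommSemiring R] [CommSemiring S] [FunLike G R S]
    [MulHomClass G R S] (g : G) {p w : R} (hp : g p = 0) (hw : g w ≠ 0) : ¬p ∣ w :=
  fun h => hw (zero_dvd_iff.1 (hp ▸ map_dvd g h))

theorem le_of_mem_pow_of_map_eq {R S F : Type*} [CommSemiring R] [CommRing S] [IsDomain S]
    [FunLike F R S] [RingHomClass F R S] (f : F) {I : Ideal R} {p w : S}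
    (hI : I.map f ≤ Ideal.span {p}) (hp : p ≠ 0) (hw : ¬p ∣ w) {r : R} {m k : ℕ}
    (hr : r ∈ I ^ m) (hfr : f r = p ^ k * w) : m ≤ k := by
  have hpow : f r ∈ Ideal.span {p ^ m} := by
    rw [← Ideal.span_singleton_pow]
    exact Ideal.pow_right_mono hI m (Ideal.map_pow f I m ▸ Ideal.mem_map_of_mem f hr)
  exact le_of_pow_dvd_pow_mul hp hw (hfr ▸ Ideal.mem_span_singleton.1 hpow)

theorem Function.Injective.exists_pow_ne_zero {M₀ : Type*} [MonoidWithZero M₀] [NoZeroDivisors M₀]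
    [Nontrivial M₀] {n e : ℕ} {c : Fin n → M₀} (hc : c.Injective) (he : e < n) :
    ∃ l, c l ^ e ≠ 0 := by
  rcases e with _ | e
  · exact ⟨⟨0, he⟩, by simp⟩
  · by_contra! h
    have h0 := pow_eq_zero_iff e.succ_ne_zero |>.1 (h ⟨0, by omega⟩)
    have h1 := pow_eq_zero_iff e.succ_ne_zero |>.1 (h ⟨1, by omega⟩)
    simpa using hc (h0.trans h1.symm)

section LinearForms

variable {K : Type*} [Field K] {n : ℕ} (c : Fin n → K)

noncomputable def linearFormsProd : MvPolynomial (Fin 3) K :=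
  ∏ k, (X 0 - C (c k) * X 1)

theorem aeval_linearFormsProd (g : Fin 3 → MvPolynomial (Fin 3) K) :
    aeval g (linearFormsProd c) = ∏ k, (g 0 - C (c k) * g 1) := by
  simp [linearFormsProd, map_prod, algebraMap_eq]

theorem aeval_X_X_linearFormsProd (p : MvPolynomial (Fin 3) K) :
    aeval ![X 0, X 1, p] (linearFormsProd c) = linearFormsProd c := by
  rw [aeval_linearFormsProd, linearFormsProd]
  rfl

theorem aeval_linearFormsProd_scale :
    aeval ![X 2 * X 0, X 2 * X 1, 1] (linearFormsProd c) = X 2 ^ n * linearFormsProd c := by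
  rw [aeval_linearFormsProd, linearFormsProd, ← Fin.prod_const n (X 2 : MvPolynomial (Fin 3) K),
    ← Finset.prod_mul_distrib]
  exact Finset.prod_congr rfl fun k _ => by simp only [Matrix.cons_val]; ring

theorem linearFormsProd_ne_zero : linearFormsProd c ≠ 0 := by
  intro h
  simpa [linearFormsProd, map_prod] using congrArg (eval ![1, 0, 0]) h

theorem linearFormsProd_mem_pow : linearFormsProd c ∈ Ideal.span {X 0, X 1} ^ n := by
  unfold linearFormsProd
  simpa using Ideal.prod_mem_pow_card (s := Finset.univ) fun k _ =>
    Ideal.sub_mem _ (Ideal.subset_span (by simp))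
      (Ideal.mul_mem_left _ (C (c k)) (Ideal.subset_span (by simp)))

theorem not_linearFormsProd_dvd (hc : c.Injective) {e : ℕ} (he : e < n) (j : ℕ) :
    ¬linearFormsProd c ∣ X 0 ^ e * X 1 ^ j := by
  obtain ⟨l, hl⟩ := hc.exists_pow_ne_zero he
  refine not_dvd_of_map_eq_zero (eval ![c l, 1, 1]) ?_ (by simpa using hl)
  rw [linearFormsProd, map_prod]
  exact Finset.prod_eq_zero (Finset.mem_univ l) (by simp)

theorem mem_span_X_X_pow_iff (e a j t m : ℕ) :
    X 0 ^ e * linearFormsProd c ^ a * X 1 ^ j * X 2 ^ t ∈ Ideal.span {X 0, X 1} ^ m ↔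
      m ≤ e + n * a + j := by
  have hX0 : (X 0 : MvPolynomial (Fin 3) K) ∈ Ideal.span {X 0, X 1} := Ideal.subset_span (by simp)
  have hX1 : (X 1 : MvPolynomial (Fin 3) K) ∈ Ideal.span {X 0, X 1} := Ideal.subset_span (by simp)
  constructor
  · intro h
    refine le_of_mem_pow_of_map_eq (aeval ![X 2 * X 0, X 2 * X 1, 1]) ?_ (X_ne_zero 2)
      (w := X 0 ^ e * linearFormsProd c ^ a * X 1 ^ j) ?_ h ?_
    · rw [Ideal.map_span, Ideal.span_le]
      rintro _ ⟨g, rfl | rfl, rfl⟩ <;> simp [Ideal.mem_span_singleton]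
    · refine not_dvd_of_map_eq_zero (aeval ![X 0, X 1, (0 : MvPolynomial (Fin 3) K)])
        (by simp) ?_
      simp only [map_mul, map_pow, aeval_X, aeval_X_X_linearFormsProd]
      simp [linearFormsProd_ne_zero, X_ne_zero]
    · simp only [map_mul, map_pow, aeval_X, aeval_linearFormsProd_scale, Matrix.cons_val]
      ring
  · intro h
    refine Ideal.pow_le_pow_right h (Ideal.mul_mem_right _ _ ?_)
    rw [pow_add, pow_add, pow_mul]
    exact Ideal.mul_mem_mul (Ideal.mul_mem_mul (Ideal.pow_mem_pow hX0 e)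
      (Ideal.pow_mem_pow (linearFormsProd_mem_pow c) a)) (Ideal.pow_mem_pow hX1 j)

theorem mem_span_X_linearFormsProd_pow_iff (hc : c.Injective) {e : ℕ} (he : e < n)
    (a j t m : ℕ) :
    X 0 ^ e * linearFormsProd c ^ a * X 1 ^ j * X 2 ^ t ∈ Ideal.span {X 2, linearFormsProd c} ^ m ↔
      m ≤ a + t := by
  have hX2 : X 2 ∈ Ideal.span {X 2, linearFormsProd c} := Ideal.subset_span (by simp)
  have hF : linearFormsProd c ∈ Ideal.span {X 2, linearFormsProd c} := Ideal.subset_span (by simp)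
  constructor
  · intro h
    refine le_of_mem_pow_of_map_eq (aeval ![X 0, X 1, linearFormsProd c]) ?_
      (linearFormsProd_ne_zero c) (not_linearFormsProd_dvd c hc he j) h ?_
    · rw [Ideal.map_span, Ideal.span_le]
      rintro _ ⟨g, rfl | rfl, rfl⟩
      · simp
      · rw [aeval_X_X_linearFormsProd]
        exact Ideal.mem_span_singleton_self _
    · simp only [map_mul, map_pow, aeval_X, aeval_X_X_linearFormsProd, Matrix.cons_val]
      ring
  · intro h
    rw [show X 0 ^ e * linearFormsProd c ^ a * X 1 ^ j * X 2 ^ t =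
      X 0 ^ e * X 1 ^ j * (linearFormsProd c ^ a * X 2 ^ t) by ring]
    refine Ideal.mul_mem_left _ _ (Ideal.pow_le_pow_right h ?_)
    rw [pow_add]
    exact Ideal.mul_mem_mul (Ideal.pow_mem_pow hF a) (Ideal.pow_mem_pow hX2 t)

end LinearForms

theorem stmt_3_general {K : Type*} [Field K] (n : ℕ) (hn : 0 < n)
    (c : Fin n → K) (hc : Function.Injective c)
    (F : MvPolynomial (Fin 3) K)
    (hF : F = ∏ i : Fin n, (X 0 - MvPolynomial.C (c i) * X 1))
    (m : ℕ) :
    ∀ i j t : ℕ,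
      (X 0 ^ (i % n) * F ^ (i / n) * X 1 ^ j * X 2 ^ t ∈
          (Ideal.span {X 0, X 1} : Ideal (MvPolynomial (Fin 3) K)) ^ m ⊓
            (Ideal.span {X 2, F}) ^ m) ↔
        (i + t * n ≥ m * n ∧ i + j ≥ m) := by
  obtain rfl : F = linearFormsProd c := hF
  intro i j t
  rw [Ideal.mem_inf, mem_span_X_X_pow_iff, Nat.mod_add_div,
    mem_span_X_linearFormsProd_pow_iff c hc (Nat.mod_lt i hn), ← Nat.add_mul_div_right i t hn,
    Nat.le_div_iff_mul_le hn]
  exact and_comm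

theorem stmt_3 {K : Type*} [Field K] (n : ℕ) (hn : 0 < n)
    (c : Fin n → K) (hc : Function.Injective c) (hc0 : c ⟨0, hn⟩ = 0)
    (F : MvPolynomial (Fin 3) K)
    (hF : F = ∏ i : Fin n, (X 0 - MvPolynomial.C (c i) * X 1))
    (m : ℕ) (hm : 1 ≤ m) :
    ∀ i j t : ℕ,
      (X 0 ^ (i % n) * F ^ (i / n) * X 1 ^ j * X 2 ^ t ∈
          (Ideal.span {X 0, X 1} : Ideal (MvPolynomial (Fin 3) K)) ^ m ⊓
            (Ideal.span {X 2, F}) ^ m) ↔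
        (i + t * n ≥ m * n ∧ i + j ≥ m) :=
  stmt_3_general n hn c hc F hF m
end

section
/- Let I = (xz, yz, F) ⊆ K[x,y,z] be the ideal of n+1 almost collinear points and r ≥ 1. Then H_i y^j z^l ∈ I^r if and only if i, j, l ≥ 0 and either (1) l < j and i + nl ≥ rn, or (2) j ≤ l < i + j and i + j + (n−1)l ≥ rn, or (3) i + j ≤ l and r ≤ i + j. -/
/-!
Write e = i % n and a = i / n, so that H_i y^j z^l = x^e F^a y^j z^l. The three cases of the
statement are a rephrasing of the three bounds r ≤ a + l, r ≤ i + j and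
n r ≤ i + j + (n - 1) l.

Sufficiency: every linear factor L of F satisfies L z ∈ I, hence F z^k ∈ I^k for k ≤ n and
x^e F^a z^w ∈ I^w for w ≤ e + n a. The bounds allow us to split the element as
(yz)^u F^v (x^e F^a' z^w) times a monomial, with u + v + w = r.

Necessity: each bound is an estimate of the t-adic order after a substitution into a polynomial
ring in t. Under x, y, z ↦ t x, t y, t^k z every generator has order ≥ min(k + 1, n) and the
element has order i + j + k l; take k = 0 and k = n - 1. Under x, y, z ↦ t + l_s, 1, t for
some l_s ≠ 0 the factor L_s becomes t, every generator has order ≥ 1, and the element has order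
a + l.
-/

open MvPolynomial

section Sufficiency

variable {R : Type*} [CommRing R] {I : Ideal R}

theorem prod_mul_pow_mem_pow {ι : Type*} [DecidableEq ι] {s : Finset ι} {f : ι → R} {z : R}
    (hf : ∀ t ∈ s, f t * z ∈ I) {k : ℕ} (hk : k ≤ s.card) :
    (∏ t ∈ s, f t) * z ^ k ∈ I ^ k := by
  induction s using Finset.induction generalizing k with
  | empty => simp_all
  | insert t s ht ih =>
    rw [Finset.card_insert_of_notMem ht] at hk
    obtain _ | k := k
    · simp
    have hfac :
        (∏ u ∈ insert t s, f u) * z ^ (k + 1) = (f t * z) * ((∏ u ∈ s, f u) * z ^ k) := by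
      rw [Finset.prod_insert ht]
      ring
    rw [hfac, pow_succ']
    exact Ideal.mul_mem_mul (hf t (s.mem_insert_self t))
      (ih (fun u hu => hf u (Finset.mem_insert_of_mem hu)) (by omega))

theorem pow_mul_pow_mul_pow_mem_pow {x z F : R} {n : ℕ} (hxz : x * z ∈ I)
    (hFz : ∀ k ≤ n, F * z ^ k ∈ I ^ k) {e a w : ℕ} (hw : w ≤ e + n * a) :
    x ^ e * F ^ a * z ^ w ∈ I ^ w := by
  induction a generalizing w with
  | zero =>
    obtain ⟨u, rfl⟩ : ∃ u, e = w + u := ⟨e - w, by omega⟩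
    have hfac : x ^ (w + u) * F ^ 0 * z ^ w = (x * z) ^ w * x ^ u := by ring
    exact hfac ▸ Ideal.mul_mem_right _ _ (Ideal.pow_mem_pow hxz w)
  | succ a ih =>
    obtain ⟨k, w', rfl, hk, hw'⟩ : ∃ k w', w = k + w' ∧ k ≤ n ∧ w' ≤ e + n * a :=
      ⟨min w n, w - min w n, by omega, min_le_right w n, by rw [Nat.mul_succ] at hw; omega⟩
    have hfac : x ^ e * F ^ (a + 1) * z ^ (k + w') = (F * z ^ k) * (x ^ e * F ^ a * z ^ w') := by
      ring
    rw [hfac, pow_add]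
    exact Ideal.mul_mem_mul (hFz k hk) (ih hw')

end Sufficiency

theorem exists_exponent_split {n e a j l r : ℕ} (hn : 0 < n) (hal : r ≤ a + l)
    (haj : r ≤ e + n * a + j) (hnr : n * r ≤ e + n * a + j + (n - 1) * l) :
    ∃ a' j' l' u v w, a = v + a' ∧ j = u + j' ∧ l = u + w + l' ∧ r = u + v + w ∧
      w ≤ e + n * a' := by
  rcases le_total r (min j l) with hr | hr
  · exact ⟨a, j - r, l - r, r, 0, 0, by omega, by omega, by omega, by omega, by omega⟩
  rcases le_total l j with hlj | hjl
  · exact ⟨a - (r - l), j - l, 0, l, r - l, 0,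
      by omega, by omega, by omega, by omega, by omega⟩
  rcases le_total r l with hrl | hlr
  · exact ⟨a, 0, l - r, j, 0, r - j, by omega, by omega, by omega, by omega, by omega⟩
  obtain ⟨s, rfl⟩ : ∃ s, r = l + s := ⟨r - l, by omega⟩
  obtain ⟨a', rfl⟩ : ∃ a', a = s + a' := ⟨a - s, by omega⟩
  obtain ⟨d, rfl⟩ : ∃ d, l = j + d := ⟨l - j, by omega⟩
  refine ⟨a', 0, 0, j, s, d, rfl, by omega, by omega, by omega, ?_⟩
  obtain ⟨m, rfl⟩ : ∃ m, n = m + 1 := ⟨n - 1, by omega⟩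
  simp only [Nat.add_sub_cancel] at hnr
  nlinarith

theorem le_and_le_and_mul_le_iff {n i j l r : ℕ} (hn : 0 < n) :
    (r ≤ i / n + l ∧ r ≤ i + j ∧ n * r ≤ i + j + (n - 1) * l) ↔
      ((l < j ∧ i + n * l ≥ r * n) ∨
        (j ≤ l ∧ l < i + j ∧ i + j + (n - 1) * l ≥ r * n) ∨
        (i + j ≤ l ∧ r ≤ i + j)) := by
  rw [← Nat.add_mul_div_left _ _ hn, Nat.le_div_iff_mul_le hn]
  obtain ⟨m, rfl⟩ : ∃ m, n = m + 1 := ⟨n - 1, by omega⟩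
  simp only [Nat.add_sub_cancel]
  constructor
  · rintro ⟨hal, haj, hnr⟩
    rcases lt_or_ge l j with hlj | hjl
    · exact Or.inl ⟨hlj, by linarith⟩
    rcases lt_or_ge l (i + j) with hl | hl
    · exact Or.inr (Or.inl ⟨hjl, hl, by linarith⟩)
    · exact Or.inr (Or.inr ⟨hl, haj⟩)
  · rintro (⟨hlj, h⟩ | ⟨hjl, hl, h⟩ | ⟨hl, h⟩)
    · exact ⟨by linarith, by nlinarith, by nlinarith⟩
    · exact ⟨by nlinarith, by nlinarith, by linarith⟩
    · exact ⟨by nlinarith, h, by nlinarith⟩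

theorem Polynomial.le_of_X_pow_dvd_X_pow_mul {R : Type*} [Semiring R] {g : Polynomial R}
    (hg : g.coeff 0 ≠ 0) {k w : ℕ} (h : Polynomial.X ^ k ∣ Polynomial.X ^ w * g) :
    k ≤ w := by
  by_contra! hwk
  have hcoeff := Polynomial.X_pow_dvd_iff.1 h w hwk
  rw [Polynomial.coeff_X_pow_mul', if_pos le_rfl, Nat.sub_self] at hcoeff
  exact hg hcoeff

theorem mul_le_of_mem_span_pow {A S : Type*} [CommRing A] [CommRing S] (φ : A →+* Polynomial S)
    {s : Set A} {m : ℕ} (hs : ∀ p ∈ s, Polynomial.X ^ m ∣ φ p) {r : ℕ} {f : A}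
    (hf : f ∈ Ideal.span s ^ r) {w : ℕ} {g : Polynomial S} (hφf : φ f = Polynomial.X ^ w * g)
    (hg : g.coeff 0 ≠ 0) : m * r ≤ w := by
  have hle : (Ideal.span s).map φ ≤ Ideal.span {Polynomial.X ^ m} := by
    rw [Ideal.map_span, Ideal.span_le]
    rintro _ ⟨p, hp, rfl⟩
    exact Ideal.mem_span_singleton.2 (hs p hp)
  have hmem := Ideal.pow_right_mono hle r (Ideal.map_pow φ _ r ▸ Ideal.mem_map_of_mem φ hf)
  rw [Ideal.span_singleton_pow, ← pow_mul, Ideal.mem_span_singleton, hφf] at hmem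
  exact Polynomial.le_of_X_pow_dvd_X_pow_mul hg hmem

section AlmostCollinear

variable {K : Type*} [Field K] {n : ℕ}

noncomputable def linesProduct (c : Fin n → K) : MvPolynomial (Fin 3) K :=
  ∏ t, (X 0 - C (c t) * X 1)

noncomputable def almostCollinearIdeal (c : Fin n → K) : Ideal (MvPolynomial (Fin 3) K) :=
  Ideal.span {X 0 * X 2, X 1 * X 2, linesProduct c}

theorem linesProduct_ne_zero (c : Fin n → K) : linesProduct c ≠ 0 := by
  refine Finset.prod_ne_zero_iff.2 fun t _ h => ?_
  simpa using congrArg (eval ![1, 0, 0]) h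

theorem aeval_X_sub_C_mul_X {A : Type*} [CommRing A] [Algebra K A] (a b d : A) (κ : K) :
    aeval ![a, b, d] (X 0 - C κ * X 1 : MvPolynomial (Fin 3) K) = a - algebraMap K A κ * b := by
  simp

theorem X_sub_C_mul_X_mul_X_mem_almostCollinearIdeal (c : Fin n → K) (κ : K) :
    (X 0 - C κ * X 1) * X 2 ∈ almostCollinearIdeal c := by
  have hfac : (X 0 - C κ * X 1) * X 2
      = (X 0 * X 2 - C κ * (X 1 * X 2) : MvPolynomial (Fin 3) K) := by
    ring
  rw [hfac]
  exact Ideal.sub_mem _ (Ideal.subset_span (by simp))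
    (Ideal.mul_mem_left _ _ (Ideal.subset_span (by simp)))

theorem mem_almostCollinearIdeal_pow_of_le (c : Fin n → K) (hn : 0 < n) {e a j l r : ℕ}
    (hal : r ≤ a + l) (haj : r ≤ e + n * a + j) (hnr : n * r ≤ e + n * a + j + (n - 1) * l) :
    X 0 ^ e * linesProduct c ^ a * X 1 ^ j * X 2 ^ l ∈ almostCollinearIdeal c ^ r := by
  obtain ⟨a', j', l', u, v, w, rfl, rfl, rfl, rfl, hw⟩ := exists_exponent_split hn hal haj hnr
  have hFz : ∀ k ≤ n, linesProduct c * X 2 ^ k ∈ almostCollinearIdeal c ^ k := fun k hk =>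
    prod_mul_pow_mem_pow (fun t _ => X_sub_C_mul_X_mul_X_mem_almostCollinearIdeal c (c t))
      (by simpa using hk)
  have hfac : X 0 ^ e * linesProduct c ^ (v + a') * X 1 ^ (u + j') * X 2 ^ (u + w + l')
      = (X 1 * X 2) ^ u * linesProduct c ^ v * (X 0 ^ e * linesProduct c ^ a' * X 2 ^ w)
        * (X 1 ^ j' * X 2 ^ l') := by
    ring
  rw [hfac, pow_add, pow_add]
  exact Ideal.mul_mem_right _ _ <| Ideal.mul_mem_mul
    (Ideal.mul_mem_mul (Ideal.pow_mem_pow (Ideal.subset_span (by simp)) u)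
      (Ideal.pow_mem_pow (Ideal.subset_span (by simp)) v))
    (pow_mul_pow_mul_pow_mem_pow (Ideal.subset_span (by simp)) hFz hw)

theorem aeval_X_mul_C_linesProduct (c : Fin n → K)
    (p : Polynomial (MvPolynomial (Fin 3) K)) :
    aeval ![Polynomial.X * Polynomial.C (X 0), Polynomial.X * Polynomial.C (X 1), p]
      (linesProduct c) = Polynomial.X ^ n * Polynomial.C (linesProduct c) := by
  rw [linesProduct, map_prod, map_prod, ← Fin.prod_const, ← Finset.prod_mul_distrib]
  refine Finset.prod_congr rfl fun t _ => ?_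
  rw [aeval_X_sub_C_mul_X, Polynomial.algebraMap_apply, algebraMap_eq, map_sub, map_mul]
  ring

theorem mul_le_of_mem_almostCollinearIdeal_pow {c : Fin n → K} {e a j l r : ℕ} (k : ℕ)
    {m : ℕ} (hmk : m ≤ k + 1) (hmn : m ≤ n)
    (h : X 0 ^ e * linesProduct c ^ a * X 1 ^ j * X 2 ^ l ∈ almostCollinearIdeal c ^ r) :
    m * r ≤ e + n * a + j + k * l := by
  set σ : MvPolynomial (Fin 3) K →ₐ[K] Polynomial (MvPolynomial (Fin 3) K) :=
    aeval ![Polynomial.X * Polynomial.C (X 0), Polynomial.X * Polynomial.C (X 1),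
      Polynomial.X ^ k * Polynomial.C (X 2)]
  have hσ0 : σ (X 0) = Polynomial.X * Polynomial.C (X 0) := aeval_X _ 0
  have hσ1 : σ (X 1) = Polynomial.X * Polynomial.C (X 1) := aeval_X _ 1
  have hσ2 : σ (X 2) = Polynomial.X ^ k * Polynomial.C (X 2) := aeval_X _ 2
  have hσF : σ (linesProduct c) = Polynomial.X ^ n * Polynomial.C (linesProduct c) :=
    aeval_X_mul_C_linesProduct c _
  refine mul_le_of_mem_span_pow σ.toRingHom ?_ h
    (g := Polynomial.C (X 0 ^ e * linesProduct c ^ a * X 1 ^ j * X 2 ^ l)) ?_ ?_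
  · simp only [Set.mem_insert_iff, Set.mem_singleton_iff, AlgHom.toRingHom_eq_coe, RingHom.coe_coe]
    rintro p (rfl | rfl | rfl)
    · rw [map_mul, hσ0, hσ2]
      exact (pow_dvd_pow _ hmk).trans
        (Dvd.intro (Polynomial.C (X 0) * Polynomial.C (X 2)) (by ring))
    · rw [map_mul, hσ1, hσ2]
      exact (pow_dvd_pow _ hmk).trans
        (Dvd.intro (Polynomial.C (X 1) * Polynomial.C (X 2)) (by ring))
    · exact (pow_dvd_pow _ hmn).trans (Dvd.intro _ hσF.symm)
  · simp only [AlgHom.toRingHom_eq_coe, RingHom.coe_coe, map_mul, map_pow, hσ0, hσ1, hσ2, hσF]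
    ring
  · rw [Polynomial.coeff_C_zero]
    simp [linesProduct_ne_zero]

theorem le_add_of_mem_almostCollinearIdeal_pow {c : Fin n → K} (hc : Function.Injective c)
    {s : Fin n} (hs : c s ≠ 0) {e a j l r : ℕ}
    (h : X 0 ^ e * linesProduct c ^ a * X 1 ^ j * X 2 ^ l ∈ almostCollinearIdeal c ^ r) :
    r ≤ a + l := by
  classical
  set ψ : MvPolynomial (Fin 3) K →ₐ[K] Polynomial K :=
    aeval ![Polynomial.X + Polynomial.C (c s), 1, Polynomial.X]
  set Q := ∏ t ∈ Finset.univ.erase s, (Polynomial.X + Polynomial.C (c s - c t))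
  have hψ0 : ψ (X 0) = Polynomial.X + Polynomial.C (c s) := aeval_X _ 0
  have hψ1 : ψ (X 1) = 1 := aeval_X _ 1
  have hψ2 : ψ (X 2) = Polynomial.X := aeval_X _ 2
  have hψF : ψ (linesProduct c) = Polynomial.X * Q := by
    have hfac : ∀ t, ψ (X 0 - C (c t) * X 1) = Polynomial.X + Polynomial.C (c s - c t) := by
      intro t
      rw [aeval_X_sub_C_mul_X, Polynomial.algebraMap_eq, map_sub]
      ring
    rw [linesProduct, map_prod, Finset.prod_congr rfl fun t _ => hfac t,
      ← Finset.mul_prod_erase _ _ (Finset.mem_univ s), sub_self, map_zero, add_zero]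
  have hQ : Q.eval 0 ≠ 0 := by
    rw [Polynomial.eval_prod]
    refine Finset.prod_ne_zero_iff.2 fun t ht => ?_
    simpa [sub_eq_zero] using fun h => (Finset.mem_erase.1 ht).1 (hc h).symm
  suffices 1 * r ≤ a + l by omega
  refine mul_le_of_mem_span_pow ψ.toRingHom ?_ h
    (g := (Polynomial.X + Polynomial.C (c s)) ^ e * Q ^ a) ?_ ?_
  · simp only [Set.mem_insert_iff, Set.mem_singleton_iff, AlgHom.toRingHom_eq_coe, RingHom.coe_coe,
      pow_one]
    rintro p (rfl | rfl | rfl)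
    · rw [map_mul, hψ2]
      exact dvd_mul_left _ _
    · rw [map_mul, hψ2]
      exact dvd_mul_left _ _
    · rw [hψF]
      exact dvd_mul_right _ _
  · simp only [AlgHom.toRingHom_eq_coe, RingHom.coe_coe, map_mul, map_pow, hψ0, hψ1, hψ2, hψF]
    ring
  · simp [Polynomial.coeff_zero_eq_eval_zero, hs, hQ]

theorem mem_almostCollinearIdeal_pow_iff {c : Fin n → K} (hc : Function.Injective c)
    (hn : 2 ≤ n) {e a j l r : ℕ} :
    X 0 ^ e * linesProduct c ^ a * X 1 ^ j * X 2 ^ l ∈ almostCollinearIdeal c ^ r ↔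
      r ≤ a + l ∧ r ≤ e + n * a + j ∧ n * r ≤ e + n * a + j + (n - 1) * l := by
  refine ⟨fun h => ⟨?_, ?_, ?_⟩, fun ⟨hal, haj, hnr⟩ =>
    mem_almostCollinearIdeal_pow_of_le c (by omega) hal haj hnr⟩
  · obtain ⟨s, hs⟩ : ∃ s, c s ≠ 0 := by
      by_contra! h0
      exact absurd (hc ((h0 ⟨0, by omega⟩).trans (h0 ⟨1, by omega⟩).symm)) (by simp)
    exact le_add_of_mem_almostCollinearIdeal_pow hc hs h
  · simpa using mul_le_of_mem_almostCollinearIdeal_pow 0 le_rfl (by omega) h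
  · exact mul_le_of_mem_almostCollinearIdeal_pow (n - 1) (by omega) le_rfl h

end AlmostCollinear

theorem stmt_4 {K : Type*} [Field K] (n : ℕ) (hn : 3 ≤ n)
    (c : Fin n → K) (hc : Function.Injective c)
    (F : MvPolynomial (Fin 3) K)
    (hF : F = ∏ i : Fin n, (X 0 - MvPolynomial.C (c i) * X 1))
    (I : Ideal (MvPolynomial (Fin 3) K))
    (hI : I = Ideal.span {X 0 * X 2, X 1 * X 2, F})
    (r : ℕ) :
    ∀ i j l : ℕ,
      (X 0 ^ (i % n) * F ^ (i / n) * X 1 ^ j * X 2 ^ l ∈ I ^ r) ↔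
        ((l < j ∧ i + n * l ≥ r * n) ∨
          (j ≤ l ∧ l < i + j ∧ i + j + (n - 1) * l ≥ r * n) ∨
          (i + j ≤ l ∧ r ≤ i + j)) := by
  intro i j l
  subst hF hI
  refine (mem_almostCollinearIdeal_pow_iff hc (by omega)).trans ?_
  rw [Nat.mod_add_div]
  exact le_and_le_and_mul_le_iff (by omega)
end

section
/- For the ideal I of n+1 almost collinear points with n ≥ 3, the resurgence ρ(I) = sup{ m/r : I^(m) ⊄ I^r } equals n²/(n² − n + 1). -/
/-!
Write `Q = (x, y)` and `f = F` viewed in `K[x, y]`, and regard `K[x, y, z]` as `K[x, y][z]`.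
An element of `I^(m)` is `∑ g_d z^d` with `g_d ∈ Q^m` and `f^(m-d) ∣ g_d`. Writing
`g_d = f^(m-d) h`, homogeneity of `f` forces `h ∈ Q^(m-(m-d)n)`; if `r n² < m (n² - n + 1)`
this splits `g_d z^d` as `F^(r-d)` times an element of `(xz, yz)^d` (or of `(xz, yz)^r` when
`d ≥ r`), so `I^(m) ⊆ I^r` and `ρ(I) ≤ n² / (n² - n + 1)`.

Conversely `G = z^(tn(n-1)) F^(tn) ∈ I^(tn²)`. For the weights `(1, 1, n - 1)` all three
generators of `I` have weighted degree `n`, while `G` is weighted homogeneous of degree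
`tn(n² - n + 1) < (t(n² - n + 1) + 1) n`, so `G ∉ I^(t(n² - n + 1) + 1)`. These ratios tend to
`n² / (n² - n + 1)`.
-/

open MvPolynomial

namespace MvPolynomial

section WeightedOrder

variable {σ R : Type*} [CommSemiring R] (w : σ → ℕ)

def weightedOrderIdeal (k : ℕ) : Ideal (MvPolynomial σ R) where
  carrier := {p | (k : ℕ∞) ≤ (p : MvPowerSeries σ R).weightedOrder w}
  zero_mem' := by simp
  add_mem' {p q} hp hq := by
    simp only [Set.mem_ofPred_eq, coe_add]
    exact (le_min hp hq).trans (MvPowerSeries.min_weightedOrder_le_add w)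
  smul_mem' c p hp := by
    simp only [Set.mem_ofPred_eq, smul_eq_mul, coe_mul]
    exact hp.trans (le_add_self.trans (MvPowerSeries.le_weightedOrder_mul w))

variable {w}

theorem mem_weightedOrderIdeal {k : ℕ} {p : MvPolynomial σ R} :
    p ∈ weightedOrderIdeal w k ↔ (k : ℕ∞) ≤ (p : MvPowerSeries σ R).weightedOrder w :=
  Iff.rfl

theorem mul_mem_weightedOrderIdeal {a b : ℕ} {p q : MvPolynomial σ R}
    (hp : p ∈ weightedOrderIdeal w a) (hq : q ∈ weightedOrderIdeal w b) :
    p * q ∈ weightedOrderIdeal w (a + b) := by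
  rw [mem_weightedOrderIdeal, coe_mul, Nat.cast_add]
  exact (add_le_add hp hq).trans (MvPowerSeries.le_weightedOrder_mul w)

theorem pow_le_weightedOrderIdeal {J : Ideal (MvPolynomial σ R)} {a : ℕ}
    (hJ : J ≤ weightedOrderIdeal w a) (r : ℕ) : J ^ r ≤ weightedOrderIdeal w (r * a) := by
  induction r with
  | zero => intro p _; simp [mem_weightedOrderIdeal]
  | succ r ih =>
    rw [pow_succ, Ideal.mul_le]
    intro p hp q hq
    simpa [add_mul] using mul_mem_weightedOrderIdeal (ih hp) (hJ hq)

theorem pow_idealOfVars_eq_weightedOrderIdeal (m : ℕ) :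
    idealOfVars σ R ^ m = weightedOrderIdeal 1 m := by
  ext p
  rw [mem_pow_idealOfVars_iff', mem_weightedOrderIdeal]
  constructor
  · intro h
    exact MvPowerSeries.nat_le_weightedOrder 1 fun d hd =>
      h d (by rwa [Finsupp.degree_eq_weight_one])
  · intro h d hd
    rw [Finsupp.degree_eq_weight_one] at hd
    exact MvPowerSeries.coeff_eq_zero_of_lt_weightedOrder 1 ((Nat.cast_lt.mpr hd).trans_le h)

namespace IsWeightedHomogeneous

variable {k : ℕ} {p : MvPolynomial σ R}

theorem mem_weightedOrderIdeal (hp : IsWeightedHomogeneous w p k) :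
    p ∈ weightedOrderIdeal w k :=
  MvPowerSeries.nat_le_weightedOrder w fun _ hd => by_contra fun h => hd.ne (hp h)

theorem weightedOrder_le (hp : IsWeightedHomogeneous w p k) (hp0 : p ≠ 0) :
    (p : MvPowerSeries σ R).weightedOrder w ≤ k := by
  obtain ⟨d, hd⟩ := exists_coeff_ne_zero hp0
  exact hp hd ▸ MvPowerSeries.weightedOrder_le w hd

theorem notMem_pow {J : Ideal (MvPolynomial σ R)} {a r : ℕ} (hp : IsWeightedHomogeneous w p k)
    (hp0 : p ≠ 0) (hJ : J ≤ weightedOrderIdeal w a) (hk : k < r * a) : p ∉ J ^ r := fun hpJ =>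
  (hp.weightedOrder_le hp0).not_gt <|
    (Nat.cast_lt.mpr hk).trans_le (pow_le_weightedOrderIdeal hJ r hpJ)

theorem mem_weightedOrderIdeal_of_mul_mem [NoZeroDivisors R] {m : ℕ} {q : MvPolynomial σ R}
    (hp : IsWeightedHomogeneous w p k) (hp0 : p ≠ 0) (hpq : p * q ∈ weightedOrderIdeal w m) :
    q ∈ weightedOrderIdeal w (m - k) := by
  rw [MvPolynomial.mem_weightedOrderIdeal, coe_mul, MvPowerSeries.weightedOrder_mul] at hpq
  rw [MvPolynomial.mem_weightedOrderIdeal, ENat.natCast_sub, tsub_le_iff_left]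
  exact hpq.trans (add_le_add_left (hp.weightedOrder_le hp0) _)

end IsWeightedHomogeneous

end WeightedOrder

section LinearForms

variable {σ R : Type*} [CommRing R] {n : ℕ} (c : Fin n → R) {i j : σ}

theorem isWeightedHomogeneous_prod_X_sub_C_mul_X {w : σ → ℕ} (hi : w i = 1) (hj : w j = 1) :
    IsWeightedHomogeneous w (∏ k, (X i - C (c k) * X j)) n := by
  have hlin (a : R) : IsWeightedHomogeneous w (X i - C a * X j : MvPolynomial σ R) 1 := by
    refine hi ▸ (isWeightedHomogeneous_X R w i).sub ?_
    simpa [hi, hj] using (isWeightedHomogeneous_C w a).mul (isWeightedHomogeneous_X R w j)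
  simpa using IsWeightedHomogeneous.prod Finset.univ _ (fun _ => 1) fun k _ => hlin (c k)

theorem prod_X_sub_C_mul_X_ne_zero [Nontrivial R] [DecidableEq σ] (hij : i ≠ j) :
    (∏ k, (X i - C (c k) * X j) : MvPolynomial σ R) ≠ 0 := fun h => by
  simpa [Pi.single_apply, hij.symm] using congrArg (eval (Pi.single i 1)) h

theorem prod_X_sub_C_mul_X_mem_pow {Q : Ideal (MvPolynomial σ R)} (hi : X i ∈ Q)
    (hj : X j ∈ Q) :
    ∏ k, (X i - C (c k) * X j) ∈ Q ^ n := by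
  simpa using Ideal.prod_mem_prod (s := Finset.univ) (I := fun _ : Fin n => Q)
    fun k _ => Q.sub_mem hi (Q.mul_mem_left _ hj)

end LinearForms

end MvPolynomial

namespace Polynomial

variable {R : Type*} [CommRing R]

/-- The coefficientwise description of the ideal `(X, J)^m`. -/
def coeffPowIdeal (J : Ideal R) (m : ℕ) : Ideal R[X] where
  carrier := {p | ∀ d, p.coeff d ∈ J ^ (m - d)}
  zero_mem' := by simp
  add_mem' hp hq d := by
    rw [coeff_add]
    exact add_mem (hp d) (hq d)
  smul_mem' c p hp d := by
    rw [smul_eq_mul, coeff_mul]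
    refine sum_mem fun ij hij => Ideal.mul_mem_left _ _ (Ideal.pow_le_pow_right ?_ (hp ij.2))
    have := Finset.HasAntidiagonal.mem_antidiagonal.mp hij
    omega

theorem mul_mem_coeffPowIdeal {J : Ideal R} {a b : ℕ} {p q : R[X]} (hp : p ∈ coeffPowIdeal J a)
    (hq : q ∈ coeffPowIdeal J b) : p * q ∈ coeffPowIdeal J (a + b) := fun d => by
  rw [coeff_mul]
  refine sum_mem fun ij hij => ?_
  have := Finset.HasAntidiagonal.mem_antidiagonal.mp hij
  refine Ideal.pow_le_pow_right ?_ (pow_add J _ _ ▸ Ideal.mul_mem_mul (hp ij.1) (hq ij.2))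
  omega

theorem span_X_C_pow_le_coeffPowIdeal {J : Ideal R} {f : R} (hf : f ∈ J) (m : ℕ) :
    Ideal.span {X, C f} ^ m ≤ coeffPowIdeal J m := by
  induction m with
  | zero => intro p _ d; simp
  | succ m ih =>
    rw [pow_succ, Ideal.mul_le]
    intro p hp q hq
    refine mul_mem_coeffPowIdeal (ih hp) ((Ideal.span_le.mpr ?_) hq)
    rintro _ (rfl | rfl) d
    · rw [coeff_X]
      split_ifs with h
      · simp [← h]
      · simp
    · rw [coeff_C]
      split_ifs with h <;> simp [h, hf]

theorem C_mul_X_pow_mem_pow {Q : Ideal R} {f h : R} {a d r : ℕ} (had : a ≤ d) (har : a ≤ r)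
    (hh : h ∈ Q ^ a) :
    C (f ^ (r - a) * h) * X ^ d ∈ (Q.map C * Ideal.span {X} ⊔ Ideal.span {C f}) ^ r := by
  set T := Q.map C * Ideal.span {X} ⊔ Ideal.span {C f}
  have hf : C f ^ (r - a) ∈ T ^ (r - a) :=
    Ideal.pow_mem_pow (Ideal.mem_sup_right (Ideal.mem_span_singleton_self _)) _
  have hh' : C h * X ^ a ∈ T ^ a := by
    refine Ideal.pow_right_mono le_sup_left a ?_
    rw [mul_pow, Ideal.span_singleton_pow, ← Ideal.map_pow]
    exact Ideal.mul_mem_mul (Ideal.mem_map_of_mem _ hh) (Ideal.mem_span_singleton_self _)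
  have hprod := Ideal.mul_mem_mul hf hh'
  rw [← pow_add, Nat.sub_add_cancel har] at hprod
  have : C (f ^ (r - a) * h) * X ^ d = X ^ (d - a) * (C f ^ (r - a) * (C h * X ^ a)) := by
    rw [C_mul, C_pow, ← Nat.sub_add_cancel had, pow_add, Nat.add_sub_cancel]
    ring
  exact this ▸ Ideal.mul_mem_left _ _ hprod

theorem mem_pow_sub_mul_of_pow_mul_mem {Q : Ideal R} {f : R} {n : ℕ}
    (hf : ∀ j g, f * g ∈ Q ^ j → g ∈ Q ^ (j - n)) (k : ℕ) {j : ℕ} {g : R}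
    (hg : f ^ k * g ∈ Q ^ j) : g ∈ Q ^ (j - k * n) := by
  induction k generalizing j with
  | zero => simpa using hg
  | succ k ih =>
    rw [pow_succ', mul_assoc] at hg
    simpa [Nat.sub_sub, add_mul, add_comm] using ih (hf j _ hg)

/-- With `f ∈ Q^n` and `h ∈ Q^(m-(m-d)n)`, this puts `f^(m-r) h` in `Q^d`. -/
theorem le_sub_mul_add_sub_sub_mul {n m r d : ℕ} (hn : 1 ≤ n) (hd : d < r) (hrm : r < m)
    (hlt : r * n ^ 2 < m * (n ^ 2 - n + 1)) :
    d ≤ (m - r) * n + (m - (m - d) * n) := by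
  have hn2 : n ≤ n ^ 2 := Nat.le_self_pow two_ne_zero n
  have hdm : d ≤ m := (hd.trans hrm).le
  zify [hn2, hrm.le, hdm] at hlt
  rcases le_or_gt ((m - d) * n) m with hc | hc
  · zify [hrm.le, hdm, hc]
    zify [hdm] at hc
    nlinarith [mul_le_mul_of_nonneg_right hc (show (0 : ℤ) ≤ n - 1 by omega)]
  · rw [Nat.sub_eq_zero_of_le hc.le, add_zero]
    zify [hrm.le, hdm] at hc ⊢
    nlinarith

theorem map_C_pow_inf_span_X_C_pow_le {Q : Ideal R} {f : R} {n m r : ℕ} (hn : 1 ≤ n)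
    (hfQ : f ∈ Q ^ n) (hf : ∀ j g, f * g ∈ Q ^ j → g ∈ Q ^ (j - n))
    (hlt : r * n ^ 2 < m * (n ^ 2 - n + 1)) :
    Q.map C ^ m ⊓ Ideal.span {X, C f} ^ m ≤
      (Q.map C * Ideal.span {X} ⊔ Ideal.span {C f}) ^ r := by
  have hq : n ^ 2 - n + 1 ≤ n ^ 2 := by have := Nat.le_self_pow two_ne_zero n; omega
  have hrm : r < m :=
    lt_of_mul_lt_mul_right (hlt.trans_le (Nat.mul_le_mul_left m hq)) (Nat.zero_le _)
  rintro p ⟨hpQ, hpf⟩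
  have hcoeffQ (d : ℕ) : p.coeff d ∈ Q ^ m :=
    Ideal.mem_map_C_iff.mp (Ideal.map_pow C Q m ▸ hpQ) d
  have hcoefff := span_X_C_pow_le_coeffPowIdeal (Ideal.mem_span_singleton_self f) m hpf
  rw [← p.sum_C_mul_X_pow_eq]
  refine sum_mem fun d _ => ?_
  rcases le_or_gt r d with hrd | hdr
  · simpa using C_mul_X_pow_mem_pow (f := f) hrd le_rfl (Ideal.pow_le_pow_right hrm.le (hcoeffQ d))
  · obtain ⟨g, hg⟩ :=
      Ideal.mem_span_singleton.mp (Ideal.span_singleton_pow f (m - d) ▸ hcoefff d)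
    have hgQ : g ∈ Q ^ (m - (m - d) * n) := mem_pow_sub_mul_of_pow_mul_mem hf _ (hg ▸ hcoeffQ d)
    have hfg : f ^ (m - r) * g ∈ Q ^ d := by
      refine Ideal.pow_le_pow_right (le_sub_mul_add_sub_sub_mul hn hdr hrm hlt) ?_
      rw [pow_add]
      refine Ideal.mul_mem_mul ?_ hgQ
      rw [mul_comm, pow_mul]
      exact Ideal.pow_mem_pow hfQ _
    have hsplit : p.coeff d = f ^ (r - d) * (f ^ (m - r) * g) := by
      rw [hg, ← mul_assoc, ← pow_add]
      congr 2
      omega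
    exact hsplit ▸ C_mul_X_pow_mem_pow le_rfl hdr.le hfg

end Polynomial

namespace MvPolynomial

variable (R : Type*) [CommRing R]

/-- `R[x₀, x₁, x₂] ≃ R[x₀, x₁][x₂]`. -/
noncomputable def finThreeEquivPolynomial :
    MvPolynomial (Fin 3) R ≃+* Polynomial (MvPolynomial (Fin 2) R) :=
  ((renameEquiv R (finRotate 3)).trans (finSuccEquiv R 2)).toRingEquiv

variable {R}

@[simp] theorem finThreeEquivPolynomial_X_zero :
    finThreeEquivPolynomial R (X 0) = Polynomial.C (X 0) :=
  show finSuccEquiv R 2 (rename _ (X 0)) = _ by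
    rw [rename_X, show finRotate 3 0 = Fin.succ 0 from rfl, finSuccEquiv_X_succ]

@[simp] theorem finThreeEquivPolynomial_X_one :
    finThreeEquivPolynomial R (X 1) = Polynomial.C (X 1) :=
  show finSuccEquiv R 2 (rename _ (X 1)) = _ by
    rw [rename_X, show finRotate 3 1 = Fin.succ 1 from rfl, finSuccEquiv_X_succ]

@[simp] theorem finThreeEquivPolynomial_X_two :
    finThreeEquivPolynomial R (X 2) = Polynomial.X :=
  show finSuccEquiv R 2 (rename _ (X 2)) = _ by
    rw [rename_X, show finRotate 3 2 = 0 from rfl, finSuccEquiv_X_zero]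

@[simp] theorem finThreeEquivPolynomial_C (a : R) :
    finThreeEquivPolynomial R (C a) = Polynomial.C (C a) :=
  show finSuccEquiv R 2 (rename _ (C a)) = _ by
    rw [rename_C, finSuccEquiv_apply, eval₂Hom_C, RingHom.comp_apply]

theorem idealOfVars_fin_two : idealOfVars (Fin 2) R = Ideal.span {X 0, X 1} := by
  rw [idealOfVars]
  congr 1
  ext p
  simp [Fin.exists_fin_two, eq_comm]

theorem span_X_mul_X_two_eq (F : MvPolynomial (Fin 3) R) :
    Ideal.span {X 0 * X 2, X 1 * X 2, F} =
      Ideal.span {X 0, X 1} * Ideal.span {X 2} ⊔ Ideal.span {F} := by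
  rw [Ideal.span_mul_span', ← Ideal.span_union]
  congr 1
  ext p
  simp only [Set.mem_insert_iff, Set.mem_singleton_iff, Set.mul_singleton, Set.union_singleton,
    Set.mem_image, exists_eq_or_imp, existsAndEq, true_and]
  tauto

end MvPolynomial

open Filter Topology in
theorem csSup_eq_div_of_forall_le_of_mem {S : Set ℝ} {a b : ℝ} (hb : 0 < b)
    (hle : ∀ x ∈ S, x ≤ a / b) (hmem : ∀ t : ℕ, 0 < t → t * a / (t * b + 1) ∈ S) :
    sSup S = a / b := by
  have hlim : Tendsto (fun t : ℕ => t * a / (t * b + 1)) atTop (𝓝 (a / b)) := by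
    have := (tendsto_natCast_div_add_atTop b⁻¹).const_mul (a / b)
    rw [mul_one] at this
    refine this.congr' ((eventually_gt_atTop 0).mono fun t ht => ?_)
    field_simp
  refine csSup_eq_of_forall_le_of_forall_lt_exists_gt ⟨_, hmem 1 one_pos⟩ hle fun w hw => ?_
  obtain ⟨t, hwt, ht⟩ := ((hlim.eventually (lt_mem_nhds hw)).and (eventually_gt_atTop 0)).exists
  exact ⟨_, hmem t ht, hwt⟩

namespace MvPolynomial

variable {R : Type*} [CommRing R] [IsDomain R] {n : ℕ} (c : Fin n → R)

theorem span_pow_inf_span_pow_le_pow (hn : 1 ≤ n) {m r : ℕ}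
    (hlt : r * n ^ 2 < m * (n ^ 2 - n + 1)) :
    (Ideal.span {X 0, X 1} : Ideal (MvPolynomial (Fin 3) R)) ^ m ⊓
        Ideal.span {X 2, ∏ k, (X 0 - C (c k) * X 1)} ^ m ≤
      Ideal.span {X 0 * X 2, X 1 * X 2, ∏ k, (X 0 - C (c k) * X 1)} ^ r := by
  set Φ := finThreeEquivPolynomial R
  set f : MvPolynomial (Fin 2) R := ∏ k, (X 0 - C (c k) * X 1)
  have hf : IsWeightedHomogeneous 1 f n := isWeightedHomogeneous_prod_X_sub_C_mul_X c rfl rfl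
  have hfQ : f ∈ idealOfVars (Fin 2) R ^ n := by
    rw [pow_idealOfVars_eq_weightedOrderIdeal]
    exact hf.mem_weightedOrderIdeal
  have hcancel (j : ℕ) (g : MvPolynomial (Fin 2) R) (hg : f * g ∈ idealOfVars (Fin 2) R ^ j) :
      g ∈ idealOfVars (Fin 2) R ^ (j - n) := by
    rw [pow_idealOfVars_eq_weightedOrderIdeal] at hg ⊢
    exact hf.mem_weightedOrderIdeal_of_mul_mem (prod_X_sub_C_mul_X_ne_zero c (by decide)) hg
  have hΦF : Φ (∏ k, (X 0 - C (c k) * X 1)) = Polynomial.C f := by simp [Φ, f, map_prod]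
  have hQ : (Ideal.span {X 0, X 1}).map Φ = (idealOfVars (Fin 2) R).map Polynomial.C := by
    simp [Φ, idealOfVars_fin_two, Ideal.map_span, Set.image_insert_eq]
  have hZ : (Ideal.span {X 2, ∏ k, (X 0 - C (c k) * X 1)}).map Φ =
      Ideal.span {Polynomial.X, Polynomial.C f} := by
    simp [Φ, Ideal.map_span, Set.image_insert_eq, hΦF]
  have hI : (Ideal.span {X 0 * X 2, X 1 * X 2, ∏ k, (X 0 - C (c k) * X 1)}).map Φ =
      (idealOfVars (Fin 2) R).map Polynomial.C * Ideal.span {Polynomial.X} ⊔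
        Ideal.span {Polynomial.C f} := by
    rw [span_X_mul_X_two_eq, Ideal.map_sup, Ideal.map_mul, hQ]
    simp [Φ, Ideal.map_span, hΦF]
  have key := Polynomial.map_C_pow_inf_span_X_C_pow_le hn hfQ hcancel hlt
  rw [← hI, ← hQ, ← hZ, ← Ideal.map_pow, ← Ideal.map_pow, ← Ideal.map_pow] at key
  intro p hp
  obtain ⟨hp₁, hp₂⟩ := Ideal.mem_inf.mp hp
  exact (Ideal.comap_map_of_bijective Φ Φ.bijective).le
    (key ⟨Ideal.mem_map_of_mem Φ hp₁, Ideal.mem_map_of_mem Φ hp₂⟩)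

theorem not_span_pow_inf_span_pow_le_pow (hn : 1 ≤ n) (t : ℕ) :
    ¬ (Ideal.span {X 0, X 1} : Ideal (MvPolynomial (Fin 3) R)) ^ (t * n ^ 2) ⊓
        Ideal.span {X 2, ∏ k, (X 0 - C (c k) * X 1)} ^ (t * n ^ 2) ≤
      Ideal.span {X 0 * X 2, X 1 * X 2, ∏ k, (X 0 - C (c k) * X 1)} ^
        (t * (n ^ 2 - n + 1) + 1) := by
  set F : MvPolynomial (Fin 3) R := ∏ k, (X 0 - C (c k) * X 1)
  set w : Fin 3 → ℕ := ![1, 1, n - 1]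
  have hF : IsWeightedHomogeneous w F n := isWeightedHomogeneous_prod_X_sub_C_mul_X c rfl rfl
  have hX (i : Fin 3) : IsWeightedHomogeneous w (X i : MvPolynomial (Fin 3) R) (w i) :=
    isWeightedHomogeneous_X R w i
  have hG := ((hX 2).pow (t * n * (n - 1))).mul (hF.pow (t * n))
  have hI : Ideal.span {X 0 * X 2, X 1 * X 2, F} ≤ weightedOrderIdeal w n := by
    rw [Ideal.span_le]
    rintro _ (rfl | rfl | rfl)
    · simpa [w, Nat.add_sub_cancel' hn] using ((hX 0).mul (hX 2)).mem_weightedOrderIdeal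
    · simpa [w, Nat.add_sub_cancel' hn] using ((hX 1).mul (hX 2)).mem_weightedOrderIdeal
    · exact hF.mem_weightedOrderIdeal
  intro hle
  refine hG.notMem_pow ?_ hI ?_ (hle ⟨?_, ?_⟩)
  · exact mul_ne_zero (pow_ne_zero _ (X_ne_zero _))
      (pow_ne_zero _ (prod_X_sub_C_mul_X_ne_zero c (by decide)))
  · have hn2 : n ≤ n ^ 2 := Nat.le_self_pow two_ne_zero n
    simp only [w, smul_eq_mul, Matrix.cons_val]
    zify [hn, hn2]
    nlinarith
  · refine Ideal.mul_mem_left _ _ ?_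
    rw [show t * n ^ 2 = n * (t * n) by ring, pow_mul]
    exact Ideal.pow_mem_pow (prod_X_sub_C_mul_X_mem_pow c (Ideal.subset_span (by simp))
      (Ideal.subset_span (by simp))) _
  · rw [show t * n ^ 2 = t * n * (n - 1) + t * n by
      rw [← mul_add_one, Nat.sub_add_cancel hn]; ring, pow_add]
    exact Ideal.mul_mem_mul (Ideal.pow_mem_pow (Ideal.subset_span (by simp)) _)
      (Ideal.pow_mem_pow (Ideal.subset_span (by simp)) _)

end MvPolynomial

theorem stmt_5 {K : Type*} [Field K] (n : ℕ) (hn : 3 ≤ n)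
    (c : Fin n → K)
    (F : MvPolynomial (Fin 3) K)
    (hF : F = ∏ i : Fin n, (X 0 - MvPolynomial.C (c i) * X 1))
    (I : Ideal (MvPolynomial (Fin 3) K))
    (hI : I = Ideal.span {X 0 * X 2, X 1 * X 2, F})
    (Isym : ℕ → Ideal (MvPolynomial (Fin 3) K))
    (hIsym : ∀ m, Isym m =
      (Ideal.span {X 0, X 1}) ^ m ⊓ (Ideal.span {X 2, F}) ^ m) :
    sSup {x : ℝ | ∃ m r : ℕ, 0 < m ∧ 0 < r ∧ ¬ Isym m ≤ I ^ r ∧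
        x = (m : ℝ) / r} =
      (n : ℝ) ^ 2 / ((n : ℝ) ^ 2 - n + 1) := by
  subst hF hI
  have hq : ((n ^ 2 - n + 1 : ℕ) : ℝ) = (n : ℝ) ^ 2 - n + 1 := by
    rw [Nat.cast_add, Nat.cast_sub (Nat.le_self_pow two_ne_zero n)]
    push_cast
    ring
  refine csSup_eq_div_of_forall_le_of_mem (hq ▸ by positivity) ?_ fun t ht => ?_
  · rintro _ ⟨m, r, -, hr, hnot, rfl⟩
    have hle : m * (n ^ 2 - n + 1) ≤ r * n ^ 2 :=
      not_lt.mp fun hlt => hnot (hIsym m ▸ span_pow_inf_span_pow_le_pow c (by omega) hlt)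
    rw [div_le_div_iff₀ (by positivity) (hq ▸ by positivity), ← hq]
    exact_mod_cast hle.trans_eq (mul_comm _ _)
  · refine ⟨t * n ^ 2, t * (n ^ 2 - n + 1) + 1, by positivity, by omega,
      hIsym _ ▸ not_span_pow_inf_span_pow_le_pow c (by omega) t, ?_⟩
    push_cast [hq]
    rfl
end

section
/- For n ≥ 3 and m ≥ r ≥ 1, there exist nonnegative integers (i, l) satisfying i ≥ m, i + nl ≥ mn, l ≤ i − 1, and i + (n−1)l ≤ rn − 1 if and only if m ≤ (n²r − n)/(n² − n + 1). -/
/-!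
Adding `n - 1` times `i + n l ≥ m n` to `n` times `i + (n - 1) l ≤ r n - 1` eliminates `l` and
leaves `i + (n - 1) m n ≤ n² r - n`, which together with `i ≥ m` is the bound on `m`. Conversely,
with `c = ⌈m / n⌉` the pair `(n c, m - c)` is a witness: it meets `i + n l ≥ m n` with equality,
and `n c ≤ m + n - 1` is exactly the slack the bound on `m` leaves in `i + (n - 1) l ≤ r n - 1`.
-/

lemma Nat.exists_le_mul_lt_add {n : ℕ} (hn : 0 < n) (m : ℕ) : ∃ c, m ≤ n * c ∧ n * c < m + n := by
  refine ⟨(m + n - 1) / n, ?_, ?_⟩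
  · have := Nat.lt_div_mul_add (a := m + n - 1) hn
    rw [mul_comm]
    omega
  · have := Nat.div_mul_le_self (m + n - 1) n
    rw [mul_comm]
    omega

lemma bound_of_witness {n m r i l : ℕ} (hi : m ≤ i) (hcover : m * n ≤ i + n * l)
    (hcap : i + (n - 1) * l ≤ r * n - 1) : m * (n ^ 2 - n + 1) ≤ n ^ 2 * r - n := by
  rcases Nat.eq_zero_or_pos (r * n) with hrn | hrn
  · have : m = 0 := by rw [hrn] at hcap; omega
    simp [this]
  have hn : 1 ≤ n := Nat.pos_of_mul_pos_left hrn
  have hnn : n ≤ n ^ 2 := by nlinarith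
  have hnnr : n ≤ n ^ 2 * r := by nlinarith [Nat.pos_of_mul_pos_right hrn]
  zify [hn, hrn, hnn, hnnr] at hcover hcap ⊢
  nlinarith [mul_le_mul_of_nonneg_left hcover (by linarith : (0 : ℤ) ≤ n - 1),
    mul_le_mul_of_nonneg_left hcap (by positivity : (0 : ℤ) ≤ n)]

lemma exists_witness_of_bound {n m r : ℕ} (h : m * (n ^ 2 - n + 1) ≤ n ^ 2 * r - n) :
    ∃ i l : ℕ, i ≥ m ∧ i + n * l ≥ m * n ∧ l ≤ i - 1 ∧ i + (n - 1) * l ≤ r * n - 1 := by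
  rcases Nat.eq_zero_or_pos m with rfl | hm
  · exact ⟨0, 0, by simp⟩
  have hn : 0 < n := by
    rcases Nat.eq_zero_or_pos n with rfl | hn
    · simp at h; omega
    · exact hn
  obtain ⟨c, hmc, hcm⟩ := Nat.exists_le_mul_lt_add hn m
  have hc : c ≤ m := by nlinarith
  refine ⟨n * c, m - c, hmc, ?_, ?_, ?_⟩
  · rw [← mul_add, Nat.add_sub_cancel' hc, mul_comm]
  · have hc_pos : 0 < c := Nat.pos_of_ne_zero (by rintro rfl; omega)
    have hc_le : c ≤ n * c := Nat.le_mul_of_pos_left c hn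
    omega
  · have hslack : n * (c + (n - 1) * m) < n * (r * n) := by
      have hnn : n ≤ n ^ 2 := by nlinarith
      have hnnr : n ≤ n ^ 2 * r := by
        have : 0 < m * (n ^ 2 - n + 1) := by positivity
        omega
      zify [hn, hnn, hnnr] at h ⊢
      nlinarith
    have hsum : n * c + (n - 1) * (m - c) = c + (n - 1) * m := by
      zify [hn, hc]
      ring
    have := Nat.lt_of_mul_lt_mul_left hslack
    omega

theorem stmt_8_general (n m r : ℕ) :
    (∃ i l : ℕ, i ≥ m ∧ i + n * l ≥ m * n ∧ l ≤ i - 1 ∧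
        i + (n - 1) * l ≤ r * n - 1) ↔
      m * (n ^ 2 - n + 1) ≤ n ^ 2 * r - n :=
  ⟨fun ⟨_, _, hi, hcover, _, hcap⟩ => bound_of_witness hi hcover hcap, exists_witness_of_bound⟩

theorem stmt_8 (n m r : ℕ) (hn : 3 ≤ n) (hr : 1 ≤ r) (hmr : r ≤ m) :
    (∃ i l : ℕ, i ≥ m ∧ i + n * l ≥ m * n ∧ l ≤ i - 1 ∧
        i + (n - 1) * l ≤ r * n - 1) ↔
      m * (n ^ 2 - n + 1) ≤ n ^ 2 * r - n :=
  stmt_8_general n m r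
end

section
/- Let I be the ideal of a nearly-complete intersection of 2n+1 points and F = z^n − ∏_{i=1}^n (z − β_i x) − ∏_{i=1}^n (z − α_i y). Then I = (x,y) ∩ (xy, F) = (xy, xF, yF), and for all m ≥ 1, I^(m) = (x,y)^m ∩ (xy, F)^m. -/
/-!
Write `R = K[x, y, z]` as `K[y, z][x]`. Then `(x, c) ^ m`, for `c ∈ K[y, z]`, consists of the
`g` whose `j`-th coefficient in `x` is divisible by `c ^ (m - j)` for `j < m`. Since the linear
forms `z - a i y` are pairwise coprime primes of `K[y, z]`, this gives
`⋂ (x, z - a i y) ^ m = (x, ∏ (z - a i y)) ^ m = (x, F) ^ m`, and symmetrically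
`⋂ (y, z - b i x) ^ m = (y, F) ^ m`; moreover `y` is a nonzerodivisor modulo `(x, F) ^ m` and
`x` one modulo `(y, F) ^ m`. Writing `(x, F) ^ (m + 1) = x (x, F) ^ m + (F ^ (m + 1))` and
cancelling `x` and `y` in turn, induction on `m` gives `(x, F) ^ m ∩ (y, F) ^ m = (xy, F) ^ m`.
Finally `(x, y)` is prime and `F ∉ (x, y)`, so `(x, y) ∩ (xy, F) = (xy, xF, yF)`.
-/

namespace Polynomial

variable {A : Type*} [CommRing A]

def coeffPowDvdIdeal (p : A) (m : ℕ) : Ideal A[X] where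
  carrier := {g | ∀ j < m, p ^ (m - j) ∣ g.coeff j}
  add_mem' hf hg j hj := by
    rw [coeff_add]
    exact dvd_add (hf j hj) (hg j hj)
  zero_mem' j _ := by simp
  smul_mem' c g hg j hj := by
    rw [smul_eq_mul, coeff_mul]
    refine Finset.dvd_sum fun kl hkl => ?_
    have hl : kl.2 ≤ j := Finset.HasAntidiagonal.antidiagonal.snd_le hkl
    exact ((pow_dvd_pow p (by omega)).trans (hg kl.2 (by omega))).mul_left _

theorem span_X_C_mul_coeffPowDvdIdeal_le (p : A) (m : ℕ) :
    Ideal.span {X, C p} * coeffPowDvdIdeal p m ≤ coeffPowDvdIdeal p (m + 1) := by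
  rw [Ideal.span_insert, Ideal.sup_mul, sup_le_iff, Ideal.span_singleton_mul_le_iff,
    Ideal.span_singleton_mul_le_iff]
  refine ⟨fun g hg j hj => ?_, fun g hg j hj => ?_⟩
  · rcases j with _ | j
    · simp
    · rw [coeff_X_mul, show m + 1 - (j + 1) = m - j by omega]
      exact hg j (by omega)
  · rw [coeff_C_mul]
    rcases Nat.lt_or_ge j m with h | h
    · rw [show m + 1 - j = m - j + 1 by omega, pow_succ']
      exact mul_dvd_mul_left p (hg j h)
    · rw [show m + 1 - j = 1 by omega, pow_one]
      exact dvd_mul_right p _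

theorem coeffPowDvdIdeal_succ_le (p : A) (m : ℕ) :
    coeffPowDvdIdeal p (m + 1) ≤ Ideal.span {X, C p} * coeffPowDvdIdeal p m := by
  intro g hg
  have hdivX : g.divX ∈ coeffPowDvdIdeal p m := fun j hj => by
    rw [coeff_divX, show m - j = m + 1 - (j + 1) by omega]
    exact hg (j + 1) (by omega)
  obtain ⟨c, hc⟩ : p ^ (m + 1) ∣ g.coeff 0 := hg 0 (Nat.succ_pos m)
  have hconst : C (p ^ m * c) ∈ coeffPowDvdIdeal p m := fun j _ => by
    rw [coeff_C]
    split_ifs with h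
    · exact h ▸ dvd_mul_right _ _
    · exact dvd_zero _
  rw [← X_mul_divX_add g, hc, pow_succ', mul_assoc, C_mul]
  exact add_mem (Ideal.mul_mem_mul (Ideal.subset_span (by simp)) hdivX)
    (Ideal.mul_mem_mul (Ideal.subset_span (by simp)) hconst)

theorem span_X_C_pow_eq (p : A) (m : ℕ) :
    Ideal.span {X, C p} ^ m = coeffPowDvdIdeal p m := by
  induction m with
  | zero =>
    rw [pow_zero, Ideal.one_eq_top, eq_comm, Ideal.eq_top_iff_one]
    exact fun j hj => absurd hj (Nat.not_lt_zero j)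
  | succ m ih =>
    rw [pow_succ', ih]
    exact le_antisymm (span_X_C_mul_coeffPowDvdIdeal_le p m) (coeffPowDvdIdeal_succ_le p m)

theorem mem_span_X_C_pow_iff {p : A} {m : ℕ} {g : A[X]} :
    g ∈ Ideal.span {X, C p} ^ m ↔ ∀ j < m, p ^ (m - j) ∣ g.coeff j := by
  rw [span_X_C_pow_eq]; rfl

theorem iInf_span_X_C_pow [DecompositionMonoid A] {ι : Type*} [Fintype ι] {p : ι → A}
    (hp : Pairwise fun i j => IsRelPrime (p i) (p j)) (m : ℕ) :
    ⨅ i, Ideal.span {X, C (p i)} ^ m = Ideal.span {X, C (∏ i, p i)} ^ m := by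
  ext g
  simp only [Submodule.mem_iInf, mem_span_X_C_pow_iff]
  refine ⟨fun h j hj => ?_, fun h i j hj => ?_⟩
  · rw [← Finset.prod_pow]
    exact Fintype.prod_dvd_of_isRelPrime (fun i i' hii' => (hp hii').pow) fun i => h i j hj
  · exact (pow_dvd_pow_of_dvd (Finset.dvd_prod_of_mem p (Finset.mem_univ i)) _).trans (h j hj)

theorem mem_span_X_C_pow_of_C_mul_mem [DecompositionMonoid A] {p c : A} (hpc : IsRelPrime p c)
    {m : ℕ} {g : A[X]} (h : C c * g ∈ Ideal.span {X, C p} ^ m) :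
    g ∈ Ideal.span {X, C p} ^ m := by
  rw [mem_span_X_C_pow_iff] at h ⊢
  intro j hj
  exact hpc.pow_left.dvd_of_dvd_mul_left (coeff_C_mul g ▸ h j hj)

theorem isPrime_span_X_C {p : A} (hp : Prime p) : (Ideal.span {X, C p}).IsPrime := by
  have hmem : ∀ g : A[X], g ∈ Ideal.span {X, C p} ↔ p ∣ g.coeff 0 := fun g => by
    simpa using mem_span_X_C_pow_iff (p := p) (m := 1) (g := g)
  refine ⟨fun htop => hp.not_dvd_one ?_, fun {f g} hfg => ?_⟩
  · simpa using (hmem 1).mp (htop ▸ Submodule.mem_top)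
  · simp only [hmem, mul_coeff_zero] at hfg ⊢
    exact hp.dvd_or_dvd hfg

end Polynomial

namespace Ideal

variable {R : Type*} [CommRing R]

theorem sup_pow_succ_le (I J : Ideal R) (m : ℕ) :
    (I ⊔ J) ^ (m + 1) ≤ I * (I ⊔ J) ^ m ⊔ J ^ (m + 1) := by
  induction m with
  | zero => simp
  | succ m ih =>
    have hJ : J * (I ⊔ J) ^ (m + 1) ≤ I * (I ⊔ J) ^ (m + 1) ⊔ J ^ (m + 2) :=
      calc J * (I ⊔ J) ^ (m + 1) ≤ J * (I * (I ⊔ J) ^ m ⊔ J ^ (m + 1)) := mul_mono_right ih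
        _ = I * (J * (I ⊔ J) ^ m) ⊔ J ^ (m + 2) := by rw [mul_sup, mul_left_comm, ← pow_succ']
        _ ≤ I * (I ⊔ J) ^ (m + 1) ⊔ J ^ (m + 2) := by
          gcongr
          rw [pow_succ']
          exact mul_mono_left le_sup_right
    calc (I ⊔ J) ^ (m + 2) = I * (I ⊔ J) ^ (m + 1) ⊔ J * (I ⊔ J) ^ (m + 1) := by
          rw [pow_succ' _ (m + 1), sup_mul]
      _ ≤ _ := sup_le le_sup_left hJ

theorem exists_eq_mul_add_mul_pow_of_mem_span_pair_pow {u v g : R} {m : ℕ}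
    (hg : g ∈ span {u, v} ^ (m + 1)) :
    ∃ a ∈ span {u, v} ^ m, ∃ c, g = u * a + c * v ^ (m + 1) := by
  rw [span_insert] at hg
  obtain ⟨s, hs, t, ht, rfl⟩ := Submodule.mem_sup.mp (sup_pow_succ_le _ _ m hg)
  obtain ⟨a, ha, rfl⟩ := mem_span_singleton_mul.mp hs
  rw [span_singleton_pow, mem_span_singleton'] at ht
  obtain ⟨c, rfl⟩ := ht
  exact ⟨a, by rwa [span_insert], c, rfl⟩

theorem span_mul_pair_le_span_pair_left (x y f : R) : span {x * y, f} ≤ span {x, f} :=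
  span_le.mpr <| Set.insert_subset (mul_mem_right y _ (subset_span (by simp)))
    (Set.singleton_subset_iff.mpr (subset_span (by simp)))

theorem span_pair_pow_inf_span_pair_pow {x y f : R}
    (hx : ∀ k a, x * a ∈ span {y, f} ^ k → a ∈ span {y, f} ^ k)
    (hy : ∀ k a, y * a ∈ span {x, f} ^ k → a ∈ span {x, f} ^ k) (m : ℕ) :
    span {x, f} ^ m ⊓ span {y, f} ^ m = span {x * y, f} ^ m := by
  have hf : ∀ {u : R} (k : ℕ), f ^ k ∈ span {u, f} ^ k :=
    fun k => pow_mem_pow (subset_span (by simp)) k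
  induction m with
  | zero => simp
  | succ m ih =>
    apply le_antisymm _ (le_inf (pow_right_mono (span_mul_pair_le_span_pair_left x y f) _)
      (pow_right_mono (mul_comm x y ▸ span_mul_pair_le_span_pair_left y x f) _))
    rintro g ⟨hgx, hgy⟩
    obtain ⟨a, hax, c, rfl⟩ := exists_eq_mul_add_mul_pow_of_mem_span_pair_pow hgx
    have hay : a ∈ span {y, f} ^ (m + 1) := hx _ _ <| by
      simpa using sub_mem hgy (mul_mem_left _ c (hf (m + 1)))
    obtain ⟨b, hby, d, rfl⟩ := exists_eq_mul_add_mul_pow_of_mem_span_pair_pow hay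
    have hbx : b ∈ span {x, f} ^ m := hy _ _ <| by
      simpa using sub_mem hax (mul_mem_left _ d (pow_le_pow_right m.le_succ (hf (m + 1))))
    have hb : b ∈ span {x * y, f} ^ m := ih ▸ ⟨hbx, hby⟩
    have hg : x * (y * b + d * f ^ (m + 1)) + c * f ^ (m + 1)
        = (x * y) * b + (x * d + c) * f ^ (m + 1) := by ring
    rw [hg, pow_succ']
    exact add_mem (mul_mem_mul (subset_span (by simp)) hb)
      (mul_mem_left _ _ (pow_succ' (span {x * y, f}) m ▸ hf (m + 1)))

theorem comap_span_pair_pow {S : Type*} [CommRing S] (e : R ≃+* S) (u v : R) (m : ℕ) :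
    (span {e u, e v} ^ m).comap e = span {u, v} ^ m := by
  rw [← map_symm, Ideal.map_pow, map_span, Set.image_pair, e.symm_apply_apply,
    e.symm_apply_apply]

theorem span_pair_eq_of_dvd_add {u f g : R} (h : u ∣ f + g) : span {u, f} = span {u, g} := by
  obtain ⟨k, hk⟩ := h
  rw [show f = -g + k * u by linear_combination hk, span_pair_add_mul_left, span_insert,
    span_singleton_neg, ← span_insert]

theorem span_pair_inf_span_mul_pair {x y f : R} (hP : (span {x, y}).IsPrime)
    (hf : f ∉ span {x, y}) : span {x, y} ⊓ span {x * y, f} = span {x * y, x * f, y * f} := by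
  apply le_antisymm
  · rintro g ⟨hgP, hg⟩
    obtain ⟨s, t, rfl⟩ := mem_span_pair.mp hg
    have htf : t * f ∈ span {x, y} := by
      have hxy : x * y ∈ span {x, y} := mul_mem_right y _ (subset_span (Set.mem_insert x _))
      simpa using sub_mem hgP (mul_mem_left _ s hxy)
    obtain ⟨α, β, rfl⟩ := mem_span_pair.mp ((hP.mem_or_mem htf).resolve_right hf)
    have hg : s * (x * y) + (α * x + β * y) * f = s * (x * y) + α * (x * f) + β * (y * f) := by
      ring
    rw [hg]
    exact add_mem (add_mem (mul_mem_left _ _ (subset_span (by simp)))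
      (mul_mem_left _ _ (subset_span (by simp)))) (mul_mem_left _ _ (subset_span (by simp)))
  · have hx : x ∈ span {x, y} := subset_span (by simp)
    have hy : y ∈ span {x, y} := subset_span (by simp)
    have hf' : f ∈ span {x * y, f} := subset_span (by simp)
    rw [span_le, Set.insert_subset_iff, Set.insert_subset_iff, Set.singleton_subset_iff]
    exact ⟨⟨mul_mem_right y _ hx, subset_span (by simp)⟩, ⟨mul_mem_right f _ hx,
      mul_mem_left _ x hf'⟩, ⟨mul_mem_right f _ hy, mul_mem_left _ y hf'⟩⟩

end Ideal

theorem dvd_pow_card_sub_prod_sub_mul {R ι : Type*} [CommRing R] (s : Finset ι) (u z : R)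
    (c : ι → R) : u ∣ z ^ s.card - ∏ i ∈ s, (z - c i * u) := by
  rw [← Ideal.mem_span_singleton, ← Ideal.Quotient.eq_zero_iff_mem]
  have hu : Ideal.Quotient.mk (Ideal.span {u}) u = 0 :=
    Ideal.Quotient.eq_zero_iff_mem.mpr (Ideal.mem_span_singleton_self u)
  simp [hu]

namespace MvPolynomial

open scoped Polynomial

variable {K : Type*} [Field K]

theorem algEquiv_C {σ τ : Type*} (e : MvPolynomial σ K ≃ₐ[K] (MvPolynomial τ K)[X])
    (c : K) :
    e (C c) = Polynomial.C (C c) := by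
  simpa [Polynomial.algebraMap_apply] using e.commutes c

theorem prime_X_one_sub_C_mul_X_zero (c : K) :
    Prime (X 1 - C c * X 0 : MvPolynomial (Fin 2) K) := by
  let e := (renameEquiv K (Equiv.swap (0 : Fin 2) 1)).trans (finSuccEquiv K 1)
  have he : e (X 1 - C c * X 0) = Polynomial.X - Polynomial.C (C c * X 0) := by
    have h1 : e (X 1) = Polynomial.X := by simp [e, finSuccEquiv_X_zero]
    have h0 : e (X 0) = Polynomial.C (X 0) := by
      simp only [e, AlgEquiv.trans_apply, renameEquiv_apply, rename_X, Equiv.swap_apply_left]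
      exact finSuccEquiv_X_succ (j := 0)
    simp [algEquiv_C, h0, h1, Polynomial.C_mul]
  rw [← MulEquiv.prime_iff e.toMulEquiv]
  exact he ▸ Polynomial.prime_X_sub_C _

theorem isRelPrime_X_one_sub_C_mul_X_zero {c : K} {q : MvPolynomial (Fin 2) K}
    (hq : eval ![1, c] q ≠ 0) : IsRelPrime (X 1 - C c * X 0) q := by
  refine (prime_X_one_sub_C_mul_X_zero c).irreducible.isRelPrime_iff_not_dvd.mpr fun h => hq ?_
  simpa using map_dvd (eval ![1, c]) h

section LinearForms

variable (e : MvPolynomial (Fin 3) K ≃ₐ[K] (MvPolynomial (Fin 2) K)[X])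
  {u w : MvPolynomial (Fin 3) K}

theorem map_X_two_sub_C_mul (hw : e w = Polynomial.C (X 0)) (hz : e (X 2) = Polynomial.C (X 1))
    (c : K) : e (X 2 - C c * w) = Polynomial.C (X 1 - C c * X 0) := by
  simp [algEquiv_C, hw, hz, Polynomial.C_mul]

theorem map_prod_X_two_sub_C_mul (hw : e w = Polynomial.C (X 0))
    (hz : e (X 2) = Polynomial.C (X 1)) {n : ℕ} (c : Fin n → K) :
    e (∏ i, (X 2 - C (c i) * w)) = Polynomial.C (∏ i, (X 1 - C (c i) * X 0)) := by
  simp only [map_prod, map_X_two_sub_C_mul e hw hz]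

theorem iInf_span_X_two_sub_C_mul_pow (hu : e u = Polynomial.X) (hw : e w = Polynomial.C (X 0))
    (hz : e (X 2) = Polynomial.C (X 1)) {n : ℕ} {c : Fin n → K} (hc : Function.Injective c)
    (m : ℕ) : ⨅ i, Ideal.span {u, X 2 - C (c i) * w} ^ m
      = Ideal.span {u, ∏ i, (X 2 - C (c i) * w)} ^ m := by
  simp_rw [← Ideal.comap_span_pair_pow e.toRingEquiv, ← Ideal.comap_iInf]
  simp only [AlgEquiv.coe_ringEquiv, hu, map_X_two_sub_C_mul e hw hz,
    map_prod_X_two_sub_C_mul e hw hz]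
  rw [Polynomial.iInf_span_X_C_pow]
  exact fun i j hij => isRelPrime_X_one_sub_C_mul_X_zero (by simpa [sub_eq_zero] using hc.ne hij)

theorem mem_span_prod_X_two_sub_C_mul_pow_of_mul_mem (hu : e u = Polynomial.X)
    (hw : e w = Polynomial.C (X 0)) (hz : e (X 2) = Polynomial.C (X 1)) {n : ℕ} (c : Fin n → K)
    {k : ℕ} {g : MvPolynomial (Fin 3) K}
    (h : w * g ∈ Ideal.span {u, ∏ i, (X 2 - C (c i) * w)} ^ k) :
    g ∈ Ideal.span {u, ∏ i, (X 2 - C (c i) * w)} ^ k := by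
  rw [← Ideal.comap_span_pair_pow e.toRingEquiv] at h ⊢
  simp only [Ideal.mem_comap, AlgEquiv.coe_ringEquiv, map_mul, hu, hw,
    map_prod_X_two_sub_C_mul e hw hz] at h ⊢
  exact Polynomial.mem_span_X_C_pow_of_C_mul_mem
    (IsRelPrime.prod_left fun i _ => isRelPrime_X_one_sub_C_mul_X_zero (by simp)) h

theorem isPrime_span_pair (hu : e u = Polynomial.X) (hw : e w = Polynomial.C (X 0)) :
    (Ideal.span {u, w}).IsPrime := by
  have := Polynomial.isPrime_span_X_C (X_prime (R := K) (i := (0 : Fin 2)))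
  rw [← pow_one (Ideal.span {u, w}), ← Ideal.comap_span_pair_pow e.toRingEquiv, pow_one]
  simp only [AlgEquiv.coe_ringEquiv, hu, hw]
  exact Ideal.comap_isPrime _ _

end LinearForms

theorem iInf_span_pow_inf_iInf_span_pow {n : ℕ} {a b : Fin n → K} (ha : Function.Injective a)
    (hb : Function.Injective b) {F : MvPolynomial (Fin 3) K}
    (hF : F = X 2 ^ n - ∏ i, (X 2 - C (b i) * X 0) - ∏ i, (X 2 - C (a i) * X 1)) (m : ℕ) :
    (⨅ i, Ideal.span {X 0, X 2 - C (a i) * X 1} ^ m) ⊓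
        (⨅ i, Ideal.span {X 1, X 2 - C (b i) * X 0} ^ m) = Ideal.span {X 0 * X 1, F} ^ m := by
  let ex := finSuccEquiv K 2
  let ey := (renameEquiv K (Equiv.swap (0 : Fin 3) 1)).trans ex
  have hx0 : ex (X 0) = Polynomial.X := finSuccEquiv_X_zero
  have hx1 : ex (X 1) = Polynomial.C (X 0) := finSuccEquiv_X_succ (j := 0)
  have hx2 : ex (X 2) = Polynomial.C (X 1) := finSuccEquiv_X_succ (j := 1)
  have hy0 : ey (X 0) = Polynomial.C (X 0) := by simpa [ey] using hx1
  have hy1 : ey (X 1) = Polynomial.X := by simpa [ey] using hx0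
  have hy2 : ey (X 2) = Polynomial.C (X 1) := by
    simpa [ey, Equiv.swap_apply_of_ne_of_ne (by decide : (2 : Fin 3) ≠ 0)
      (by decide : (2 : Fin 3) ≠ 1)] using hx2
  -- modulo `x`, `z ^ n ≡ ∏ (z - b i x)`, hence `F ≡ -∏ (z - a i y)`; likewise modulo `y`
  have hFx : Ideal.span {X 0, F} = Ideal.span {X 0, ∏ i, (X 2 - C (a i) * X 1)} :=
    Ideal.span_pair_eq_of_dvd_add <| by
      rw [hF, sub_add_cancel]
      simpa using dvd_pow_card_sub_prod_sub_mul Finset.univ (X 0) (X 2) (C ∘ b)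
  have hFy : Ideal.span {X 1, F} = Ideal.span {X 1, ∏ i, (X 2 - C (b i) * X 0)} :=
    Ideal.span_pair_eq_of_dvd_add <| by
      rw [hF, sub_right_comm, sub_add_cancel]
      simpa using dvd_pow_card_sub_prod_sub_mul Finset.univ (X 1) (X 2) (C ∘ a)
  rw [iInf_span_X_two_sub_C_mul_pow ex hx0 hx1 hx2 ha,
    iInf_span_X_two_sub_C_mul_pow ey hy1 hy0 hy2 hb, ← hFx, ← hFy]
  refine Ideal.span_pair_pow_inf_span_pair_pow (fun k g h => ?_) (fun k g h => ?_) m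
  · rw [hFy] at h ⊢
    exact mem_span_prod_X_two_sub_C_mul_pow_of_mul_mem ey hy1 hy0 hy2 b h
  · rw [hFx] at h ⊢
    exact mem_span_prod_X_two_sub_C_mul_pow_of_mul_mem ex hx0 hx1 hx2 a h

end MvPolynomial

open MvPolynomial

theorem stmt_11_general {K : Type*} [Field K] (n : ℕ)
    (a b : Fin n → K) (ha : Function.Injective a) (hb : Function.Injective b)
    (F : MvPolynomial (Fin 3) K)
    (hF : F = X 2 ^ n - ∏ i : Fin n, (X 2 - MvPolynomial.C (b i) * X 0)
        - ∏ i : Fin n, (X 2 - MvPolynomial.C (a i) * X 1))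
    (I : Ideal (MvPolynomial (Fin 3) K))
    (hI : I = Ideal.span {X 0, X 1} ⊓
        (⨅ i : Fin n, Ideal.span {X 0, X 2 - MvPolynomial.C (a i) * X 1}) ⊓
        (⨅ i : Fin n, Ideal.span {X 1, X 2 - MvPolynomial.C (b i) * X 0}))
    (Isym : ℕ → Ideal (MvPolynomial (Fin 3) K))
    (hIsym : ∀ m, Isym m = Ideal.span {X 0, X 1} ^ m ⊓
        (⨅ i : Fin n, Ideal.span {X 0, X 2 - MvPolynomial.C (a i) * X 1} ^ m) ⊓
        (⨅ i : Fin n, Ideal.span {X 1, X 2 - MvPolynomial.C (b i) * X 0} ^ m)) :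
    I = Ideal.span {X 0, X 1} ⊓ Ideal.span {X 0 * X 1, F} ∧
      I = Ideal.span {X 0 * X 1, X 0 * F, X 1 * F} ∧
      ∀ m : ℕ, 1 ≤ m →
        Isym m = Ideal.span {X 0, X 1} ^ m ⊓ Ideal.span {X 0 * X 1, F} ^ m := by
  have key := iInf_span_pow_inf_iInf_span_pow ha hb hF
  have hI' : I = Ideal.span {X 0, X 1} ⊓ Ideal.span {X 0 * X 1, F} := by
    rw [hI, inf_assoc, ← pow_one (Ideal.span {X 0 * X 1, F}), ← key 1]
    simp only [pow_one]
  have hprime : (Ideal.span {X 0, X 1} : Ideal (MvPolynomial (Fin 3) K)).IsPrime :=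
    isPrime_span_pair (finSuccEquiv K 2) finSuccEquiv_X_zero (finSuccEquiv_X_succ (j := 0))
  -- at the point `[0 : 0 : 1]` the polynomial `F` takes the value `-1`
  have hF_notMem : F ∉ Ideal.span {X 0, X 1} := fun h => by
    have hle : Ideal.span {X 0, X 1} ≤ RingHom.ker (eval ![0, 0, (1 : K)]) := by
      simp [Ideal.span_le, Set.insert_subset_iff]
    simpa [hF] using hle h
  exact ⟨hI', hI'.trans (Ideal.span_pair_inf_span_mul_pair hprime hF_notMem),
    fun m _ => by rw [hIsym, inf_assoc, key]⟩

theorem stmt_11 {K : Type*} [Field K] (n : ℕ) (hn : 1 ≤ n)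
    (a b : Fin n → K) (ha : Function.Injective a) (hb : Function.Injective b)
    (ha0 : ∀ i, a i ≠ 0) (hb0 : ∀ i, b i ≠ 0)
    (F : MvPolynomial (Fin 3) K)
    (hF : F = X 2 ^ n - ∏ i : Fin n, (X 2 - MvPolynomial.C (b i) * X 0)
        - ∏ i : Fin n, (X 2 - MvPolynomial.C (a i) * X 1))
    (I : Ideal (MvPolynomial (Fin 3) K))
    (hI : I = Ideal.span {X 0, X 1} ⊓
        (⨅ i : Fin n, Ideal.span {X 0, X 2 - MvPolynomial.C (a i) * X 1}) ⊓
        (⨅ i : Fin n, Ideal.span {X 1, X 2 - MvPolynomial.C (b i) * X 0}))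
    (Isym : ℕ → Ideal (MvPolynomial (Fin 3) K))
    (hIsym : ∀ m, Isym m = Ideal.span {X 0, X 1} ^ m ⊓
        (⨅ i : Fin n, Ideal.span {X 0, X 2 - MvPolynomial.C (a i) * X 1} ^ m) ⊓
        (⨅ i : Fin n, Ideal.span {X 1, X 2 - MvPolynomial.C (b i) * X 0} ^ m)) :
    I = Ideal.span {X 0, X 1} ⊓ Ideal.span {X 0 * X 1, F} ∧
      I = Ideal.span {X 0 * X 1, X 0 * F, X 1 * F} ∧
      ∀ m : ℕ, 1 ≤ m →
        Isym m = Ideal.span {X 0, X 1} ^ m ⊓ Ideal.span {X 0 * X 1, F} ^ m :=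
  stmt_11_general n a b ha hb F hF I hI Isym hIsym
end

section
/- Every monomial x^a y^b z^c with a, b, c ≥ 0 and c ≤ t lies in the K-span of {x^a y^b z^c F^d : a, b, c, d ≥ 0, c < n, dn ≤ t}, where F = z^n − ∏(z − β_i x) − ∏(z − α_i y). -/
/-!
Since `F + z^n` has `z`-degree below `n`, a monomial `x^a y^b z^(c + n)` equals
`-x^a y^b z^c F` plus a combination of monomials of `z`-degree below `c + n`.
Strong induction on the `z`-degree bound `t` then expresses every monomial of `z`-degree
`≤ t` through monomials of `z`-degree `< n` times powers `F^d`, each factor `F` using up `n`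
of the budget `t`.
-/

namespace MvPolynomial

variable {R σ : Type*} [CommRing R]

theorem degreeOf_monomial_le (i : σ) (s : σ →₀ ℕ) (a : R) :
    degreeOf i (monomial s a) ≤ s i := by
  rw [degreeOf_le_iff]
  intro m hm
  rw [Finset.mem_singleton.mp (support_monomial_subset hm)]

theorem degreeOf_X_pow_le (i : σ) (k : ℕ) : degreeOf i (X i ^ k : MvPolynomial σ R) ≤ k := by
  rw [X_pow_eq_monomial]
  exact (degreeOf_monomial_le i _ _).trans_eq Finsupp.single_eq_same

theorem degreeOf_C_mul_X_of_ne {i j : σ} (h : i ≠ j) (c : R) :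
    degreeOf i (C c * X j : MvPolynomial σ R) = 0 :=
  Nat.eq_zero_of_le_zero ((degreeOf_C_mul_le _ i c).trans (degreeOf_X_of_ne h).le)

theorem degreeOf_prod_X_sub_sub_X_pow_lt {ι : Type*} (i : σ) {s : Finset ι} (hs : s.Nonempty)
    (g : ι → MvPolynomial σ R) (hg : ∀ k ∈ s, degreeOf i (g k) = 0) :
    degreeOf i (∏ k ∈ s, (X i - g k) - X i ^ s.card) < s.card := by
  induction hs using Finset.Nonempty.cons_induction with
  | singleton a =>
    simp [hg a (Finset.mem_singleton_self a)]
  | cons a s ha hs ih =>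
    have hga : degreeOf i (g a) = 0 := hg a (Finset.mem_cons_self a s)
    have hrest := ih fun k hk => hg k (Finset.mem_cons_of_mem hk)
    have hfactor : degreeOf i (X i - g a) ≤ 1 :=
      (degreeOf_sub_le i _ _).trans (max_le (by simpa using degreeOf_X_pow_le (R := R) i 1)
        (by omega))
    have hpow : degreeOf i (g a * X i ^ s.card) ≤ s.card :=
      (degreeOf_mul_le i _ _).trans (by have := degreeOf_X_pow_le (R := R) i s.card; omega)
    have hsplit : ∏ k ∈ s.cons a ha, (X i - g k) - X i ^ (s.cons a ha).card
        = (X i - g a) * (∏ k ∈ s, (X i - g k) - X i ^ s.card) - g a * X i ^ s.card := by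
      rw [Finset.prod_cons, Finset.card_cons, pow_succ]
      ring
    rw [hsplit, Finset.card_cons]
    refine (degreeOf_sub_le i _ _).trans_lt (max_lt ?_ (by omega))
    exact (degreeOf_mul_le i _ _).trans_lt (by omega)

section ReducedSpan

variable (i : σ) (n : ℕ) (F : MvPolynomial σ R)

noncomputable def reducedSpan (t : ℕ) : Submodule R (MvPolynomial σ R) :=
  Submodule.span R {g | ∃ m d, m i < n ∧ d * n ≤ t ∧ g = monomial m 1 * F ^ d}

variable {i n F}

theorem reducedSpan_mono {t t' : ℕ} (h : t ≤ t') :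
    reducedSpan i n F t ≤ reducedSpan i n F t' :=
  Submodule.span_mono fun _ ⟨m, d, hm, hd, hg⟩ => ⟨m, d, hm, hd.trans h, hg⟩

theorem monomial_mem_reducedSpan {m : σ →₀ ℕ} (hm : m i < n) (c : R) (t : ℕ) :
    monomial m c ∈ reducedSpan i n F t := by
  have hgen : monomial m 1 ∈ reducedSpan i n F t :=
    Submodule.subset_span ⟨m, 0, hm, by simp, by simp⟩
  simpa [smul_monomial] using Submodule.smul_mem _ c hgen

theorem mul_mem_reducedSpan {g : MvPolynomial σ R} {t : ℕ} (hg : g ∈ reducedSpan i n F t) :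
    g * F ∈ reducedSpan i n F (t + n) := by
  induction hg using Submodule.span_induction with
  | mem g hg =>
    obtain ⟨m, d, hm, hd, rfl⟩ := hg
    exact Submodule.subset_span ⟨m, d + 1, hm, by rw [add_mul]; omega, by ring⟩
  | zero => simp
  | add g g' _ _ hg hg' => rw [add_mul]; exact add_mem hg hg'
  | smul c g _ hg => rw [smul_mul_assoc]; exact Submodule.smul_mem _ c hg

theorem mem_reducedSpan_of_degreeOf_le (hn : 0 < n) (hF : degreeOf i (F + X i ^ n) < n)
    {t : ℕ} {p : MvPolynomial σ R} (hp : degreeOf i p ≤ t) : p ∈ reducedSpan i n F t := by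
  induction t using Nat.strong_induction_on generalizing p with
  | _ t ih =>
  rw [p.as_sum]
  refine Submodule.sum_mem _ fun m hm => ?_
  have hmt : m i ≤ t := (monomial_le_degreeOf i hm).trans hp
  by_cases hmn : m i < n
  · exact monomial_mem_reducedSpan hmn _ t
  set q := monomial (m - Finsupp.single i n) (coeff m p)
  have hq : degreeOf i q ≤ m i - n :=
    (degreeOf_monomial_le i _ _).trans_eq (by simp)
  have hsplit : monomial m (coeff m p) = q * (F + X i ^ n) - q * F := by
    rw [← mul_sub, add_sub_cancel_left, X_pow_eq_monomial, monomial_mul, mul_one,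
      tsub_add_cancel_of_le (by simpa using not_lt.mp hmn)]
  rw [hsplit]
  refine sub_mem ?_ ?_
  · refine reducedSpan_mono (by omega) (ih (m i - 1) (by omega) ?_)
    exact (degreeOf_mul_le i _ _).trans (by omega)
  · have hqF := mul_mem_reducedSpan (ih (t - n) (by omega) (hq.trans (by omega)))
    exact reducedSpan_mono (by omega) hqF

end ReducedSpan

end MvPolynomial

open MvPolynomial

theorem stmt_12 {K : Type*} [Field K] (n : ℕ) (hn : 1 ≤ n)
    (a b : Fin n → K)
    (F : MvPolynomial (Fin 3) K)
    (hF : F = X 2 ^ n - ∏ i : Fin n, (X 2 - MvPolynomial.C (b i) * X 0)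
        - ∏ i : Fin n, (X 2 - MvPolynomial.C (a i) * X 1))
    (t : ℕ) :
    ∀ p q r : ℕ, r ≤ t →
      (X 0 : MvPolynomial (Fin 3) K) ^ p * X 1 ^ q * X 2 ^ r ∈
        Submodule.span K
          {g : MvPolynomial (Fin 3) K | ∃ p' q' r' d : ℕ, r' < n ∧ d * n ≤ t ∧
            g = X 0 ^ p' * X 1 ^ q' * X 2 ^ r' * F ^ d} := by
  intro p q r hr
  have hne : (Finset.univ : Finset (Fin n)).Nonempty := ⟨⟨0, hn⟩, Finset.mem_univ _⟩
  have hlow : degreeOf 2 (F + X 2 ^ n) < n := by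
    have hx := degreeOf_prod_X_sub_sub_X_pow_lt 2 hne _
      fun i _ => degreeOf_C_mul_X_of_ne (show (2 : Fin 3) ≠ 0 by decide) (b i)
    have hy := degreeOf_prod_X_sub_sub_X_pow_lt 2 hne _
      fun i _ => degreeOf_C_mul_X_of_ne (show (2 : Fin 3) ≠ 1 by decide) (a i)
    rw [Finset.card_univ, Fintype.card_fin] at hx hy
    have hsum : F + X 2 ^ n = -(∏ i : Fin n, (X 2 - C (b i) * X 0) - X 2 ^ n)
        - (∏ i : Fin n, (X 2 - C (a i) * X 1) - X 2 ^ n) := by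
      rw [hF]; ring
    rw [hsum]
    exact (degreeOf_sub_le 2 _ _).trans_lt (max_lt ((degreeOf_neg 2 _).trans_lt hx) hy)
  have hdeg : degreeOf 2 ((X 0 : MvPolynomial (Fin 3) K) ^ p * X 1 ^ q * X 2 ^ r) ≤ t := by
    refine ((degreeOf_mul_le 2 _ _).trans (add_le_add (degreeOf_mul_le 2 _ _) le_rfl)).trans ?_
    simp [degreeOf_X_pow_of_ne, hr]
  refine Submodule.span_le.mpr ?_ (mem_reducedSpan_of_degreeOf_le (by omega) hlow hdeg)
  rintro _ ⟨m, d, hm, hd, rfl⟩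
  refine Submodule.subset_span ⟨m 0, m 1, m 2, d, hm, hd, ?_⟩
  rw [monomial_eq, Finsupp.prod_fintype _ _ fun _ => pow_zero _, Fin.prod_univ_three, C_1, one_mul]
end

section
/- The set A = {x^a y^b z^c F^d : a, b, c, d ≥ 0, c < n} is linearly independent over K and spans K[x,y,z] as a K-vector space, where F = z^n − ∏(z − β_i x) − ∏(z − α_i y). -/
/-!
Over `R = K[x, y]`, the polynomial `F` has degree `n` in `z` with leading coefficient `-1`: the
two products are monic of degree `n` and one `z ^ n` cancels. Hence `F ^ d * z ^ c` has
`z`-degree `n * d + c` and a unit leading coefficient, so as `(d, c)` ranges over `ℕ × Fin n`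
these elements form a polynomial sequence, i.e. an `R`-basis of `R[z]`. Combining it with the
monomial `K`-basis of `R` gives the `K`-basis `x ^ a * y ^ b * z ^ c * F ^ d` of `K[x, y, z]`.
-/

namespace Polynomial

section MonicSum

variable {R : Type*} [CommRing R] [Nontrivial R] {n : ℕ} {P Q : R[X]}

lemma degree_sub_X_pow_lt (hQ : Q.Monic) (hQn : Q.natDegree = n) :
    (Q - X ^ n).degree < (n : WithBot ℕ) := by
  have hQdeg : Q.degree = n := by rw [degree_eq_natDegree hQ.ne_zero, hQn]
  rw [← hQdeg]
  exact degree_sub_lt_left (by rw [degree_X_pow, hQdeg]) hQ.ne_zero (by simp [hQ.leadingCoeff])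

lemma monic_add_sub_X_pow (hP : P.Monic) (hQ : Q.Monic) (hPn : P.natDegree = n)
    (hQn : Q.natDegree = n) : (P + Q - X ^ n).Monic := by
  rw [add_sub_assoc]
  refine hP.add_of_left ?_
  rw [degree_eq_natDegree hP.ne_zero, hPn]
  exact degree_sub_X_pow_lt hQ hQn

lemma natDegree_add_sub_X_pow (hP : P.Monic) (hQ : Q.Monic) (hPn : P.natDegree = n)
    (hQn : Q.natDegree = n) : (P + Q - X ^ n).natDegree = n := by
  rw [add_sub_assoc, natDegree_add_eq_left_of_degree_lt, hPn]
  rw [degree_eq_natDegree hP.ne_zero, hPn]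
  exact degree_sub_X_pow_lt hQ hQn

end MonicSum

section PowMulXPow

variable {R : Type*} [Ring R] [IsDomain R] {n : ℕ} [NeZero n] {h : R[X]}

lemma degree_pow_mul_X_pow (hdeg : h.natDegree = n) (d c : ℕ) :
    (h ^ d * X ^ c).degree = ((d * n + c : ℕ) : WithBot ℕ) := by
  have h0 : h ≠ 0 := by rintro rfl; simp [eq_comm, NeZero.ne] at hdeg
  rw [degree_mul, degree_pow, degree_X_pow, degree_eq_natDegree h0, hdeg]
  norm_cast

noncomputable def Sequence.powMulXPow (hdeg : h.natDegree = n) : Sequence R where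
  elems' i := h ^ (Nat.divModEquiv n i).1 * X ^ ((Nat.divModEquiv n i).2 : ℕ)
  degree_eq' i := by
    rw [degree_pow_mul_X_pow hdeg, Nat.divModEquiv_apply, Fin.val_ofNat, Nat.div_add_mod']

lemma Sequence.powMulXPow_apply (hdeg : h.natDegree = n) (i : ℕ) :
    Sequence.powMulXPow hdeg i =
      h ^ (Nat.divModEquiv n i).1 * X ^ ((Nat.divModEquiv n i).2 : ℕ) :=
  rfl

lemma isUnit_leadingCoeff_pow_mul_X_pow (hlc : IsUnit h.leadingCoeff) (d c : ℕ) :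
    IsUnit (h ^ d * X ^ c).leadingCoeff := by
  rw [leadingCoeff_mul_X_pow, leadingCoeff_pow]
  exact hlc.pow d

noncomputable def basisPowMulXPow (hdeg : h.natDegree = n) (hlc : IsUnit h.leadingCoeff) :
    Module.Basis (ℕ × Fin n) R R[X] :=
  ((Sequence.powMulXPow hdeg).basis fun i => by
    rw [Sequence.powMulXPow_apply]
    exact isUnit_leadingCoeff_pow_mul_X_pow hlc _ _).reindex (Nat.divModEquiv n)

@[simp]
lemma basisPowMulXPow_apply (hdeg : h.natDegree = n) (hlc : IsUnit h.leadingCoeff)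
    (p : ℕ × Fin n) : basisPowMulXPow hdeg hlc p = h ^ p.1 * X ^ (p.2 : ℕ) := by
  rw [basisPowMulXPow, Module.Basis.reindex_apply, Sequence.basis_eq_self,
    Sequence.powMulXPow_apply, Equiv.apply_symm_apply]

end PowMulXPow

end Polynomial

namespace MvPolynomial

variable (K : Type*) [CommSemiring K] (k : ℕ)

noncomputable def lastVarEquiv :
    MvPolynomial (Fin (k + 1)) K ≃ₐ[K] Polynomial (MvPolynomial (Fin k) K) :=
  (renameEquiv K finSuccEquivLast).trans (optionEquivLeft K (Fin k))

variable {K k}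

@[simp]
lemma lastVarEquiv_X_castSucc (i : Fin k) :
    lastVarEquiv K k (X i.castSucc) = Polynomial.C (X i) := by
  simp [lastVarEquiv, optionEquivLeft_X_some]

@[simp]
lemma lastVarEquiv_X_last : lastVarEquiv K k (X (Fin.last k)) = Polynomial.X := by
  simp [lastVarEquiv, optionEquivLeft_X_none]

@[simp]
lemma lastVarEquiv_C (a : K) : lastVarEquiv K k (C a) = Polynomial.C (C a) :=
  (lastVarEquiv K k).commutes a

@[simp]
lemma lastVarEquiv_two_X_zero : lastVarEquiv K 2 (X 0) = Polynomial.C (X 0) :=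
  lastVarEquiv_X_castSucc 0

@[simp]
lemma lastVarEquiv_two_X_one : lastVarEquiv K 2 (X 1) = Polynomial.C (X 1) :=
  lastVarEquiv_X_castSucc 1

@[simp]
lemma lastVarEquiv_two_X_two : lastVarEquiv K 2 (X 2) = Polynomial.X :=
  lastVarEquiv_X_last

end MvPolynomial

open MvPolynomial

noncomputable def exponentEquiv (n : ℕ) :
    {q : ℕ × ℕ × ℕ × ℕ // q.2.2.1 < n} ≃ (Fin 2 →₀ ℕ) × ℕ × Fin n where
  toFun q := (Finsupp.equivFunOnFinite.symm ![q.1.1, q.1.2.1], q.1.2.2.2, ⟨q.1.2.2.1, q.2⟩)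
  invFun m := ⟨(m.1 0, m.1 1, m.2.2, m.2.1), m.2.2.2⟩
  left_inv q := by simp
  right_inv m := by
    ext i
    · fin_cases i <;> rfl
    all_goals rfl

lemma monomial_eq_X_zero_pow_mul_X_one_pow {K : Type*} [CommSemiring K] (p q : ℕ) :
    monomial (Finsupp.equivFunOnFinite.symm ![p, q]) (1 : K) = X 0 ^ p * X 1 ^ q := by
  simp [monomial_eq, Finsupp.prod_fintype, Fin.prod_univ_two]

lemma exists_basis_X_pow_mul_pow {K : Type*} [Field K] {n : ℕ} [NeZero n]
    {F : MvPolynomial (Fin 3) K} (hdeg : (lastVarEquiv K 2 F).natDegree = n)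
    (hlc : IsUnit (lastVarEquiv K 2 F).leadingCoeff) :
    ∃ b : Module.Basis {q : ℕ × ℕ × ℕ × ℕ // q.2.2.1 < n} K (MvPolynomial (Fin 3) K),
      ⇑b = fun q => X 0 ^ q.1.1 * X 1 ^ q.1.2.1 * X 2 ^ q.1.2.2.1 * F ^ q.1.2.2.2 := by
  let e := lastVarEquiv K 2
  refine ⟨(((basisMonomials (Fin 2) K).smulTower (Polynomial.basisPowMulXPow hdeg hlc)).map
    e.symm.toLinearEquiv).reindex (exponentEquiv n).symm, funext fun q => ?_⟩
  rw [Module.Basis.reindex_apply, Equiv.symm_symm, Module.Basis.map_apply,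
    AlgEquiv.toLinearEquiv_apply, AlgEquiv.symm_apply_eq, Module.Basis.smulTower_apply,
    Polynomial.basisPowMulXPow_apply]
  simp only [exponentEquiv, Equiv.coe_fn_mk, coe_basisMonomials,
    monomial_eq_X_zero_pow_mul_X_one_pow, e, Polynomial.smul_eq_C_mul, map_mul, map_pow, lastVarEquiv_two_X_zero,
    lastVarEquiv_two_X_one, lastVarEquiv_two_X_two]
  ring

theorem stmt_13 {K : Type*} [Field K] (n : ℕ) (hn : 1 ≤ n)
    (a b : Fin n → K)
    (F : MvPolynomial (Fin 3) K)
    (hF : F = X 2 ^ n - ∏ i : Fin n, (X 2 - MvPolynomial.C (b i) * X 0)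
        - ∏ i : Fin n, (X 2 - MvPolynomial.C (a i) * X 1)) :
    LinearIndependent K
      (fun q : {q : ℕ × ℕ × ℕ × ℕ // q.2.2.1 < n} =>
        (X 0 : MvPolynomial (Fin 3) K) ^ q.1.1 * X 1 ^ q.1.2.1 *
          X 2 ^ q.1.2.2.1 * F ^ q.1.2.2.2) ∧
    Submodule.span K
        {g : MvPolynomial (Fin 3) K | ∃ p q r d : ℕ, r < n ∧
          g = X 0 ^ p * X 1 ^ q * X 2 ^ r * F ^ d} = ⊤ := by
  have : NeZero n := ⟨by omega⟩
  set P := ∏ i : Fin n, (Polynomial.X - Polynomial.C (C (b i) * X 0 : MvPolynomial (Fin 2) K))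
  set Q := ∏ i : Fin n, (Polynomial.X - Polynomial.C (C (a i) * X 1 : MvPolynomial (Fin 2) K))
  have hF' : lastVarEquiv K 2 F = -(P + Q - Polynomial.X ^ n) := by
    simp only [hF, map_sub, map_prod, map_mul, map_pow, lastVarEquiv_two_X_zero,
      lastVarEquiv_two_X_one, lastVarEquiv_two_X_two, lastVarEquiv_C]
    simp only [← Polynomial.C_mul]
    ring
  have hP : P.Monic := Polynomial.monic_prod_X_sub_C _ _
  have hQ : Q.Monic := Polynomial.monic_prod_X_sub_C _ _
  have hPn : P.natDegree = n := by
    simp only [P, Polynomial.natDegree_finsetProd_X_sub_C_eq_card, Finset.card_fin]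
  have hQn : Q.natDegree = n := by
    simp only [Q, Polynomial.natDegree_finsetProd_X_sub_C_eq_card, Finset.card_fin]
  obtain ⟨B, hB⟩ := exists_basis_X_pow_mul_pow (F := F)
    (by rw [hF', Polynomial.natDegree_neg, Polynomial.natDegree_add_sub_X_pow hP hQ hPn hQn])
    (by rw [hF', Polynomial.leadingCoeff_neg, (Polynomial.monic_add_sub_X_pow hP hQ hPn hQn).leadingCoeff]
        exact isUnit_one.neg)
  refine ⟨hB ▸ B.linearIndependent, ?_⟩
  rw [← B.span_eq, hB]
  congr 1
  ext g
  simp [eq_comm]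
end

section
/- With I the ideal of a nearly-complete intersection, I^(m) equals the K-span of {x^a y^b z^c F^d : a, b, c, d ≥ 0, c < n, a + b ≥ m, min(a,b) + d ≥ m}. -/
/-!
Since `-F` is monic of degree `n` in `z` over `K[x, y]`, the `F`-adic expansion in `z` shows that
the products `x^p y^q z^r F^d` with `r < n` form a `K`-basis of `K[x, y, z]`. Multiplying a
generator `x^i y^j` of `(x, y)^m`, resp. `(xy)^i F^j` of `(xy, F)^m`, into a basis vector gives
again a basis vector, so each of the two ideals is spanned by a subset of this basis; and the
intersection of the spans of two subsets of a basis is the span of their intersection.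
-/

open MvPolynomial

theorem LinearIndependent.span_image_inter {ι R M : Type*} [Semiring R] [AddCommMonoid M]
    [Module R M] {v : ι → M} (hv : LinearIndependent R v) (s t : Set ι) :
    Submodule.span R (v '' (s ∩ t)) = Submodule.span R (v '' s) ⊓ Submodule.span R (v '' t) := by
  simp only [Finsupp.span_image_eq_map_linearCombination, Finsupp.supported_inter,
    Submodule.map_inf _ hv]

namespace Ideal

variable {R : Type*} [CommSemiring R]

theorem pow_mul_pow_mem_span_pair_pow (a b : R) (i j : ℕ) :
    a ^ i * b ^ j ∈ span {a, b} ^ (i + j) := by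
  rw [pow_add]
  exact mul_mem_mul (pow_mem_pow (subset_span (by simp)) i) (pow_mem_pow (subset_span (by simp)) j)

theorem span_pair_pow_le (a b : R) (m : ℕ) :
    span {a, b} ^ m ≤ span {w | ∃ i j, i + j = m ∧ w = a ^ i * b ^ j} := by
  rw [span, Submodule.span_pow]
  refine Submodule.span_mono ?_
  induction m with
  | zero => rintro w rfl; exact ⟨0, 0, rfl, by simp⟩
  | succ m ih =>
    rintro _ ⟨w, hw, c, hc, rfl⟩
    obtain ⟨i, j, rfl, rfl⟩ := ih hw
    rcases hc with rfl | rfl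
    · exact ⟨i + 1, j, by omega, by ring⟩
    · exact ⟨i, j + 1, by omega, by ring⟩

variable {K ι : Type*} [CommSemiring K] [Algebra K R] {v : ι → R}

theorem restrictScalars_span_le_of_mul_mem (hv : Submodule.span K (Set.range v) = ⊤)
    {S : Set R} {W : Submodule K R} (h : ∀ s ∈ S, ∀ i, s * v i ∈ W) :
    (span S).restrictScalars K ≤ W := by
  rw [span, ← Submodule.span_smul_of_span_eq_top hv, Submodule.span_le]
  rintro _ ⟨_, ⟨i, rfl⟩, s, hs, rfl⟩
  show v i * s ∈ W
  rw [mul_comm]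
  exact h s hs i

theorem restrictScalars_span_pair_pow_eq_span_image (hv : Submodule.span K (Set.range v) = ⊤)
    {a b : R} {m : ℕ} {s : Set ι} (hmem : ∀ t ∈ s, v t ∈ span {a, b} ^ m)
    (hmul : ∀ i j, i + j = m → ∀ t, a ^ i * b ^ j * v t ∈ v '' s) :
    (span {a, b} ^ m).restrictScalars K = Submodule.span K (v '' s) := by
  refine le_antisymm ?_ (Submodule.span_le.mpr ?_)
  · refine (Submodule.restrictScalars_mono K (span_pair_pow_le a b m)).trans
      (restrictScalars_span_le_of_mul_mem hv ?_)
    rintro _ ⟨i, j, hij, rfl⟩ t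
    exact Submodule.subset_span (hmul i j hij t)
  · rintro _ ⟨t, ht, rfl⟩
    exact hmem t ht

end Ideal

namespace Polynomial

theorem Monic.add_sub_X_pow {R : Type*} [CommRing R] [Nontrivial R] {P Q : R[X]} {n : ℕ}
    (hP : P.Monic) (hQ : Q.Monic) (hPn : P.natDegree = n) (hQn : Q.natDegree = n) :
    (P + Q - X ^ n).Monic ∧ (P + Q - X ^ n).natDegree = n := by
  have hlt : (Q - X ^ n).degree < P.degree := by
    rw [degree_eq_natDegree hP.ne_zero, hPn, ← hQn, ← degree_eq_natDegree hQ.ne_zero]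
    refine degree_sub_lt_left ?_ hQ.ne_zero ?_
    · rw [degree_X_pow, degree_eq_natDegree hQ.ne_zero, hQn]
    · rw [hQ.leadingCoeff, leadingCoeff_X_pow]
  rw [add_sub_assoc]
  exact ⟨hP.add_of_left hlt, (natDegree_add_eq_left_of_degree_lt hlt).trans hPn⟩

variable {A : Type*} [CommRing A] [IsDomain A] {G : A[X]}

noncomputable def adicSequence (hG : 0 < G.natDegree) : Sequence A where
  elems' k := X ^ (k % G.natDegree) * G ^ (k / G.natDegree)
  degree_eq' k := by
    rw [degree_mul, degree_X_pow, degree_pow, degree_eq_natDegree (ne_zero_of_natDegree_gt hG),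
      nsmul_eq_mul]
    norm_cast
    rw [Nat.mod_add_div']

noncomputable def adicBasis (hG : 0 < G.natDegree) (hu : IsUnit G.leadingCoeff) :
    Module.Basis ℕ A A[X] :=
  (adicSequence hG).basis fun k => by
    simpa [adicSequence, leadingCoeff_mul, leadingCoeff_pow] using hu.pow (k / G.natDegree)

theorem adicBasis_apply (hG : 0 < G.natDegree) (hu : IsUnit G.leadingCoeff) (k : ℕ) :
    adicBasis hG hu k = X ^ (k % G.natDegree) * G ^ (k / G.natDegree) :=
  Sequence.basis_eq_self _ _ k

end Polynomial

namespace MvPolynomial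

variable {K : Type*} [Field K]

noncomputable def basisMonomialsFinTwo : Module.Basis (ℕ × ℕ) K (MvPolynomial (Fin 2) K) :=
  (basisMonomials (Fin 2) K).reindex (Finsupp.equivFunOnFinite.trans (finTwoArrowEquiv ℕ))

theorem basisMonomialsFinTwo_apply (p q : ℕ) :
    basisMonomialsFinTwo (K := K) (p, q) = X 0 ^ p * X 1 ^ q := by
  simp [basisMonomialsFinTwo, monomial_eq, Finsupp.prod_fintype, Fin.prod_univ_two]

variable (K) in
noncomputable def polyInZ : MvPolynomial (Fin 3) K ≃ₐ[K] Polynomial (MvPolynomial (Fin 2) K) :=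
  (renameEquiv K (finRotate 3)).trans (finSuccEquiv K 2)

@[simp] theorem polyInZ_X_zero : polyInZ K (X 0) = Polynomial.C (X 0) := by
  rw [polyInZ, AlgEquiv.trans_apply, renameEquiv_apply, rename_X]
  exact finSuccEquiv_X_succ (j := 0)

@[simp] theorem polyInZ_X_one : polyInZ K (X 1) = Polynomial.C (X 1) := by
  rw [polyInZ, AlgEquiv.trans_apply, renameEquiv_apply, rename_X]
  exact finSuccEquiv_X_succ (j := 1)

@[simp] theorem polyInZ_X_two : polyInZ K (X 2) = Polynomial.X := by
  rw [polyInZ, AlgEquiv.trans_apply, renameEquiv_apply, rename_X]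
  exact finSuccEquiv_X_zero

@[simp] theorem polyInZ_C (c : K) : polyInZ K (C c) = Polynomial.C (C c) := by
  simp [polyInZ, finSuccEquiv_apply]

theorem polyInZ_natDegree_and_isUnit_leadingCoeff {n : ℕ} (a b : Fin n → K)
    {F : MvPolynomial (Fin 3) K}
    (hF : F = X 2 ^ n - ∏ i : Fin n, (X 2 - C (b i) * X 0) - ∏ i : Fin n, (X 2 - C (a i) * X 1)) :
    (polyInZ K F).natDegree = n ∧ IsUnit (polyInZ K F).leadingCoeff := by
  have hzF : polyInZ K F = -(∏ i : Fin n, (Polynomial.X - Polynomial.C (C (b i) * X 0))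
      + ∏ i : Fin n, (Polynomial.X - Polynomial.C (C (a i) * X 1)) - Polynomial.X ^ n) := by
    subst hF
    simp only [map_sub, map_pow, polyInZ_X_two, map_prod, map_mul, polyInZ_C, polyInZ_X_zero,
      polyInZ_X_one]
    ring
  obtain ⟨hmonic, hdeg⟩ := Polynomial.Monic.add_sub_X_pow (n := n)
    (Polynomial.monic_prod_X_sub_C (fun i => (C (b i) * X 0 : MvPolynomial (Fin 2) K)) .univ)
    (Polynomial.monic_prod_X_sub_C (fun i => (C (a i) * X 1 : MvPolynomial (Fin 2) K)) .univ)
    (by rw [Polynomial.natDegree_finsetProd_X_sub_C_eq_card, Finset.card_fin])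
    (by rw [Polynomial.natDegree_finsetProd_X_sub_C_eq_card, Finset.card_fin])
  rw [hzF, Polynomial.natDegree_neg, Polynomial.leadingCoeff_neg, hmonic.leadingCoeff]
  exact ⟨hdeg, isUnit_one.neg⟩

section ZAdicBasis

variable (f : MvPolynomial (Fin 3) K) {n : ℕ} (hfn : (polyInZ K f).natDegree = n) (hn : 0 < n)
  (hu : IsUnit (polyInZ K f).leadingCoeff)

/-- The index `((p, q), k)` stands for `x^p y^q z^r f^d` with `k = r + n * d`. -/
noncomputable def zAdicBasis : Module.Basis ((ℕ × ℕ) × ℕ) K (MvPolynomial (Fin 3) K) :=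
  (basisMonomialsFinTwo.smulTower (Polynomial.adicBasis (hfn ▸ hn) hu)).map
    (polyInZ K).symm.toLinearEquiv

theorem zAdicBasis_apply (p q k : ℕ) :
    zAdicBasis f hfn hn hu ((p, q), k) = X 0 ^ p * X 1 ^ q * X 2 ^ (k % n) * f ^ (k / n) := by
  subst hfn
  rw [zAdicBasis, Module.Basis.map_apply, Module.Basis.smulTower_apply,
    basisMonomialsFinTwo_apply, Polynomial.adicBasis_apply, AlgEquiv.toLinearEquiv_apply,
    AlgEquiv.symm_apply_eq]
  simp only [Polynomial.smul_eq_C_mul, map_mul, map_pow, polyInZ_X_zero, polyInZ_X_one,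
    polyInZ_X_two]
  ring

variable {f hfn hn hu}

theorem restrictScalars_span_X_pair_pow (m : ℕ) :
    (Ideal.span {X 0, X 1} ^ m).restrictScalars K =
      Submodule.span K (zAdicBasis f hfn hn hu '' {t | m ≤ t.1.1 + t.1.2}) := by
  refine Ideal.restrictScalars_span_pair_pow_eq_span_image (zAdicBasis f hfn hn hu).span_eq ?_ ?_
  · rintro ⟨⟨p, q⟩, k⟩ (hpq : m ≤ p + q)
    rw [zAdicBasis_apply, mul_assoc _ (X 2 ^ _)]
    exact Ideal.mul_mem_right _ _
      (Ideal.pow_le_pow_right hpq (Ideal.pow_mul_pow_mem_span_pair_pow _ _ p q))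
  · rintro i j rfl ⟨⟨p, q⟩, k⟩
    refine ⟨⟨⟨p + i, q + j⟩, k⟩, show i + j ≤ p + i + (q + j) by omega, ?_⟩
    simp only [zAdicBasis_apply]
    ring

theorem restrictScalars_span_X_mul_X_pair_pow (m : ℕ) :
    (Ideal.span {X 0 * X 1, f} ^ m).restrictScalars K =
      Submodule.span K (zAdicBasis f hfn hn hu '' {t | m ≤ min t.1.1 t.1.2 + t.2 / n}) := by
  refine Ideal.restrictScalars_span_pair_pow_eq_span_image (zAdicBasis f hfn hn hu).span_eq ?_ ?_
  · rintro ⟨⟨p, q⟩, k⟩ (hm : m ≤ min p q + k / n)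
    have hfac : zAdicBasis f hfn hn hu ((p, q), k) = ((X 0 * X 1) ^ min p q * f ^ (k / n)) *
        (X 0 ^ (p - min p q) * X 1 ^ (q - min p q) * X 2 ^ (k % n)) := by
      rw [zAdicBasis_apply, ← pow_sub_mul_pow (X 0) (min_le_left p q),
        ← pow_sub_mul_pow (X 1) (min_le_right p q)]
      ring
    rw [hfac]
    exact Ideal.mul_mem_right _ _
      (Ideal.pow_le_pow_right hm (Ideal.pow_mul_pow_mem_span_pair_pow _ _ _ _))
  · rintro i j rfl ⟨⟨p, q⟩, k⟩
    refine ⟨⟨⟨p + i, q + i⟩, k + n * j⟩, ?_, ?_⟩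
    · show i + j ≤ min (p + i) (q + i) + (k + n * j) / n
      rw [Nat.add_mul_div_left _ _ hn]
      exact Nat.add_le_add (le_min (Nat.le_add_left i p) (Nat.le_add_left i q))
        (Nat.le_add_left j _)
    · simp only [zAdicBasis_apply, Nat.add_mul_div_left _ _ hn, Nat.add_mul_mod_self_left]
      ring

theorem zAdicBasis_image_inter (m : ℕ) :
    zAdicBasis f hfn hn hu '' ({t | m ≤ t.1.1 + t.1.2} ∩ {t | m ≤ min t.1.1 t.1.2 + t.2 / n}) =
      {g | ∃ p q r d : ℕ, r < n ∧ p + q ≥ m ∧ min p q + d ≥ m ∧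
        g = X 0 ^ p * X 1 ^ q * X 2 ^ r * f ^ d} := by
  ext g
  constructor
  · rintro ⟨⟨⟨p, q⟩, k⟩, ⟨hpq, hd⟩, rfl⟩
    exact ⟨p, q, k % n, k / n, Nat.mod_lt k hn, hpq, hd, zAdicBasis_apply ..⟩
  · rintro ⟨p, q, r, d, hr, hpq, hd, rfl⟩
    have hdiv : (r + n * d) / n = d := by
      rw [Nat.add_mul_div_left _ _ hn, Nat.div_eq_of_lt hr, zero_add]
    refine ⟨⟨⟨p, q⟩, r + n * d⟩, ⟨hpq, show m ≤ min p q + (r + n * d) / n by rwa [hdiv]⟩, ?_⟩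
    rw [zAdicBasis_apply, hdiv, Nat.add_mul_mod_self_left, Nat.mod_eq_of_lt hr]

end ZAdicBasis

end MvPolynomial

open MvPolynomial

theorem stmt_14_general {K : Type*} [Field K] (n : ℕ) (hn : 1 ≤ n)
    (a b : Fin n → K)
    (F : MvPolynomial (Fin 3) K)
    (hF : F = X 2 ^ n - ∏ i : Fin n, (X 2 - MvPolynomial.C (b i) * X 0)
        - ∏ i : Fin n, (X 2 - MvPolynomial.C (a i) * X 1))
    (Isym : ℕ → Ideal (MvPolynomial (Fin 3) K))
    (hIsym : ∀ m, Isym m =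
      Ideal.span {X 0, X 1} ^ m ⊓ Ideal.span {X 0 * X 1, F} ^ m)
    (m : ℕ) :
    (Isym m : Set (MvPolynomial (Fin 3) K)) =
      ↑(Submodule.span K
        {g : MvPolynomial (Fin 3) K | ∃ p q r d : ℕ, r < n ∧
          p + q ≥ m ∧ min p q + d ≥ m ∧
          g = X 0 ^ p * X 1 ^ q * X 2 ^ r * F ^ d}) := by
  obtain ⟨hfn, hu⟩ := polyInZ_natDegree_and_isUnit_leadingCoeff a b hF
  rw [hIsym, ← zAdicBasis_image_inter (hfn := hfn) (hn := hn) (hu := hu),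
    (zAdicBasis F hfn hn hu).linearIndependent.span_image_inter,
    ← restrictScalars_span_X_pair_pow, ← restrictScalars_span_X_mul_X_pair_pow]
  rfl

theorem stmt_14 {K : Type*} [Field K] (n : ℕ) (hn : 1 ≤ n)
    (a b : Fin n → K) (ha : Function.Injective a) (hb : Function.Injective b)
    (ha0 : ∀ i, a i ≠ 0) (hb0 : ∀ i, b i ≠ 0)
    (F : MvPolynomial (Fin 3) K)
    (hF : F = X 2 ^ n - ∏ i : Fin n, (X 2 - MvPolynomial.C (b i) * X 0)
        - ∏ i : Fin n, (X 2 - MvPolynomial.C (a i) * X 1))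
    (Isym : ℕ → Ideal (MvPolynomial (Fin 3) K))
    (hIsym : ∀ m, Isym m =
      Ideal.span {X 0, X 1} ^ m ⊓ Ideal.span {X 0 * X 1, F} ^ m)
    (m : ℕ) (hm : 1 ≤ m) :
    (Isym m : Set (MvPolynomial (Fin 3) K)) =
      ↑(Submodule.span K
        {g : MvPolynomial (Fin 3) K | ∃ p q r d : ℕ, r < n ∧
          p + q ≥ m ∧ min p q + d ≥ m ∧
          g = X 0 ^ p * X 1 ^ q * X 2 ^ r * F ^ d}) :=
  stmt_14_general n hn a b F hF Isym hIsym m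
end

section
/- For I = (xy, xF, yF) defining a nearly-complete intersection and r ≥ 1, the ordinary power I^r equals the K-span of {x^a y^b z^c F^d : a, b, c, d ≥ 0, c < n, min(a,b)+d ≥ r, a+b+d ≥ 2r, a+b ≥ r}. -/
/-!
Modulo monomials of smaller `z`-degree and positive `x`- or `y`-degree, `z ^ n ≡ -F`, since
`∏ (z - β_i x) - z ^ n` is divisible by `x`. Reducing `z`-degrees this way shows that the `K`-span
of the monomials `x^p y^q z^s F^d` with `s < n` and the exponent inequalities for `r` is closed
under multiplication by `x`, `y`, `z`, hence an ideal. Multiplying by `xy`, `xF` or `yF` raises `r`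
by one, so this ideal contains `I ^ r`; conversely the inequalities are exactly what is needed to
split off a factor `(xy)^i (xF)^j (yF)^k` with `i + j + k = r`.
-/

open MvPolynomial
open scoped Pointwise

theorem Submodule.mul_mem_of_mem_span {R A : Type*} [CommSemiring R] [Semiring A] [Algebra R A]
    {s : Set A} {M : Submodule R A} {a x : A} (hx : x ∈ Submodule.span R s)
    (h : ∀ g ∈ s, a * g ∈ M) : a * x ∈ M :=
  (Submodule.span_le (p := M.comap (LinearMap.mulLeft R a))).2 h hx

theorem Finset.prod_sub_smul_sub_pow_mem_span {R A ι : Type*} [CommRing R] [CommRing A]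
    [Algebra R A] (t : Finset ι) (β : ι → R) (u w : A) :
    ∏ i ∈ t, (w - β i • u) - w ^ t.card ∈
      Submodule.span R {g | ∃ e f : ℕ, 1 ≤ e ∧ e + f = t.card ∧ g = u ^ e * w ^ f} := by
  classical
  induction t using Finset.induction_on with
  | empty => simp
  | @insert i t hi ih =>
    set S := Submodule.span R {g | ∃ e f : ℕ, 1 ≤ e ∧ e + f = t.card + 1 ∧ g = u ^ e * w ^ f}
    have hw : w * (∏ i ∈ t, (w - β i • u) - w ^ t.card) ∈ S :=
      Submodule.mul_mem_of_mem_span ih fun _ ⟨e, f, he, hef, hg⟩ ↦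
        Submodule.subset_span ⟨e, f + 1, he, by omega, by rw [hg]; ring⟩
    have hu : u * (∏ i ∈ t, (w - β i • u) - w ^ t.card) ∈ S :=
      Submodule.mul_mem_of_mem_span ih fun _ ⟨e, f, he, hef, hg⟩ ↦
        Submodule.subset_span ⟨e + 1, f, by omega, by omega, by rw [hg]; ring⟩
    have huw : u * w ^ t.card ∈ S := Submodule.subset_span ⟨1, t.card, le_rfl, by omega, by ring⟩
    rw [Finset.prod_insert hi, Finset.card_insert_of_notMem hi]
    convert S.sub_mem (S.sub_mem hw (S.smul_mem (β i) huw)) (S.smul_mem (β i) hu) using 1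
    simp only [Algebra.smul_def]
    ring

theorem MvPolynomial.coe_ideal_span_eq_span {σ R : Type*} [CommSemiring R]
    {s : Set (MvPolynomial σ R)} (h : ∀ i, ∀ g ∈ s, X i * g ∈ Submodule.span R s) :
    (Ideal.span s : Set (MvPolynomial σ R)) = Submodule.span R s := by
  have hmul (p : MvPolynomial σ R) : ∀ x ∈ Submodule.span R s, p * x ∈ Submodule.span R s := by
    induction p using MvPolynomial.induction_on with
    | C a => intro x hx; rw [← smul_eq_C_mul]; exact Submodule.smul_mem _ _ hx
    | add p q hp hq => intro x hx; rw [add_mul]; exact add_mem (hp x hx) (hq x hx)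
    | mul_X p i hp =>
      intro x hx; rw [mul_assoc]; exact hp _ (Submodule.mul_mem_of_mem_span hx (h i))
  refine subset_antisymm (fun x hx ↦ ?_) (Submodule.span_le_restrictScalars R _ s)
  induction hx using Submodule.span_induction with
  | mem g hg => exact Submodule.subset_span hg
  | zero => exact zero_mem _
  | add _ _ _ _ hx hy => exact add_mem hx hy
  | smul p _ _ hx => exact hmul p _ hx

namespace NearlyCompleteIntersection

variable {K : Type*} [Field K] {n : ℕ} {F : MvPolynomial (Fin 3) K}

noncomputable def mono (F : MvPolynomial (Fin 3) K) (p q s d : ℕ) : MvPolynomial (Fin 3) K :=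
  X 0 ^ p * X 1 ^ q * X 2 ^ s * F ^ d

variable (n F) in
def powGenerators (r : ℕ) : Set (MvPolynomial (Fin 3) K) :=
  {g | ∃ p q s d : ℕ, s < n ∧ min p q + d ≥ r ∧ p + q + d ≥ 2 * r ∧ p + q ≥ r ∧
    g = mono F p q s d}

section

variable {a b : Fin n → K}
    (hF : F = X 2 ^ n - ∏ i : Fin n, (X 2 - C (b i) * X 0) - ∏ i : Fin n, (X 2 - C (a i) * X 1))
include hF

theorem X_two_pow_add_mem_span :
    X 2 ^ n + F ∈ Submodule.span K {g | ∃ e f : ℕ, 1 ≤ e ∧ e + f = n ∧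
      (g = X 0 ^ e * X 2 ^ f ∨ g = X 1 ^ e * X 2 ^ f)} := by
  have hx := Finset.univ.prod_sub_smul_sub_pow_mem_span b (X 0 : MvPolynomial (Fin 3) K) (X 2)
  have hy := Finset.univ.prod_sub_smul_sub_pow_mem_span a (X 1 : MvPolynomial (Fin 3) K) (X 2)
  simp only [smul_eq_C_mul, Finset.card_univ, Fintype.card_fin] at hx hy
  convert neg_mem (add_mem (Submodule.span_mono ?_ hx) (Submodule.span_mono ?_ hy)) using 1
  · rw [hF]; ring
  · rintro g ⟨e, f, he, hef, rfl⟩; exact ⟨e, f, he, hef, .inl rfl⟩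
  · rintro g ⟨e, f, he, hef, rfl⟩; exact ⟨e, f, he, hef, .inr rfl⟩

theorem mono_mem_span (hn : 1 ≤ n) {r : ℕ} (c : ℕ) {p q d : ℕ} (h₁ : r ≤ min p q + d)
    (h₂ : 2 * r ≤ p + q + d) (h₃ : r ≤ p + q) :
    mono F p q c d ∈ Submodule.span K (powGenerators n F r) := by
  induction c using Nat.strong_induction_on generalizing p q d with
  | _ c ih =>
  by_cases hc : c < n
  · exact Submodule.subset_span ⟨p, q, c, d, hc, h₁, h₂, h₃, rfl⟩
  obtain ⟨c, rfl⟩ := Nat.exists_eq_add_of_le' (not_lt.1 hc)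
  have hmul : mono F p q c d * (X 2 ^ n + F) ∈ Submodule.span K (powGenerators n F r) := by
    refine Submodule.mul_mem_of_mem_span (X_two_pow_add_mem_span hF) ?_
    rintro g ⟨e, f, he, hef, rfl | rfl⟩
    · rw [show mono F p q c d * (X 0 ^ e * X 2 ^ f) = mono F (p + e) q (c + f) d by
        simp only [mono, pow_add]; ring]
      exact ih (c + f) (by omega) (by omega) (by omega) (by omega)
    · rw [show mono F p q c d * (X 1 ^ e * X 2 ^ f) = mono F p (q + e) (c + f) d by
        simp only [mono, pow_add]; ring]
      exact ih (c + f) (by omega) (by omega) (by omega) (by omega)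
  rw [show mono F p q (c + n) d = mono F p q c d * (X 2 ^ n + F) - mono F p q c (d + 1) by
    simp only [mono, pow_add, pow_succ]; ring]
  exact sub_mem hmul (ih c (by omega) (by omega) (by omega) h₃)

theorem coe_ideal_span_powGenerators (hn : 1 ≤ n) (r : ℕ) :
    (Ideal.span (powGenerators n F r) : Set (MvPolynomial (Fin 3) K)) =
      Submodule.span K (powGenerators n F r) := by
  refine coe_ideal_span_eq_span fun i g ⟨p, q, s, d, _, h₁, h₂, h₃, hg⟩ ↦ ?_
  subst hg
  match i with
  | 0 =>
    rw [show X 0 * mono F p q s d = mono F (p + 1) q s d by simp only [mono]; ring]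
    exact mono_mem_span hF hn s (by omega) (by omega) (by omega)
  | 1 =>
    rw [show X 1 * mono F p q s d = mono F p (q + 1) s d by simp only [mono]; ring]
    exact mono_mem_span hF hn s (by omega) (by omega) (by omega)
  | 2 =>
    rw [show X 2 * mono F p q s d = mono F p q (s + 1) d by simp only [mono]; ring]
    exact mono_mem_span hF hn (s + 1) h₁ h₂ h₃

end

-- `min r d` of the factors carry `F`, and as many of those as `p` allows are `xF`
theorem exists_split_of_le_min_add {r p q d : ℕ} (h₁ : r ≤ min p q + d)
    (h₂ : 2 * r ≤ p + q + d) (h₃ : r ≤ p + q) :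
    ∃ i j k, i + j + k = r ∧ i + j ≤ p ∧ i + k ≤ q ∧ j + k ≤ d :=
  ⟨r - min r d, min (p - (r - min r d)) (min r d), min r d - min (p - (r - min r d)) (min r d),
    by omega, by omega, by omega, by omega⟩

theorem ideal_span_powGenerators_le_pow (r : ℕ) :
    Ideal.span (powGenerators n F r) ≤ Ideal.span {X 0 * X 1, X 0 * F, X 1 * F} ^ r := by
  set I := Ideal.span {X 0 * X 1, X 0 * F, X 1 * F}
  refine Ideal.span_le.2 fun g ⟨p, q, s, d, _, h₁, h₂, h₃, hg⟩ ↦ ?_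
  obtain ⟨i, j, k, rfl, hp, hq, hd⟩ := exists_split_of_le_min_add h₁ h₂ h₃
  obtain ⟨p, rfl⟩ := Nat.exists_eq_add_of_le' hp
  obtain ⟨q, rfl⟩ := Nat.exists_eq_add_of_le' hq
  obtain ⟨d, rfl⟩ := Nat.exists_eq_add_of_le' hd
  have hmem : (X 0 * X 1) ^ i * (X 0 * F) ^ j * (X 1 * F) ^ k ∈ I ^ (i + j + k) := by
    rw [pow_add, pow_add]
    exact Ideal.mul_mem_mul (Ideal.mul_mem_mul (Ideal.pow_mem_pow (Ideal.subset_span (by simp)) i)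
      (Ideal.pow_mem_pow (Ideal.subset_span (by simp)) j))
      (Ideal.pow_mem_pow (Ideal.subset_span (by simp)) k)
  rw [hg, show mono F (p + (i + j)) (q + (i + k)) s (d + (j + k)) =
    mono F p q s d * ((X 0 * X 1) ^ i * (X 0 * F) ^ j * (X 1 * F) ^ k) by
      simp only [mono, pow_add, mul_pow]; ring]
  exact Ideal.mul_mem_left _ _ hmem

theorem pow_le_ideal_span_powGenerators (hn : 1 ≤ n) (r : ℕ) :
    Ideal.span {X 0 * X 1, X 0 * F, X 1 * F} ^ r ≤ Ideal.span (powGenerators n F r) := by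
  induction r with
  | zero =>
    rw [pow_zero, Ideal.one_eq_top, top_le_iff, Ideal.eq_top_iff_one]
    exact Ideal.subset_span ⟨0, 0, 0, 0, hn, by simp [mono]⟩
  | succ r ih =>
    calc _ ≤ Ideal.span (powGenerators n F r) * Ideal.span {X 0 * X 1, X 0 * F, X 1 * F} :=
          pow_succ (Ideal.span {X 0 * X 1, X 0 * F, X 1 * F}) r ▸ Ideal.mul_mono_left ih
      _ = Ideal.span (powGenerators n F r * {X 0 * X 1, X 0 * F, X 1 * F}) :=
          Ideal.span_mul_span' _ _
      _ ≤ _ := by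
        refine Ideal.span_mono ?_
        rintro _ ⟨_, ⟨p, q, s, d, hs, h₁, h₂, h₃, rfl⟩, _, hg, rfl⟩
        simp only [Set.mem_insert_iff, Set.mem_singleton_iff] at hg
        rcases hg with rfl | rfl | rfl
        · exact ⟨p + 1, q + 1, s, d, hs, by omega, by omega, by omega, by simp only [mono]; ring⟩
        · exact ⟨p + 1, q, s, d + 1, hs, by omega, by omega, by omega, by simp only [mono]; ring⟩
        · exact ⟨p, q + 1, s, d + 1, hs, by omega, by omega, by omega, by simp only [mono]; ring⟩

end NearlyCompleteIntersection

theorem stmt_16_general {K : Type*} [Field K] (n : ℕ) (hn : 1 ≤ n)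
    (a b : Fin n → K)
    (F : MvPolynomial (Fin 3) K)
    (hF : F = X 2 ^ n - ∏ i : Fin n, (X 2 - MvPolynomial.C (b i) * X 0)
        - ∏ i : Fin n, (X 2 - MvPolynomial.C (a i) * X 1))
    (I : Ideal (MvPolynomial (Fin 3) K))
    (hI : I = Ideal.span {X 0 * X 1, X 0 * F, X 1 * F})
    (r : ℕ) :
    (↑(I ^ r) : Set (MvPolynomial (Fin 3) K)) =
      ↑(Submodule.span K
        {g : MvPolynomial (Fin 3) K | ∃ p q s d : ℕ, s < n ∧
          min p q + d ≥ r ∧ p + q + d ≥ 2 * r ∧ p + q ≥ r ∧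
          g = X 0 ^ p * X 1 ^ q * X 2 ^ s * F ^ d}) := by
  rw [hI, le_antisymm (NearlyCompleteIntersection.pow_le_ideal_span_powGenerators hn r)
    (NearlyCompleteIntersection.ideal_span_powGenerators_le_pow r)]
  exact NearlyCompleteIntersection.coe_ideal_span_powGenerators hF hn r

theorem stmt_16 {K : Type*} [Field K] (n : ℕ) (hn : 1 ≤ n)
    (a b : Fin n → K)
    (F : MvPolynomial (Fin 3) K)
    (hF : F = X 2 ^ n - ∏ i : Fin n, (X 2 - MvPolynomial.C (b i) * X 0)
        - ∏ i : Fin n, (X 2 - MvPolynomial.C (a i) * X 1))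
    (I : Ideal (MvPolynomial (Fin 3) K))
    (hI : I = Ideal.span {X 0 * X 1, X 0 * F, X 1 * F})
    (r : ℕ) (hr : 1 ≤ r) :
    (↑(I ^ r) : Set (MvPolynomial (Fin 3) K)) =
      ↑(Submodule.span K
        {g : MvPolynomial (Fin 3) K | ∃ p q s d : ℕ, s < n ∧
          min p q + d ≥ r ∧ p + q + d ≥ 2 * r ∧ p + q ≥ r ∧
          g = X 0 ^ p * X 1 ^ q * X 2 ^ s * F ^ d}) :=
  stmt_16_general n hn a b F hF I hI r
end

section
/- For the ideal I of a nearly-complete intersection of 2n+1 points, I^(m) ⊆ I^r if and only if 4r ≤ 3m + 1; consequently the resurgence ρ(I) = sup{m/r : I^(m) ⊄ I^r} equals 4/3. -/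
/-!
Write `u = xy`, `v = -F` and `𝔪 = (x, y)`, so that `v ≡ zⁿ mod 𝔪` and `I = (u, xv, yv)`.

Containment: an element of `𝔪ᵐ ∩ (u, v)ᵐ` can be written `∑ cₖ uᵏ vᵐ⁻ᵏ` with `cₖ ∈ 𝔪ᵐ⁻²ᵏ`.
The `𝔪`-adic order of the coefficients is raised one step at a time: the lowest-order parts `hₖ`
satisfy `∑ hₖ uᵏ zⁿ⁽ᵐ⁻ᵏ⁾ = 0`, so, `u, zⁿ` being a regular sequence, they form a Koszul syzygy,
and subtracting the corresponding syzygy of `(u, v)` removes them. Once `4r ≤ 3m + 1`, each term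
`cₖ uᵏ vᵐ⁻ᵏ` lies in `Iʳ`, by grouping its factors into copies of `u` and of `(x or y) · v`.

Non-containment: the monomial valuation with weights `(n, n, 1)` is at least `2nr` on `Iʳ`, while
`x^⌈m/2⌉ y^⌊m/2⌋ v^⌈m/2⌉ ∈ 𝔪ᵐ ∩ (u, v)ᵐ` contains the monomial `x^⌈m/2⌉ y^⌊m/2⌋ z^(n⌈m/2⌉)`,
of valuation `n (m + ⌈m/2⌉)`.
-/

open MvPolynomial

namespace MvPolynomial

section WeightIdeal

variable {σ R : Type*} [CommSemiring R] (w : σ → ℕ)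

noncomputable def weightIdeal (s : ℕ) : Ideal (MvPolynomial σ R) :=
  restrictSupportIdeal R {d | s ≤ Finsupp.weight w d} fun d e hde (hd : s ≤ _) => by
    obtain ⟨c, rfl⟩ := exists_add_of_le hde
    exact hd.trans (by simp)

variable {w}

theorem mem_weightIdeal {s : ℕ} {f : MvPolynomial σ R} :
    f ∈ weightIdeal w s ↔ ∀ d ∈ f.support, s ≤ Finsupp.weight w d :=
  Iff.rfl

theorem coeff_eq_zero_of_mem_weightIdeal {s : ℕ} {f : MvPolynomial σ R} (hf : f ∈ weightIdeal w s)
    {d : σ →₀ ℕ} (hd : Finsupp.weight w d < s) : coeff d f = 0 :=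
  notMem_support_iff.1 fun h => (hd.trans_le (mem_weightIdeal.1 hf d h)).false

@[simp]
theorem weightIdeal_zero : (weightIdeal w 0 : Ideal (MvPolynomial σ R)) = ⊤ :=
  eq_top_iff.2 fun _ _ _ _ => Nat.zero_le _

theorem weightIdeal_anti : Antitone (weightIdeal w : ℕ → Ideal (MvPolynomial σ R)) :=
  fun _ _ hst _ hf d hd => hst.trans (mem_weightIdeal.1 hf d hd)

theorem mul_mem_weightIdeal {s t : ℕ} {f g : MvPolynomial σ R} (hf : f ∈ weightIdeal w s)
    (hg : g ∈ weightIdeal w t) : f * g ∈ weightIdeal w (s + t) := by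
  classical
  refine mem_weightIdeal.2 fun d hd => ?_
  obtain ⟨a, ha, b, hb, rfl⟩ := Finset.mem_add.1 (support_mul f g hd)
  rw [map_add]
  exact add_le_add (mem_weightIdeal.1 hf a ha) (mem_weightIdeal.1 hg b hb)

theorem prod_mem_weightIdeal {ι : Type*} {s : Finset ι} {f : ι → MvPolynomial σ R} {t : ι → ℕ}
    (hf : ∀ i ∈ s, f i ∈ weightIdeal w (t i)) : ∏ i ∈ s, f i ∈ weightIdeal w (∑ i ∈ s, t i) := by
  classical
  induction s using Finset.induction_on with
  | empty => simp
  | insert i s hi ih =>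
    rw [Finset.prod_insert hi, Finset.sum_insert hi]
    exact mul_mem_weightIdeal (hf i (s.mem_insert_self i))
      (ih fun j hj => hf j (Finset.mem_insert_of_mem hj))

theorem pow_mem_weightIdeal {s : ℕ} {f : MvPolynomial σ R} (hf : f ∈ weightIdeal w s) (k : ℕ) :
    f ^ k ∈ weightIdeal w (k * s) := by
  simpa using prod_mem_weightIdeal (s := Finset.range k) (t := fun _ => s) fun _ _ => hf

theorem weightIdeal_pow_le (s k : ℕ) :
    (weightIdeal w s : Ideal (MvPolynomial σ R)) ^ k ≤ weightIdeal w (k * s) := by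
  induction k with
  | zero => simp
  | succ k ih =>
    rw [pow_succ, Ideal.mul_le]
    intro f hf g hg
    simpa [add_mul] using mul_mem_weightIdeal (ih hf) hg

theorem IsWeightedHomogeneous.mem_weightIdeal {f : MvPolynomial σ R} {t : ℕ}
    (hf : IsWeightedHomogeneous w f t) {s : ℕ} (hst : s ≤ t) : f ∈ weightIdeal w s :=
  fun _ hd => hst.trans (hf (mem_support_iff.1 hd)).ge

theorem IsWeightedHomogeneous.eq_zero_of_mem_weightIdeal {f : MvPolynomial σ R} {t s : ℕ}
    (hf : IsWeightedHomogeneous w f t) (hfs : f ∈ weightIdeal w s) (hts : t < s) : f = 0 :=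
  support_eq_empty.1 <| Finset.eq_empty_of_forall_notMem fun d hd =>
    (hts.trans_le <|
      (MvPolynomial.mem_weightIdeal.1 hfs d hd).trans (hf (mem_support_iff.1 hd)).le).false

theorem X_mem_weightIdeal (i : σ) : (X i : MvPolynomial σ R) ∈ weightIdeal w (w i) :=
  (isWeightedHomogeneous_X R w i).mem_weightIdeal le_rfl

theorem monomial_mem_pow_span_X_image {S : Set σ} (hS : ∀ i ∈ S, w i = 1)
    (hSc : ∀ i ∉ S, w i = 0) {s : ℕ} {d : σ →₀ ℕ} (hd : s ≤ Finsupp.weight w d) (c : R) :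
    monomial d c ∈ Ideal.span (X '' S) ^ s := by
  induction s generalizing d with
  | zero => simp
  | succ s ih =>
    obtain ⟨i, hi, hdi⟩ : ∃ i ∈ d.support, d i • w i ≠ 0 := by
      refine Finset.exists_ne_zero_of_sum_ne_zero ?_
      have hd0 : Finsupp.weight w d ≠ 0 := by omega
      rwa [Finsupp.weight_apply] at hd0
    have hiS : i ∈ S := by_contra fun h => hdi (by simp [hSc i h])
    have hd' := Finsupp.weight_sub_single_add (w := w) (Finsupp.mem_support_iff.1 hi)
    rw [hS i hiS] at hd'
    rw [← Finsupp.sub_add_single_one_cancel (Finsupp.mem_support_iff.1 hi), monomial_add_single,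
      pow_one, pow_succ]
    exact Ideal.mul_mem_mul (ih (by omega)) (Ideal.subset_span ⟨i, hiS, rfl⟩)

theorem pow_span_X_image {S : Set σ} (hS : ∀ i ∈ S, w i = 1) (hSc : ∀ i ∉ S, w i = 0) (s : ℕ) :
    Ideal.span (X '' S) ^ s = (weightIdeal w s : Ideal (MvPolynomial σ R)) := by
  refine le_antisymm ?_ fun f hf => ?_
  · have hspan : Ideal.span (X '' S) ≤ (weightIdeal w 1 : Ideal (MvPolynomial σ R)) := by
      rw [Ideal.span_le]
      rintro _ ⟨i, hi, rfl⟩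
      exact hS i hi ▸ X_mem_weightIdeal i
    simpa using (Ideal.pow_right_mono hspan s).trans (weightIdeal_pow_le 1 s)
  · rw [← support_sum_monomial_coeff f]
    exact Ideal.sum_mem _ fun d hd =>
      monomial_mem_pow_span_X_image hS hSc (mem_weightIdeal.1 hf d hd) _

end WeightIdeal

section WeightIdealRing

variable {σ R : Type*} [CommRing R] {w : σ → ℕ}

theorem sub_weightedHomogeneousComponent_mem_weightIdeal {s : ℕ} {f : MvPolynomial σ R}
    (hf : f ∈ weightIdeal w s) :
    f - weightedHomogeneousComponent w s f ∈ weightIdeal w (s + 1) := by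
  classical
  refine mem_weightIdeal.2 fun d hd => ?_
  rw [mem_support_iff, coeff_sub, coeff_weightedHomogeneousComponent] at hd
  have hds : s ≤ Finsupp.weight w d := mem_weightIdeal.1 hf d (by aesop)
  have : Finsupp.weight w d ≠ s := by aesop
  exact Nat.succ_le_of_lt (lt_of_le_of_ne hds this.symm)

theorem mem_weightIdeal_of_X_mul {t : ℕ} {f : MvPolynomial σ R} (i : σ)
    (hf : X i * f ∈ weightIdeal w t) : f ∈ weightIdeal w (t - w i) := by
  refine mem_weightIdeal.2 fun d hd => ?_
  have := mem_weightIdeal.1 hf (Finsupp.single i 1 + d) (by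
    rwa [mem_support_iff, coeff_X_mul, ← mem_support_iff])
  simp only [map_add, Finsupp.weight_single, one_smul] at this
  omega

end WeightIdealRing

end MvPolynomial

section IdealPowers

variable {A : Type*} [CommRing A]

open scoped Pointwise in
theorem exists_sum_eq_of_mem_span_pair_pow {p q g : A} {m : ℕ}
    (hg : g ∈ Ideal.span {p, q} ^ m) :
    ∃ c : ℕ → A, g = ∑ k ∈ Finset.range (m + 1), c k * p ^ k * q ^ (m - k) := by
  have hgen : ∀ m, ∀ x ∈ ({p, q} : Set A) ^ m, ∃ k ≤ m, x = p ^ k * q ^ (m - k) := by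
    intro m
    induction m with
    | zero => simp
    | succ m ih =>
      rintro _ ⟨x, hx, y, hy, rfl⟩
      obtain ⟨k, hk, rfl⟩ := ih x hx
      rcases hy with rfl | rfl
      · exact ⟨k + 1, by omega, by rw [Nat.add_sub_add_right]; ring⟩
      · exact ⟨k, by omega, by rw [Nat.sub_add_comm hk]; ring⟩
  rw [Ideal.span, Submodule.span_pow] at hg
  induction hg using Submodule.span_induction with
  | mem x hx =>
    obtain ⟨k, hk, rfl⟩ := hgen m x hx
    exact ⟨fun j => if j = k then 1 else 0, by
      simp [Finset.mem_range, Nat.lt_succ_of_le hk]⟩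
  | zero => exact ⟨0, by simp⟩
  | add x y _ _ hx hy =>
    obtain ⟨c, rfl⟩ := hx
    obtain ⟨c', rfl⟩ := hy
    exact ⟨c + c', by simp only [Pi.add_apply, add_mul, Finset.sum_add_distrib]⟩
  | smul a x _ hx =>
    obtain ⟨c, rfl⟩ := hx
    exact ⟨a • c, by simp only [smul_eq_mul, Finset.mul_sum, Pi.smul_apply, mul_assoc]⟩

theorem sum_sub_mul_pow_mul_pow (u v : A) (L : ℕ → A) (m : ℕ) :
    ∑ k ∈ Finset.range (m + 1), (u * L (k + 1) - v * L k) * u ^ k * v ^ (m - k) =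
      L (m + 1) * u ^ (m + 1) - L 0 * v ^ (m + 1) := by
  let f : ℕ → A := fun k => L k * u ^ k * v ^ (m + 1 - k)
  rw [show L (m + 1) * u ^ (m + 1) - L 0 * v ^ (m + 1) = f (m + 1) - f 0 by simp [f],
    ← Finset.sum_range_sub]
  refine Finset.sum_congr rfl fun k hk => ?_
  rw [Finset.mem_range] at hk
  simp only [f]
  rw [show m + 1 - k = m - k + 1 by omega, Nat.add_sub_add_right]
  ring

theorem dvd_of_dvd_mul_pow {u v a : A} (huv : ∀ a, u ∣ a * v → u ∣ a) (N : ℕ)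
    (h : u ∣ a * v ^ N) : u ∣ a := by
  induction N with
  | zero => simpa using h
  | succ N ih => exact ih (huv _ (by rwa [pow_succ, ← mul_assoc] at h))

theorem exists_eq_mul_sub_mul_of_sum_eq_zero {u v : A} (hu : IsLeftRegular u)
    (huv : ∀ a, u ∣ a * v → u ∣ a) (m : ℕ) (H : ℕ → A)
    (hH : ∑ k ∈ Finset.range (m + 1), H k * u ^ k * v ^ (m - k) = 0) :
    ∃ L : ℕ → A, L 0 = 0 ∧ L (m + 1) = 0 ∧ ∀ k ≤ m, H k = u * L (k + 1) - v * L k := by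
  induction m generalizing H with
  | zero => exact ⟨0, rfl, rfl, fun k hk => by simpa [Nat.le_zero.1 hk] using hH⟩
  | succ m ih =>
    rw [Finset.sum_range_succ'] at hH
    simp only [pow_zero, mul_one, Nat.sub_zero] at hH
    have hsplit : ∑ k ∈ Finset.range (m + 1), H (k + 1) * u ^ (k + 1) * v ^ (m + 1 - (k + 1)) =
        u * ∑ k ∈ Finset.range (m + 1), H (k + 1) * u ^ k * v ^ (m - k) := by
      rw [Finset.mul_sum]
      exact Finset.sum_congr rfl fun k _ => by rw [Nat.add_sub_add_right]; ring
    obtain ⟨a, ha⟩ : u ∣ H 0 := dvd_of_dvd_mul_pow huv (m + 1)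
      ⟨-∑ k ∈ Finset.range (m + 1), H (k + 1) * u ^ k * v ^ (m - k), by
        linear_combination hH - hsplit⟩
    obtain ⟨L, hL0, hLm, hL⟩ := ih (fun k => H (k + 1) + if k = 0 then v * a else 0) <| hu <| by
      simp only [add_mul, Finset.sum_add_distrib, ite_mul, zero_mul, Finset.sum_ite_eq',
        Finset.mem_range, Nat.zero_lt_succ, if_true, pow_zero, mul_one, Nat.sub_zero, mul_zero]
      linear_combination hH - hsplit - v ^ (m + 1) * ha
    refine ⟨fun k => if k = 1 then a else L (k - 1), by simpa using hL0, by simpa using hLm, ?_⟩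
    rintro (_ | _ | k) hk
    · simpa [hL0] using ha
    · simpa [hL0, eq_sub_iff_add_eq] using hL 0 (Nat.zero_le _)
    · simpa using hL (k + 1) (by omega)

-- Of the `k` factors `u`, `r - j` are kept as factors of `I` and the other `k + j - r` are spent
-- as two factors of `𝔪` each; together with `c` these pair with `j` of the factors `v`.
theorem mul_pow_mul_pow_mem_pow {𝔪 I : Ideal A} {u v c : A} (huI : u ∈ I) (hu𝔪 : u ∈ 𝔪 ^ 2)
    (h𝔪v : 𝔪 * Ideal.span {v} ≤ I) {a k l r j : ℕ} (hc : c ∈ 𝔪 ^ a) (hjr : j ≤ r) (hjl : j ≤ l)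
    (hrk : r ≤ k + j) (hja : j ≤ a + 2 * (k + j - r)) : c * u ^ k * v ^ l ∈ I ^ r := by
  have hcu : c * u ^ (k + j - r) ∈ 𝔪 ^ j := by
    refine Ideal.pow_le_pow_right hja ?_
    rw [pow_add, pow_mul]
    exact Ideal.mul_mem_mul hc (Ideal.pow_mem_pow hu𝔪 _)
  have hcuv : c * u ^ (k + j - r) * v ^ j ∈ I ^ j := by
    refine Ideal.pow_right_mono h𝔪v j ?_
    rw [mul_pow]
    exact Ideal.mul_mem_mul hcu (Ideal.pow_mem_pow (Ideal.mem_span_singleton_self v) j)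
  have hmem := Ideal.mul_mem_mul hcuv (Ideal.pow_mem_pow huI (r - j))
  rw [← pow_add, Nat.add_sub_cancel' hjr] at hmem
  have hsplit : c * u ^ k * v ^ l = c * u ^ (k + j - r) * v ^ j * u ^ (r - j) * v ^ (l - j) := by
    have hk : k = k + j - r + (r - j) := by omega
    have hl : l = j + (l - j) := by omega
    conv_lhs => rw [hk, hl]
    ring
  rw [hsplit]
  exact Ideal.mul_mem_right _ _ hmem

theorem prod_sub_sub_pow_mem {ι : Type*} {J : Ideal A} {s : Finset ι} {e : ι → A} (t : A)
    (he : ∀ i ∈ s, e i ∈ J) : ∏ i ∈ s, (t - e i) - t ^ s.card ∈ J := by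
  rw [← Ideal.Quotient.eq, map_pow, map_prod, Finset.prod_congr rfl fun i hi => by
    rw [map_sub, Ideal.Quotient.eq_zero_iff_mem.2 (he i hi), sub_zero], Finset.prod_const]

end IdealPowers

namespace NearlyCompleteIntersection

open Finset

variable {R : Type*} [CommRing R]

local notation "R₃" => MvPolynomial (Fin 3) R

theorem span_X_zero_X_one_pow (s : ℕ) :
    Ideal.span {X 0, X 1} ^ s = (weightIdeal ![1, 1, 0] s : Ideal R₃) := by
  rw [← Set.image_pair]
  exact pow_span_X_image (by simp) (by decide) s

theorem isWeightedHomogeneous_X_zero_mul_X_one_pow (k : ℕ) :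
    IsWeightedHomogeneous ![1, 1, 0] ((X 0 * X 1) ^ k : R₃) (2 * k) := by
  convert ((isWeightedHomogeneous_X R ![1, 1, 0] 0).mul
    (isWeightedHomogeneous_X R ![1, 1, 0] 1)).pow k using 1
  simp [mul_comm]

theorem X_zero_mul_X_one_pow_mem (k : ℕ) :
    ((X 0 * X 1) ^ k : R₃) ∈ weightIdeal ![1, 1, 0] (2 * k) :=
  (isWeightedHomogeneous_X_zero_mul_X_one_pow k).mem_weightIdeal le_rfl

theorem isWeightedHomogeneous_X_two_pow (N : ℕ) :
    IsWeightedHomogeneous ![1, 1, 0] (X 2 ^ N : R₃) 0 := by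
  convert (isWeightedHomogeneous_X R ![1, 1, 0] 2).pow N using 1
  simp

theorem mem_weightIdeal_of_X_zero_mul_X_one_mul {t : ℕ} {f : R₃}
    (hf : X 0 * X 1 * f ∈ weightIdeal ![1, 1, 0] t) : f ∈ weightIdeal ![1, 1, 0] (t - 2) := by
  rw [mul_assoc] at hf
  simpa [Nat.sub_sub] using mem_weightIdeal_of_X_mul 1 (mem_weightIdeal_of_X_mul 0 hf)

theorem X_zero_mul_X_one_dvd_of_dvd_mul_X_two_pow [IsDomain R] {a : R₃} {N : ℕ}
    (h : X 0 * X 1 ∣ a * X 2 ^ N) : X 0 * X 1 ∣ a := by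
  have hX : ∀ i : Fin 3, i ≠ 2 → ∀ b : R₃, X i ∣ b * X 2 ^ N → X i ∣ b := fun i hi b hb =>
    (X_prime.dvd_or_dvd hb).resolve_right fun h2 => hi (X_dvd_X.1 (X_prime.dvd_of_dvd_pow h2))
  obtain ⟨b, rfl⟩ := hX 0 (by decide) a (dvd_of_mul_right_dvd h)
  rw [mul_assoc] at h
  exact mul_dvd_mul_left _ (hX 1 (by decide) b ((mul_dvd_mul_iff_left (X_ne_zero 0)).1 h))

theorem mem_weightIdeal_of_eq_mul_sub_mul {n m s : ℕ} {h L : ℕ → R₃} (hL0 : L 0 = 0)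
    (hL : ∀ k ≤ m, h k = X 0 * X 1 * L (k + 1) - X 2 ^ n * L k)
    (hh : ∀ k ≤ m, h k ∈ weightIdeal ![1, 1, 0] (s - 2 * k)) :
    ∀ k ≤ m + 1, L k ∈ weightIdeal ![1, 1, 0] (s - 2 * k) := by
  intro k
  induction k with
  | zero => simp [hL0]
  | succ k ih =>
    intro hk
    have hmul : X 0 * X 1 * L (k + 1) ∈ weightIdeal ![1, 1, 0] (s - 2 * k) := by
      rw [show X 0 * X 1 * L (k + 1) = h k + X 2 ^ n * L k by rw [hL k (by omega)]; ring]
      exact add_mem (hh k (by omega)) (Ideal.mul_mem_left _ _ (ih (by omega)))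
    simpa [Nat.sub_sub, mul_add] using mem_weightIdeal_of_X_zero_mul_X_one_mul hmul

section Improvement

theorem sum_homogeneous_mul_X_two_pow_eq_zero {n : ℕ} {v : R₃}
    (hv : v - X 2 ^ n ∈ weightIdeal ![1, 1, 0] 1) {s m : ℕ} {c h : ℕ → R₃}
    (hh : ∀ k, IsWeightedHomogeneous ![1, 1, 0] (h k * (X 0 * X 1) ^ k) s)
    (hch : ∀ k ≤ m, c k - h k ∈ weightIdeal ![1, 1, 0] (s + 1 - 2 * k))
    (hg : ∑ k ∈ range (m + 1), c k * (X 0 * X 1) ^ k * v ^ (m - k) ∈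
      weightIdeal ![1, 1, 0] (s + 1)) :
    ∑ k ∈ range (m + 1), h k * (X 0 * X 1) ^ k * (X 2 ^ n) ^ (m - k) = 0 := by
  refine (IsWeightedHomogeneous.sum _ _ s fun k _ => by
    simpa [← pow_mul] using (hh k).mul (isWeightedHomogeneous_X_two_pow (n * (m - k))))
    |>.eq_zero_of_mem_weightIdeal ?_ (lt_add_one s)
  rw [show ∑ k ∈ range (m + 1), h k * (X 0 * X 1) ^ k * (X 2 ^ n) ^ (m - k) =
      ∑ k ∈ range (m + 1), c k * (X 0 * X 1) ^ k * v ^ (m - k) -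
        ∑ k ∈ range (m + 1), ((c k - h k) * (X 0 * X 1) ^ k * v ^ (m - k) +
          h k * (X 0 * X 1) ^ k * (v ^ (m - k) - (X 2 ^ n) ^ (m - k))) by
    rw [← Finset.sum_sub_distrib]
    exact Finset.sum_congr rfl fun k _ => by ring]
  refine sub_mem hg (sum_mem fun k hk => add_mem ?_ ?_)
  · have hk : k ≤ m := Nat.lt_succ_iff.1 (Finset.mem_range.1 hk)
    exact Ideal.mul_mem_right _ _ (weightIdeal_anti (by omega)
      (mul_mem_weightIdeal (hch k hk) (X_zero_mul_X_one_pow_mem k)))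
  · exact mul_mem_weightIdeal ((hh k).mem_weightIdeal le_rfl)
      (Ideal.mem_of_dvd _ (sub_dvd_pow_sub_pow _ _ _) hv)

variable [IsDomain R]

theorem exists_sum_eq_of_mem_weightIdeal_succ {n : ℕ} {v : R₃}
    (hv : v - X 2 ^ n ∈ weightIdeal ![1, 1, 0] 1) {s m : ℕ} {c : ℕ → R₃}
    (hc : ∀ k ≤ m, c k ∈ weightIdeal ![1, 1, 0] (s - 2 * k))
    (hg : ∑ k ∈ range (m + 1), c k * (X 0 * X 1) ^ k * v ^ (m - k) ∈
      weightIdeal ![1, 1, 0] (s + 1)) :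
    ∃ c' : ℕ → R₃, (∀ k ≤ m, c' k ∈ weightIdeal ![1, 1, 0] (s + 1 - 2 * k)) ∧
      ∑ k ∈ range (m + 1), c' k * (X 0 * X 1) ^ k * v ^ (m - k) =
        ∑ k ∈ range (m + 1), c k * (X 0 * X 1) ^ k * v ^ (m - k) := by
  let h : ℕ → R₃ := fun k =>
    if 2 * k ≤ s then weightedHomogeneousComponent ![1, 1, 0] (s - 2 * k) (c k) else 0
  have hh : ∀ k, IsWeightedHomogeneous ![1, 1, 0] (h k) (s - 2 * k) := fun k => by
    by_cases hk : 2 * k ≤ s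
    · simpa [h, hk] using weightedHomogeneousComponent_isWeightedHomogeneous _ _
    · simpa [h, hk] using isWeightedHomogeneous_zero R ![1, 1, 0] _
  have hhu : ∀ k, IsWeightedHomogeneous ![1, 1, 0] (h k * (X 0 * X 1) ^ k) s := fun k => by
    by_cases hk : 2 * k ≤ s
    · simpa [Nat.sub_add_cancel hk] using (hh k).mul (isWeightedHomogeneous_X_zero_mul_X_one_pow k)
    · simpa [h, hk] using isWeightedHomogeneous_zero R ![1, 1, 0] _
  have hch : ∀ k ≤ m, c k - h k ∈ weightIdeal ![1, 1, 0] (s + 1 - 2 * k) := fun k hk => by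
    by_cases h2k : 2 * k ≤ s
    · simpa [h, h2k, show s + 1 - 2 * k = s - 2 * k + 1 by omega] using
        sub_weightedHomogeneousComponent_mem_weightIdeal (hc k hk)
    · simp [show s + 1 - 2 * k = 0 by omega]
  obtain ⟨L, hL0, hLm, hL⟩ := exists_eq_mul_sub_mul_of_sum_eq_zero
    (IsRegular.of_ne_zero (mul_ne_zero (X_ne_zero 0) (X_ne_zero 1))).left
    (fun _ ha => X_zero_mul_X_one_dvd_of_dvd_mul_X_two_pow ha) m h
    (sum_homogeneous_mul_X_two_pow_eq_zero hv hhu hch hg)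
  have hLmem := mem_weightIdeal_of_eq_mul_sub_mul hL0 hL fun k _ => (hh k).mem_weightIdeal le_rfl
  refine ⟨fun k => c k - (X 0 * X 1 * L (k + 1) - v * L k), fun k hk => ?_, ?_⟩
  · dsimp only
    rw [show c k - (X 0 * X 1 * L (k + 1) - v * L k) = (c k - h k) + (v - X 2 ^ n) * L k by
      rw [hL k hk]; ring]
    exact add_mem (hch k hk)
      (weightIdeal_anti (by omega) (mul_mem_weightIdeal hv (hLmem k (by omega))))
  · calc _ = ∑ k ∈ range (m + 1), c k * (X 0 * X 1) ^ k * v ^ (m - k) -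
          ∑ k ∈ range (m + 1),
            (X 0 * X 1 * L (k + 1) - v * L k) * (X 0 * X 1) ^ k * v ^ (m - k) := by
          rw [← Finset.sum_sub_distrib]
          exact Finset.sum_congr rfl fun _ _ => by ring
      _ = _ := by rw [sum_sub_mul_pow_mul_pow, hL0, hLm]; ring

theorem exists_sum_eq_of_mem_weightIdeal {n : ℕ} {v : R₃}
    (hv : v - X 2 ^ n ∈ weightIdeal ![1, 1, 0] 1) (s : ℕ) {m : ℕ} {c : ℕ → R₃}
    (hg : ∑ k ∈ range (m + 1), c k * (X 0 * X 1) ^ k * v ^ (m - k) ∈ weightIdeal ![1, 1, 0] s) :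
    ∃ c' : ℕ → R₃, (∀ k ≤ m, c' k ∈ weightIdeal ![1, 1, 0] (s - 2 * k)) ∧
      ∑ k ∈ range (m + 1), c' k * (X 0 * X 1) ^ k * v ^ (m - k) =
        ∑ k ∈ range (m + 1), c k * (X 0 * X 1) ^ k * v ^ (m - k) := by
  induction s with
  | zero => exact ⟨c, fun _ _ => by simp, rfl⟩
  | succ s ih =>
    obtain ⟨c', hc', hsum⟩ := ih (weightIdeal_anti s.le_succ hg)
    obtain ⟨c'', hc'', hsum'⟩ := exists_sum_eq_of_mem_weightIdeal_succ hv hc' (hsum ▸ hg)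
    exact ⟨c'', hc'', hsum'.trans hsum⟩

end Improvement

theorem inf_le_pow_of_four_mul_le [IsDomain R] {n : ℕ} {v : R₃}
    (hv : v - X 2 ^ n ∈ weightIdeal ![1, 1, 0] 1) {I : Ideal R₃} (huI : X 0 * X 1 ∈ I)
    (hvI : Ideal.span {X 0, X 1} * Ideal.span {v} ≤ I) {m r : ℕ} (hmr : 4 * r ≤ 3 * m + 1) :
    Ideal.span {X 0, X 1} ^ m ⊓ Ideal.span {X 0 * X 1, v} ^ m ≤ I ^ r := by
  rintro _ ⟨hg𝔪, hguv⟩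
  obtain ⟨c, rfl⟩ := exists_sum_eq_of_mem_span_pair_pow hguv
  rw [span_X_zero_X_one_pow] at hg𝔪
  obtain ⟨c', hc', hsum⟩ := exists_sum_eq_of_mem_weightIdeal hv m hg𝔪
  rw [← hsum]
  refine Ideal.sum_mem _ fun k hk => ?_
  have hk : k ≤ m := Nat.lt_succ_iff.1 (Finset.mem_range.1 hk)
  obtain ⟨j, hjr, hjl, hrk, hja⟩ :
      ∃ j, j ≤ r ∧ j ≤ m - k ∧ r ≤ k + j ∧ j ≤ m - 2 * k + 2 * (k + j - r) := by
    rcases le_or_gt (2 * k) m with h | h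
    · exact ⟨max (2 * r - m) (r - k), by omega, by omega, by omega, by omega⟩
    · exact ⟨2 * r - 2 * k, by omega, by omega, by omega, by omega⟩
  refine mul_pow_mul_pow_mem_pow huI ?_ hvI ((span_X_zero_X_one_pow _).ge (hc' k hk))
    hjr hjl hrk hja
  simpa [span_X_zero_X_one_pow] using X_zero_mul_X_one_pow_mem (R := R) 1

theorem coeff_X_zero_pow_mul_X_one_pow_mul_pow {n : ℕ} {v : R₃}
    (hv : v - X 2 ^ n ∈ weightIdeal ![1, 1, 0] 1) (a b p : ℕ) :
    coeff (Finsupp.single 0 a + Finsupp.single 1 b + Finsupp.single 2 (n * p))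
      (X 0 ^ a * X 1 ^ b * v ^ p) = 1 := by
  have hp : v ^ p - (X 2 ^ n) ^ p ∈ weightIdeal ![1, 1, 0] 1 :=
    Ideal.mem_of_dvd _ (sub_dvd_pow_sub_pow _ _ _) hv
  rw [X_pow_eq_monomial, X_pow_eq_monomial, monomial_mul, one_mul, coeff_monomial_mul, one_mul,
    ← sub_add_cancel (v ^ p) ((X 2 ^ n) ^ p), coeff_add,
    coeff_eq_zero_of_mem_weightIdeal hp (by rw [Finsupp.weight_single]; simp), zero_add,
    ← pow_mul, X_pow_eq_monomial, coeff_monomial, if_pos rfl]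

theorem four_mul_le_of_inf_le_pow [Nontrivial R] {n : ℕ} (hn : 0 < n) {v : R₃}
    (hv : v - X 2 ^ n ∈ weightIdeal ![1, 1, 0] 1) {I : Ideal R₃} (hI : I ≤ weightIdeal ![n, n, 1] (2 * n)) {m r : ℕ}
    (hle : Ideal.span {X 0, X 1} ^ m ⊓ Ideal.span {X 0 * X 1, v} ^ m ≤ I ^ r) :
    4 * r ≤ 3 * m + 1 := by
  obtain ⟨q, e, rfl, he⟩ : ∃ q e, m = 2 * q + e ∧ e ≤ 1 := ⟨m / 2, m % 2, by omega, by omega⟩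
  have hx : (X 0 : R₃) ∈ Ideal.span {X 0, X 1} := Ideal.subset_span (by simp)
  have hy : (X 1 : R₃) ∈ Ideal.span {X 0, X 1} := Ideal.subset_span (by simp)
  have hg : X 0 ^ (q + e) * X 1 ^ q * v ^ (q + e) ∈
      Ideal.span {X 0, X 1} ^ (2 * q + e) ⊓ Ideal.span {X 0 * X 1, v} ^ (2 * q + e) := by
    refine ⟨Ideal.mul_mem_right _ _ ?_, ?_⟩
    · rw [show 2 * q + e = q + e + q by ring, pow_add]
      exact Ideal.mul_mem_mul (Ideal.pow_mem_pow hx _) (Ideal.pow_mem_pow hy _)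
    · rw [show X 0 ^ (q + e) * X 1 ^ q * v ^ (q + e) = X 0 ^ e * ((X 0 * X 1) ^ q * v ^ (q + e))
        by ring, show 2 * q + e = q + (q + e) by ring, pow_add]
      exact Ideal.mul_mem_left _ _ (Ideal.mul_mem_mul
        (Ideal.pow_mem_pow (Ideal.subset_span (by simp)) _)
        (Ideal.pow_mem_pow (Ideal.subset_span (by simp)) _))
  have hgw := weightIdeal_pow_le _ _ (Ideal.pow_right_mono hI r (hle hg))
  have hweight := mem_weightIdeal.1 hgw _ (mem_support_iff.2
    ((coeff_X_zero_pow_mul_X_one_pow_mul_pow hv (q + e) q (q + e)).symm ▸ one_ne_zero))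
  simp only [map_add, Finsupp.weight_single, smul_eq_mul] at hweight
  simp at hweight
  have : n * (2 * r) ≤ n * (3 * q + 2 * e) := by nlinarith
  have := Nat.le_of_mul_le_mul_left this hn
  omega

theorem neg_sub_X_two_pow_mem_of_eq {n : ℕ} (a b : Fin n → R) {F : R₃}
    (hF : F = X 2 ^ n - ∏ i : Fin n, (X 2 - C (b i) * X 0) - ∏ i : Fin n, (X 2 - C (a i) * X 1)) :
    -F - X 2 ^ n ∈ weightIdeal ![1, 1, 0] 1 := by
  have hprod : ∀ j : Fin 3, (X j : R₃) ∈ weightIdeal ![1, 1, 0] 1 → ∀ c : Fin n → R,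
      ∏ i : Fin n, (X 2 - C (c i) * X j) - X 2 ^ n ∈ weightIdeal ![1, 1, 0] 1 := fun j hj c => by
    simpa using prod_sub_sub_pow_mem (J := weightIdeal ![1, 1, 0] 1) (s := univ) (X 2)
      fun i _ => Ideal.mul_mem_left _ (C (c i)) hj
  rw [show -F - X 2 ^ n = (∏ i : Fin n, (X 2 - C (b i) * X 0) - X 2 ^ n) +
      (∏ i : Fin n, (X 2 - C (a i) * X 1) - X 2 ^ n) by rw [hF]; ring]
  exact add_mem (hprod 0 (X_mem_weightIdeal 0) b) (hprod 1 (X_mem_weightIdeal 1) a)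

theorem mem_weightIdeal_of_eq_sub_prod {n : ℕ} (hn : 1 ≤ n) (a b : Fin n → R) {F : R₃}
    (hF : F = X 2 ^ n - ∏ i : Fin n, (X 2 - C (b i) * X 0) - ∏ i : Fin n, (X 2 - C (a i) * X 1)) :
    F ∈ weightIdeal ![n, n, 1] n := by
  have hz : (X 2 : R₃) ∈ weightIdeal ![n, n, 1] 1 := X_mem_weightIdeal 2
  have hprod : ∀ j : Fin 3, (X j : R₃) ∈ weightIdeal ![n, n, 1] n → ∀ c : Fin n → R,
      ∏ i : Fin n, (X 2 - C (c i) * X j) ∈ weightIdeal ![n, n, 1] n := fun j hj c => by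
    simpa using prod_mem_weightIdeal (s := univ) (t := fun _ => 1) fun i _ =>
      sub_mem hz (Ideal.mul_mem_left _ (C (c i)) (weightIdeal_anti hn hj))
  rw [hF]
  exact sub_mem (sub_mem (by simpa using pow_mem_weightIdeal hz n)
    (hprod 0 (X_mem_weightIdeal 0) b)) (hprod 1 (X_mem_weightIdeal 1) a)

end NearlyCompleteIntersection

theorem sSup_div_setOf_three_mul_add_one_lt_four_mul :
    sSup {x : ℝ | ∃ m r : ℕ, 0 < m ∧ 0 < r ∧ 3 * m + 1 < 4 * r ∧ x = m / r} = 4 / 3 := by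
  refine csSup_eq_of_forall_le_of_forall_lt_exists_gt ⟨_, 2, 2, by norm_num, by norm_num,
    by norm_num, rfl⟩ ?_ fun y hy => ?_
  · rintro _ ⟨m, r, -, hr, hmr, rfl⟩
    rw [div_le_div_iff₀ (by exact_mod_cast hr) (by norm_num)]
    exact_mod_cast (by omega : m * 3 ≤ 4 * r)
  · obtain ⟨t, ht⟩ := exists_nat_gt ((2 * y - 2) / (4 - 3 * y))
    refine ⟨((4 * t + 2 : ℕ) : ℝ) / (3 * t + 2 : ℕ), ⟨4 * t + 2, 3 * t + 2, by omega, by omega,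
      by omega, rfl⟩, ?_⟩
    rw [lt_div_iff₀ (by positivity)]
    rw [div_lt_iff₀ (by linarith)] at ht
    push_cast
    nlinarith

open NearlyCompleteIntersection in
theorem stmt_17_general {K : Type*} [Field K] (n : ℕ) (hn : 1 ≤ n)
    (a b : Fin n → K)
    (F : MvPolynomial (Fin 3) K)
    (hF : F = X 2 ^ n - ∏ i : Fin n, (X 2 - MvPolynomial.C (b i) * X 0)
        - ∏ i : Fin n, (X 2 - MvPolynomial.C (a i) * X 1))
    (I : Ideal (MvPolynomial (Fin 3) K))
    (hI : I = Ideal.span {X 0 * X 1, X 0 * F, X 1 * F})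
    (Isym : ℕ → Ideal (MvPolynomial (Fin 3) K))
    (hIsym : ∀ m, Isym m =
      Ideal.span {X 0, X 1} ^ m ⊓ Ideal.span {X 0 * X 1, F} ^ m) :
    (∀ m r : ℕ, 1 ≤ m → 1 ≤ r → (Isym m ≤ I ^ r ↔ 4 * r ≤ 3 * m + 1)) ∧
      sSup {x : ℝ | ∃ m r : ℕ, 0 < m ∧ 0 < r ∧ ¬ Isym m ≤ I ^ r ∧
          x = (m : ℝ) / r} = 4 / 3 := by
  have hFw := mem_weightIdeal_of_eq_sub_prod hn a b hF
  have hIw : I ≤ weightIdeal ![n, n, 1] (2 * n) := by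
    rw [hI, Ideal.span_le, two_mul]
    rintro _ (rfl | rfl | rfl)
    exacts [mul_mem_weightIdeal (X_mem_weightIdeal 0) (X_mem_weightIdeal 1),
      mul_mem_weightIdeal (X_mem_weightIdeal 0) hFw, mul_mem_weightIdeal (X_mem_weightIdeal 1) hFw]
  have hvI : Ideal.span {X 0, X 1} * Ideal.span {-F} ≤ I := by
    rw [Ideal.span_mul_span', hI, Ideal.span_le]
    rintro _ ⟨_, hx, _, rfl, rfl⟩
    rcases hx with rfl | rfl <;>
      simpa only [mul_neg, SetLike.mem_coe] using neg_mem (Ideal.subset_span (by simp))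
  have key : ∀ m r : ℕ, Isym m ≤ I ^ r ↔ 4 * r ≤ 3 * m + 1 := fun m r => by
    rw [hIsym, show Ideal.span {X 0 * X 1, F} = Ideal.span {X 0 * X 1, -F} by
      rw [Ideal.span_insert, Ideal.span_insert, Ideal.span_singleton_neg]]
    exact ⟨four_mul_le_of_inf_le_pow hn (neg_sub_X_two_pow_mem_of_eq a b hF) hIw,
      inf_le_pow_of_four_mul_le (neg_sub_X_two_pow_mem_of_eq a b hF)
        (hI ▸ Ideal.subset_span (by simp)) hvI⟩
  refine ⟨fun m r _ _ => key m r, ?_⟩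
  simp only [key, not_le]
  exact sSup_div_setOf_three_mul_add_one_lt_four_mul

theorem stmt_17 {K : Type*} [Field K] (n : ℕ) (hn : 1 ≤ n)
    (a b : Fin n → K) (ha : Function.Injective a) (hb : Function.Injective b)
    (ha0 : ∀ i, a i ≠ 0) (hb0 : ∀ i, b i ≠ 0)
    (F : MvPolynomial (Fin 3) K)
    (hF : F = X 2 ^ n - ∏ i : Fin n, (X 2 - MvPolynomial.C (b i) * X 0)
        - ∏ i : Fin n, (X 2 - MvPolynomial.C (a i) * X 1))
    (I : Ideal (MvPolynomial (Fin 3) K))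
    (hI : I = Ideal.span {X 0 * X 1, X 0 * F, X 1 * F})
    (Isym : ℕ → Ideal (MvPolynomial (Fin 3) K))
    (hIsym : ∀ m, Isym m =
      Ideal.span {X 0, X 1} ^ m ⊓ Ideal.span {X 0 * X 1, F} ^ m) :
    (∀ m r : ℕ, 1 ≤ m → 1 ≤ r → (Isym m ≤ I ^ r ↔ 4 * r ≤ 3 * m + 1)) ∧
      sSup {x : ℝ | ∃ m r : ℕ, 0 < m ∧ 0 < r ∧ ¬ Isym m ≤ I ^ r ∧
          x = (m : ℝ) / r} = 4 / 3 :=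
  stmt_17_general n hn a b F hF I hI Isym hIsym
end
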